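/- arXiv:2308.01121 — 6 statements merged into one kernel-verified Lean document; each statement's English description precedes it below -/
import Mathlib

section
/- Let χ* := γ⁻¹(N_{γ♯μ}⁻¹(N_ρ(−Γ))), where ρ denotes the law of −Γ. Then χ* is a measurable map from Ω to 𝒮 whose law under ℙ is μ (i.e. χ* ∈ T(μ)), and it attains the infimum defining V_OT(μ): E[Γ(ξ + γ(χ*))] = inf_{χ ∈ T(μ)} E[Γ(ξ + γ(χ))]. -/
open MeasureTheory Set Filter Function
open scoped Topology ENNReal

/-- The cumulative distribution function of a measure on `ℝ`. -/
noncomputable def mcdf (ρ : Measure ℝ) (x : ℝ) : ℝ := (ρ (Set.Iic x)).toReal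

/-- The generalized inverse (quantile function) of the cdf of a measure on `ℝ`. -/
noncomputable def mquantile (ρ : Measure ℝ) (u : ℝ) : ℝ := sInf {x : ℝ | u ≤ mcdf ρ x}

lemma mcdf_eq_cdf (ρ : Measure ℝ) [IsProbabilityMeasure ρ] :
    mcdf ρ = ProbabilityTheory.cdf ρ :=
  funext fun x => (ProbabilityTheory.cdf_eq_real ρ x).symm

lemma mcdf_mono (ρ : Measure ℝ) [IsProbabilityMeasure ρ] : Monotone (mcdf ρ) := by
  rw [mcdf_eq_cdf]; exact ProbabilityTheory.monotone_cdf ρ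

lemma mcdf_nonneg (ρ : Measure ℝ) (x : ℝ) : 0 ≤ mcdf ρ x := ENNReal.toReal_nonneg

lemma mcdf_le_one (ρ : Measure ℝ) [IsProbabilityMeasure ρ] (x : ℝ) : mcdf ρ x ≤ 1 := by
  rw [mcdf_eq_cdf]; exact ProbabilityTheory.cdf_le_one ρ x

lemma ofReal_mcdf (ρ : Measure ℝ) [IsProbabilityMeasure ρ] (x : ℝ) :
    ENNReal.ofReal (mcdf ρ x) = ρ (Set.Iic x) := by
  rw [mcdf_eq_cdf]; exact ProbabilityTheory.ofReal_cdf ρ x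

lemma mcdf_continuous (ρ : Measure ℝ) [IsProbabilityMeasure ρ] (hatom : ∀ x : ℝ, ρ {x} = 0) :
    Continuous (mcdf ρ) := by
  rw [mcdf_eq_cdf]
  set f := ProbabilityTheory.cdf ρ
  rw [continuous_iff_continuousAt]
  intro x
  rw [f.mono.continuousAt_iff_leftLim_eq_rightLim, f.rightLim_eq]
  have h1 : f.measure {x} = 0 := by rw [ProbabilityTheory.measure_cdf]; exact hatom x
  rw [StieltjesFunction.measure_singleton] at h1
  have h2 : leftLim f x ≤ f x := f.mono.leftLim_le le_rfl
  have h3 : f x - leftLim f x ≤ 0 := by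
    by_contra h
    exact absurd h1 (by simp [ENNReal.ofReal_eq_zero, not_le.mpr (lt_of_not_ge h)])
  linarith [h3, sub_nonneg.mpr h2]

lemma mcdf_tendsto_atBot (ρ : Measure ℝ) [IsProbabilityMeasure ρ] :
    Tendsto (mcdf ρ) atBot (𝓝 0) := by
  rw [mcdf_eq_cdf]; exact ProbabilityTheory.tendsto_cdf_atBot ρ

lemma mcdf_tendsto_atTop (ρ : Measure ℝ) [IsProbabilityMeasure ρ] :
    Tendsto (mcdf ρ) atTop (𝓝 1) := by
  rw [mcdf_eq_cdf]; exact ProbabilityTheory.tendsto_cdf_atTop ρ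

/-- For the sup of a nonempty bounded sublevel set of a continuous monotone cdf. -/
lemma level_set_aux (ρ : Measure ℝ) [IsProbabilityMeasure ρ] (hcont : Continuous (mcdf ρ))
    {u : ℝ} (hne : {x : ℝ | mcdf ρ x ≤ u}.Nonempty) (hbdd : BddAbove {x : ℝ | mcdf ρ x ≤ u}) :
    mcdf ρ (sSup {x : ℝ | mcdf ρ x ≤ u}) ≤ u ∧
      Set.Iio (sSup {x : ℝ | mcdf ρ x ≤ u}) ⊆ {x : ℝ | mcdf ρ x ≤ u} ∧
      {x : ℝ | mcdf ρ x ≤ u} ⊆ Set.Iic (sSup {x : ℝ | mcdf ρ x ≤ u}) := by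
  set s := {x : ℝ | mcdf ρ x ≤ u} with hs
  set a := sSup s with ha
  have hsub1 : Set.Iio a ⊆ s := by
    intro x hx
    obtain ⟨y, hy, hxy⟩ := exists_lt_of_lt_csSup hne hx
    exact le_trans (mcdf_mono ρ hxy.le) hy
  have hsub2 : s ⊆ Set.Iic a := fun x hx => le_csSup hbdd hx
  refine ⟨?_, hsub1, hsub2⟩
  have htd : Tendsto (mcdf ρ) (𝓝[<] a) (𝓝 (mcdf ρ a)) :=
    (hcont.continuousAt (x := a)).continuousWithinAt.tendsto
  refine le_of_tendsto htd ?_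
  filter_upwards [eventually_mem_nhdsWithin] with x hx
  exact hsub1 hx

lemma level_set_eq (ρ : Measure ℝ) [IsProbabilityMeasure ρ] (hcont : Continuous (mcdf ρ))
    {u : ℝ} (hu0 : 0 < u) (hu1 : u < 1) :
    ∃ a : ℝ, mcdf ρ a = u ∧ Set.Iio a ⊆ {x : ℝ | mcdf ρ x ≤ u} ∧
      {x : ℝ | mcdf ρ x ≤ u} ⊆ Set.Iic a := by
  set s := {x : ℝ | mcdf ρ x ≤ u} with hs
  have hne : s.Nonempty := by
    have := (mcdf_tendsto_atBot ρ).eventually_lt_const hu0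
    obtain ⟨x, hx⟩ := this.exists
    exact ⟨x, hx.le⟩
  have hbdd : BddAbove s := by
    by_contra hb
    have hall : ∀ x : ℝ, ∃ y ∈ s, x ≤ y := by
      intro x
      rcases not_bddAbove_iff.1 hb x with ⟨y, hy, hxy⟩
      exact ⟨y, hy, hxy.le⟩
    have : ∀ x : ℝ, mcdf ρ x ≤ u := by
      intro x
      obtain ⟨y, hy, hxy⟩ := hall x
      exact le_trans (mcdf_mono ρ hxy) hy
    have h1 : (1 : ℝ) ≤ u :=
      le_of_tendsto (mcdf_tendsto_atTop ρ) (Eventually.of_forall this)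
    linarith
  obtain ⟨h1, h2, h3⟩ := level_set_aux ρ hcont hne hbdd
  refine ⟨sSup s, le_antisymm h1 ?_, h2, h3⟩
  by_contra h
  push_neg at h
  have : ∀ᶠ x in 𝓝[>] (sSup s), mcdf ρ x < u :=
    ((hcont.continuousAt (x := sSup s)).continuousWithinAt.tendsto).eventually_lt_const h
  obtain ⟨x, hx, hxs⟩ := (this.and eventually_mem_nhdsWithin).exists
  exact absurd (le_csSup hbdd (show x ∈ s from hx.le)) (not_le.mpr hxs)

lemma unif_meas {Ω : Type*} [MeasurableSpace Ω] (ℙ : Measure Ω) [IsProbabilityMeasure ℙ]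
    (X : Ω → ℝ) (hX : Measurable X) (hatom : ∀ x : ℝ, ℙ.map X {x} = 0)
    {u : ℝ} (hu0 : 0 ≤ u) (hu1 : u ≤ 1) :
    ℙ {ω | mcdf (ℙ.map X) (X ω) ≤ u} = ENNReal.ofReal u := by
  set ρ := ℙ.map X with hρ
  haveI : IsProbabilityMeasure ρ := Measure.isProbabilityMeasure_map hX.aemeasurable
  have hcont : Continuous (mcdf ρ) := mcdf_continuous ρ hatom
  rcases eq_or_lt_of_le hu1 with h1 | h1
  · have huniv : {ω | mcdf ρ (X ω) ≤ u} = Set.univ := by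
      ext ω; simp only [Set.mem_setOf_eq, Set.mem_univ, iff_true]
      rw [h1]; exact mcdf_le_one ρ (X ω)
    rw [huniv, measure_univ, h1, ENNReal.ofReal_one]
  rcases eq_or_lt_of_le hu0 with h0 | h0
  · -- u = 0 case
    subst h0
    rw [ENNReal.ofReal_zero]
    set s := {x : ℝ | mcdf ρ x ≤ (0:ℝ)} with hs
    rcases Set.eq_empty_or_nonempty s with hse | hne
    · have hemp : {ω | mcdf ρ (X ω) ≤ (0:ℝ)} = ∅ := by
        ext ω
        simp only [Set.mem_setOf_eq, Set.mem_empty_iff_false, iff_false]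
        intro hc
        exact absurd (show X ω ∈ s from hc) (by rw [hse]; exact Set.notMem_empty _)
      rw [hemp, measure_empty]
    by_cases hbdd : BddAbove s
    · obtain ⟨hle, _, hsub2⟩ := level_set_aux ρ hcont hne hbdd
      have hFa : mcdf ρ (sSup s) = 0 := le_antisymm hle (mcdf_nonneg _ _)
      refine le_antisymm ?_ (zero_le)
      calc ℙ {ω | mcdf ρ (X ω) ≤ (0:ℝ)} ≤ ℙ {ω | X ω ≤ sSup s} :=
            measure_mono (fun ω hω => hsub2 hω)
        _ = ρ (Set.Iic (sSup s)) := (Measure.map_apply hX measurableSet_Iic).symm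
        _ = ENNReal.ofReal (mcdf ρ (sSup s)) := (ofReal_mcdf ρ _).symm
        _ = 0 := by rw [hFa, ENNReal.ofReal_zero]
    · exfalso
      have hall : ∀ x : ℝ, mcdf ρ x ≤ 0 := by
        intro x
        rcases not_bddAbove_iff.1 hbdd x with ⟨y, hy, hxy⟩
        exact le_trans (mcdf_mono ρ hxy.le) hy
      have : (1 : ℝ) ≤ 0 := le_of_tendsto (mcdf_tendsto_atTop ρ) (Eventually.of_forall hall)
      linarith
  · -- 0 < u < 1
    obtain ⟨a, hFa, hsub1, hsub2⟩ := level_set_eq ρ hcont h0 h1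
    have hIic : ρ (Set.Iic a) = ENNReal.ofReal u := by rw [← ofReal_mcdf ρ a, hFa]
    have hsplit : Set.Iic a = Set.Iio a ∪ {a} := by
      ext x; simp only [Set.mem_Iic, Set.mem_union, Set.mem_Iio, Set.mem_singleton_iff]
      exact le_iff_lt_or_eq
    have hIio : ρ (Set.Iio a) = ENNReal.ofReal u := by
      refine le_antisymm (hIic ▸ measure_mono Set.Iio_subset_Iic_self) ?_
      calc ENNReal.ofReal u = ρ (Set.Iic a) := hIic.symm
        _ ≤ ρ (Set.Iio a) + ρ {a} := by rw [hsplit]; exact measure_union_le _ _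
        _ = ρ (Set.Iio a) := by rw [hatom a, add_zero]
    refine le_antisymm ?_ ?_
    · calc ℙ {ω | mcdf ρ (X ω) ≤ u} ≤ ℙ {ω | X ω ≤ a} := measure_mono (fun ω hω => hsub2 hω)
        _ = ρ (Set.Iic a) := (Measure.map_apply hX measurableSet_Iic).symm
        _ = ENNReal.ofReal u := hIic
    · calc ENNReal.ofReal u = ρ (Set.Iio a) := hIio.symm
        _ = ℙ {ω | X ω < a} := Measure.map_apply hX measurableSet_Iio
        _ ≤ ℙ {ω | mcdf ρ (X ω) ≤ u} := measure_mono (fun ω hω => hsub1 hω)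

noncomputable def qfun {N : ℕ} (μ : Measure (Fin N)) (m : ℕ) : ℝ :=
  (μ {j : Fin N | (j : ℕ) < m}).toReal

lemma qfun_zero {N : ℕ} (μ : Measure (Fin N)) : qfun μ 0 = 0 := by
  simp [qfun]

lemma qfun_top {N : ℕ} (μ : Measure (Fin N)) [IsProbabilityMeasure μ] : qfun μ N = 1 := by
  have : {j : Fin N | (j : ℕ) < N} = Set.univ := by
    ext j; simp [j.isLt]
  rw [qfun, this, measure_univ, ENNReal.toReal_one]

lemma qfun_mono {N : ℕ} (μ : Measure (Fin N)) [IsProbabilityMeasure μ] : Monotone (qfun μ) := by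
  intro m m' h
  exact ENNReal.toReal_mono (measure_ne_top μ _)
    (measure_mono (fun j hj => lt_of_lt_of_le hj h))

lemma qfun_split {N : ℕ} (μ : Measure (Fin N)) [IsProbabilityMeasure μ]
    {m : ℕ} (hm : m < N) :
    μ {j : Fin N | (j : ℕ) < m + 1} = μ {j : Fin N | (j : ℕ) < m} + μ {(⟨m, hm⟩ : Fin N)} := by
  have hsplit : {j : Fin N | (j : ℕ) < m + 1} =
      {j : Fin N | (j : ℕ) < m} ∪ {(⟨m, hm⟩ : Fin N)} := by
    ext j
    simp only [Set.mem_setOf_eq, Set.mem_union, Set.mem_singleton_iff, Nat.lt_succ_iff,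
      le_iff_lt_or_eq, Fin.ext_iff]
  rw [hsplit, measure_union _ (MeasurableSet.singleton _)]
  · intro s hs1 hs2 j hj
    have h1 := hs1 hj
    have h2 := hs2 hj
    simp only [Set.mem_setOf_eq] at h1
    simp only [Set.mem_singleton_iff] at h2
    subst h2
    exact absurd h1 (by simp)

lemma qfun_lt {N : ℕ} (μ : Measure (Fin N)) [IsProbabilityMeasure μ]
    (hμ : ∀ n : Fin N, 0 < μ {n}) {m : ℕ} (hm : m < N) : qfun μ m < qfun μ (m + 1) := by
  rw [qfun, qfun, qfun_split μ hm]
  rw [ENNReal.toReal_add (measure_ne_top μ _) (measure_ne_top μ _)]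
  have := hμ ⟨m, hm⟩
  have hpos : 0 < (μ {(⟨m, hm⟩ : Fin N)}).toReal :=
    ENNReal.toReal_pos (ne_of_gt this) (measure_ne_top μ _)
  linarith

lemma mcdf_map_eq {N : ℕ} [NeZero N] (μ : Measure (Fin N)) [IsProbabilityMeasure μ]
    (γ : Fin N → ℝ) (x : ℝ) :
    mcdf (μ.map γ) x = (μ {j : Fin N | γ j ≤ x}).toReal := by
  rw [mcdf, Measure.map_apply Measurable.of_discrete measurableSet_Iic]
  rfl

lemma quantile_discrete {N : ℕ} [NeZero N] (μ : Measure (Fin N)) [IsProbabilityMeasure μ]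
    (γ : Fin N → ℝ) (hγ : StrictMono γ) {m : ℕ} (hm : m < N) {u : ℝ}
    (h1 : qfun μ m < u) (h2 : u ≤ qfun μ (m + 1)) :
    mquantile (μ.map γ) u = γ ⟨m, hm⟩ := by
  have hmem : u ≤ mcdf (μ.map γ) (γ ⟨m, hm⟩) := by
    rw [mcdf_map_eq]
    have : {j : Fin N | γ j ≤ γ ⟨m, hm⟩} = {j : Fin N | (j : ℕ) < m + 1} := by
      ext j
      simp only [Set.mem_setOf_eq, hγ.le_iff_le, Nat.lt_succ_iff, Fin.le_def]
    rw [this]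
    exact h2
  have hlb : ∀ x ∈ {x : ℝ | u ≤ mcdf (μ.map γ) x}, γ ⟨m, hm⟩ ≤ x := by
    intro x hx
    by_contra h
    push_neg at h
    have hsub : {j : Fin N | γ j ≤ x} ⊆ {j : Fin N | (j : ℕ) < m} := by
      intro j hj
      have : γ j < γ ⟨m, hm⟩ := lt_of_le_of_lt hj h
      exact hγ.lt_iff_lt.mp this
    have : mcdf (μ.map γ) x ≤ qfun μ m := by
      rw [mcdf_map_eq]
      exact ENNReal.toReal_mono (measure_ne_top μ _) (measure_mono hsub)
    exact absurd hx (by simp only [Set.mem_setOf_eq, not_le]; linarith)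
  exact IsLeast.csInf_eq ⟨hmem, hlb⟩

lemma exists_interval {N : ℕ} [NeZero N] (μ : Measure (Fin N)) [IsProbabilityMeasure μ]
    {u : ℝ} (hu0 : 0 < u) (hu1 : u ≤ 1) :
    ∃ m : ℕ, m < N ∧ qfun μ m < u ∧ u ≤ qfun μ (m + 1) := by
  have hPN : u ≤ qfun μ N := by rw [qfun_top]; exact hu1
  classical
  have hex : ∃ m, u ≤ qfun μ m := ⟨N, hPN⟩
  have hspec : u ≤ qfun μ (Nat.find hex) := Nat.find_spec hex
  have hm0N : Nat.find hex ≤ N := Nat.find_min' hex hPN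
  have hm0pos : Nat.find hex ≠ 0 := by
    intro h
    rw [h, qfun_zero] at hspec
    linarith
  obtain ⟨m, hm⟩ := Nat.exists_eq_succ_of_ne_zero hm0pos
  rw [hm] at hspec hm0N
  refine ⟨m, by omega, ?_, hspec⟩
  have := Nat.find_min hex (m := m) (by omega)
  linarith [not_le.mp this]

lemma mquantile_nonpos {N : ℕ} [NeZero N] (μ : Measure (Fin N)) [IsProbabilityMeasure μ]
    (γ : Fin N → ℝ) {u : ℝ} (hu : u ≤ 0) : mquantile (μ.map γ) u = 0 := by
  have : {x : ℝ | u ≤ mcdf (μ.map γ) x} = Set.univ := by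
    ext x; simp only [Set.mem_setOf_eq, Set.mem_univ, iff_true]
    exact le_trans hu (mcdf_nonneg _ _)
  rw [mquantile, this]
  rw [csInf_of_not_bddBelow (by simpa using Real.not_bddBelow_univ), Real.sInf_empty]

lemma mquantile_gt_one {N : ℕ} [NeZero N] (μ : Measure (Fin N)) [IsProbabilityMeasure μ]
    (γ : Fin N → ℝ) {u : ℝ} (hu : 1 < u) : mquantile (μ.map γ) u = 0 := by
  haveI : IsProbabilityMeasure (μ.map γ) :=
    Measure.isProbabilityMeasure_map Measurable.of_discrete.aemeasurable
  have : {x : ℝ | u ≤ mcdf (μ.map γ) x} = ∅ := by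
    ext x; simp only [Set.mem_setOf_eq, Set.mem_empty_iff_false, iff_false, not_le]
    exact lt_of_le_of_lt (mcdf_le_one _ _) hu
  rw [mquantile, this, Real.sInf_empty]

lemma measurable_of_cover {α β ι : Type*} [MeasurableSpace α] [MeasurableSpace β] [Countable ι]
    (P : ι → Set α) (hP : ∀ i, MeasurableSet (P i)) (hcov : ∀ x, ∃ i, x ∈ P i)
    (f : α → β) (c : ι → β) (hf : ∀ i, ∀ x ∈ P i, f x = c i) : Measurable f := by
  intro s _
  have : f ⁻¹' s = ⋃ i ∈ {i | c i ∈ s}, P i := by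
    ext x
    simp only [Set.mem_preimage, Set.mem_iUnion, Set.mem_setOf_eq, exists_prop]
    constructor
    · intro hx
      obtain ⟨i, hi⟩ := hcov x
      exact ⟨i, by rw [← hf i x hi]; exact hx, hi⟩
    · rintro ⟨i, hci, hxi⟩
      rw [hf i x hxi]; exact hci
  rw [this]
  exact MeasurableSet.biUnion (Set.to_countable _) (fun i _ => hP i)

lemma bathtub {Ω : Type*} [MeasurableSpace Ω] (ℙ : Measure Ω) [IsProbabilityMeasure ℙ]
    (Γ : Ω → ℝ) (hΓmeas : Measurable Γ) (hΓint : Integrable Γ ℙ) (t : ℝ)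
    (B : Set Ω) (hB : MeasurableSet B) (hm : ℙ B = ℙ {ω | Γ ω < t}) :
    ∫ ω in {ω | Γ ω < t}, Γ ω ∂ℙ ≤ ∫ ω in B, Γ ω ∂ℙ := by
  set A := {ω | Γ ω < t} with hA
  have hAm : MeasurableSet A := measurableSet_lt hΓmeas measurable_const
  have hsplitA : ∫ ω in A, Γ ω ∂ℙ = ∫ ω in A ∩ B, Γ ω ∂ℙ + ∫ ω in A \ B, Γ ω ∂ℙ := by
    have hd : Disjoint (A ∩ B) (A \ B) := Set.disjoint_left.mpr (fun x hx hx2 => hx2.2 hx.2)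
    have := setIntegral_union hd (hAm.diff hB) (hΓint.integrableOn) (hΓint.integrableOn)
    rwa [Set.inter_union_diff] at this
  have hsplitB : ∫ ω in B, Γ ω ∂ℙ = ∫ ω in A ∩ B, Γ ω ∂ℙ + ∫ ω in B \ A, Γ ω ∂ℙ := by
    have hd : Disjoint (A ∩ B) (B \ A) := Set.disjoint_left.mpr (fun x hx hx2 => hx2.2 hx.1)
    have := setIntegral_union hd (hB.diff hAm) (hΓint.integrableOn) (hΓint.integrableOn)
    rw [Set.inter_comm, Set.inter_union_diff] at this
    rwa [Set.inter_comm B A] at this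
  have hmeq : (ℙ (A \ B)).toReal = (ℙ (B \ A)).toReal := by
    have h1 : ℙ (A \ B) = ℙ A - ℙ (A ∩ B) := by
      rw [← Set.diff_self_inter]
      exact measure_diff Set.inter_subset_left (hAm.inter hB).nullMeasurableSet
        (measure_ne_top ℙ _)
    have h2 : ℙ (B \ A) = ℙ B - ℙ (B ∩ A) := by
      rw [← Set.diff_self_inter]
      exact measure_diff Set.inter_subset_left (hB.inter hAm).nullMeasurableSet
        (measure_ne_top ℙ _)
    rw [h1, h2, hm, Set.inter_comm]
  have hub : ∫ ω in A \ B, Γ ω ∂ℙ ≤ t * (ℙ (A \ B)).toReal := by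
    calc ∫ ω in A \ B, Γ ω ∂ℙ ≤ ∫ _ω in A \ B, t ∂ℙ := by
          refine setIntegral_mono_on hΓint.integrableOn (integrableOn_const ?_)
            (hAm.diff hB) ?_
          · exact measure_ne_top ℙ _
          · intro ω hω
            exact le_of_lt hω.1
      _ = t * (ℙ (A \ B)).toReal := by rw [setIntegral_const, smul_eq_mul, mul_comm, measureReal_def]
  have hlb : t * (ℙ (B \ A)).toReal ≤ ∫ ω in B \ A, Γ ω ∂ℙ := by
    calc t * (ℙ (B \ A)).toReal = ∫ _ω in B \ A, t ∂ℙ := by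
          rw [setIntegral_const, smul_eq_mul, mul_comm, measureReal_def]
      _ ≤ ∫ ω in B \ A, Γ ω ∂ℙ := by
          refine setIntegral_mono_on (integrableOn_const ?_) hΓint.integrableOn
            (hB.diff hAm) ?_
          · exact measure_ne_top ℙ _
          · intro ω hω
            exact not_lt.mp hω.2
  rw [hsplitA, hsplitB]
  have := hmeq ▸ hub
  linarith
/-- the explicit map `χ* = γ⁻¹(N_{γ♯μ}⁻¹(N_ρ(−Γ)))` (with `ρ` the law of `−Γ`)
is measurable, has law `μ`, and attains the infimum defining `V_OT(μ)`. -/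
theorem stmt0
    {Ω : Type*} [MeasurableSpace Ω] (ℙ : Measure Ω) [IsProbabilityMeasure ℙ]
    (N : ℕ) (hN : 1 ≤ N) [NeZero N]
    (μ : Measure (Fin N)) [IsProbabilityMeasure μ] (hμ : ∀ n : Fin N, 0 < μ {n})
    (Γ ξ : Ω → ℝ) (hΓmeas : Measurable Γ) (hξmeas : Measurable ξ)
    (hΓ2 : MemLp Γ 2 ℙ) (hξ2 : MemLp ξ 2 ℙ)
    (hΓpos : ∀ᵐ ω ∂ℙ, 0 < Γ ω)
    (hΓatomless : ∀ x : ℝ, ℙ (Γ ⁻¹' {x}) = 0)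
    (γ : Fin N → ℝ) (hγ : StrictMono γ)
    (χstar : Ω → Fin N)
    (hχstar : ∀ ω, χstar ω =
      Function.invFun γ
        (mquantile (μ.map γ) (mcdf (ℙ.map (fun ω' => - Γ ω')) (- Γ ω)))) :
    Measurable χstar ∧ ℙ.map χstar = μ ∧
      ∫ ω, Γ ω * (ξ ω + γ (χstar ω)) ∂ℙ =
        sInf {v : ℝ | ∃ χ : Ω → Fin N, Measurable χ ∧ ℙ.map χ = μ ∧
          v = ∫ ω, Γ ω * (ξ ω + γ (χ ω)) ∂ℙ} := by
  classical
  have hNpos : 0 < N := hN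
  set X : Ω → ℝ := fun ω' => - Γ ω' with hXdef
  have hXmeas : Measurable X := hΓmeas.neg
  set ρ := ℙ.map X with hρdef
  haveI hρprob : IsProbabilityMeasure ρ := Measure.isProbabilityMeasure_map hXmeas.aemeasurable
  have hatomρ : ∀ x : ℝ, ρ {x} = 0 := by
    intro x
    rw [hρdef, Measure.map_apply hXmeas (measurableSet_singleton x)]
    have hpre : X ⁻¹' {x} = Γ ⁻¹' {-x} := by
      ext ω
      simp only [Set.mem_preimage, Set.mem_singleton_iff, hXdef]
      constructor
      · intro h; rw [← h]; ring
      · intro h; rw [h]; ring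
    rw [hpre]; exact hΓatomless _
  haveI hνprob : IsProbabilityMeasure (μ.map γ) :=
    Measure.isProbabilityMeasure_map Measurable.of_discrete.aemeasurable
  set U : Ω → ℝ := fun ω => mcdf ρ (X ω) with hUdef
  have hUmeas : Measurable U := (mcdf_mono ρ).measurable.comp hXmeas
  have hU1 : ∀ ω, U ω ≤ 1 := fun ω => mcdf_le_one ρ _
  have hχU : ∀ ω, χstar ω = Function.invFun γ (mquantile (μ.map γ) (U ω)) := fun ω => hχstar ω
  have hatomρ' : ∀ x : ℝ, (ℙ.map X) {x} = 0 := by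
    intro x; rw [← hρdef]; exact hatomρ x
  have hUle : ∀ u : ℝ, 0 ≤ u → u ≤ 1 → ℙ {ω | U ω ≤ u} = ENNReal.ofReal u := by
    intro u h0 h1
    exact unif_meas ℙ X hXmeas hatomρ' h0 h1
  have hmeas0 : ℙ {ω | U ω ≤ (0:ℝ)} = 0 := by
    rw [hUle 0 le_rfl zero_le_one, ENNReal.ofReal_zero]
  have haepos : ∀ᵐ ω ∂ℙ, 0 < U ω := by
    rw [ae_iff]
    have hsetn : {ω | ¬ 0 < U ω} = {ω | U ω ≤ 0} := by ext ω; simp [not_lt]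
    rw [hsetn]; exact hmeas0
  have hkey : ∀ ω, 0 < U ω → ∀ k : Fin N,
      (χstar ω = k ↔ (qfun μ (k : ℕ) < U ω ∧ U ω ≤ qfun μ ((k : ℕ)+1))) := by
    intro ω h0 k
    obtain ⟨m, hmN, hq1, hq2⟩ := exists_interval μ h0 (hU1 ω)
    have hχm : χstar ω = ⟨m, hmN⟩ := by
      rw [hχU ω, quantile_discrete μ γ hγ hmN hq1 hq2]
      exact Function.leftInverse_invFun hγ.injective _
    constructor
    · intro hk
      have hkm : k = ⟨m, hmN⟩ := by rw [← hk, hχm]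
      subst hkm
      exact ⟨hq1, hq2⟩
    · rintro ⟨h1', h2'⟩
      have hq : mquantile (μ.map γ) (U ω) = γ k := quantile_discrete μ γ hγ k.isLt h1' h2'
      rw [hχU ω, hq]
      exact Function.leftInverse_invFun hγ.injective k
  -- part 1 : measurability
  have part1 : Measurable χstar := by
    have hg : Measurable (fun u : ℝ => Function.invFun γ (mquantile (μ.map γ) u)) := by
      apply measurable_of_cover (ι := Option (Fin N))
        (P := fun i => Option.elim i (Set.Iic 0 ∪ Set.Ioi 1)
          (fun j => Set.Ioc (qfun μ (j:ℕ)) (qfun μ ((j:ℕ)+1))))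
        (c := fun i => Option.elim i (Function.invFun γ 0) id)
      · rintro (_|j)
        · exact measurableSet_Iic.union measurableSet_Ioi
        · exact measurableSet_Ioc
      · intro u
        rcases le_or_gt u 0 with h|h
        · exact ⟨none, Or.inl h⟩
        rcases le_or_gt u 1 with h1|h1
        · obtain ⟨m, hmN, hq1, hq2⟩ := exists_interval μ h h1
          exact ⟨some ⟨m, hmN⟩, hq1, hq2⟩
        · exact ⟨none, Or.inr h1⟩
      · rintro (_|j) u hu
        · rcases hu with hu|hu
          · simp only [Option.elim]
            rw [mquantile_nonpos μ γ hu]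
          · simp only [Option.elim]
            rw [mquantile_gt_one μ γ hu]
        · obtain ⟨hu1, hu2⟩ := hu
          simp only [Option.elim, id]
          rw [quantile_discrete μ γ hγ j.isLt hu1 hu2]
          exact Function.leftInverse_invFun hγ.injective _
    have hcomp : χstar = (fun u : ℝ => Function.invFun γ (mquantile (μ.map γ) u)) ∘ U :=
      funext hχU
    rw [hcomp]; exact hg.comp hUmeas
  -- measure of events
  have hqnn : ∀ m, 0 ≤ qfun μ m := fun m => ENNReal.toReal_nonneg
  have hqle1 : ∀ m, qfun μ m ≤ 1 := by
    intro m
    have := ENNReal.toReal_mono (a := μ {j : Fin N | (j:ℕ) < m}) (b := 1) (by simp)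
      prob_le_one
    simpa [qfun] using this
  have hEk : ∀ k : Fin N, ℙ {ω | qfun μ (k:ℕ) < U ω ∧ U ω ≤ qfun μ ((k:ℕ)+1)} = μ {k} := by
    intro k
    have hb1 := hqnn (k:ℕ)
    have hmono : qfun μ (k:ℕ) ≤ qfun μ ((k:ℕ)+1) := qfun_mono μ (Nat.le_succ _)
    have hb2 : qfun μ ((k:ℕ)+1) ≤ 1 := hqle1 _
    have hset : {ω | qfun μ (k:ℕ) < U ω ∧ U ω ≤ qfun μ ((k:ℕ)+1)}
        = {ω | U ω ≤ qfun μ ((k:ℕ)+1)} \ {ω | U ω ≤ qfun μ (k:ℕ)} := by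
      ext ω
      simp only [Set.mem_setOf_eq, Set.mem_diff, not_le]
      tauto
    have hsub : {ω | U ω ≤ qfun μ (k:ℕ)} ⊆ {ω | U ω ≤ qfun μ ((k:ℕ)+1)} :=
      fun ω hω => le_trans hω hmono
    have hdiff : ℙ ({ω | U ω ≤ qfun μ ((k:ℕ)+1)} \ {ω | U ω ≤ qfun μ (k:ℕ)})
        = ℙ {ω | U ω ≤ qfun μ ((k:ℕ)+1)} - ℙ {ω | U ω ≤ qfun μ (k:ℕ)} :=
      measure_diff hsub (hUmeas measurableSet_Iic).nullMeasurableSet (measure_ne_top ℙ _)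
    rw [hset, hdiff]
    rw [hUle _ (le_trans hb1 hmono) hb2, hUle _ hb1 (le_trans hmono hb2)]
    rw [qfun, qfun, ENNReal.ofReal_toReal (measure_ne_top μ _),
      ENNReal.ofReal_toReal (measure_ne_top μ _)]
    rw [qfun_split μ k.isLt, ENNReal.add_sub_cancel_left (measure_ne_top μ _)]
  -- part 2 : law
  have part2 : ℙ.map χstar = μ := by
    apply MeasureTheory.Measure.ext_of_singleton
    intro k
    rw [Measure.map_apply part1 (measurableSet_singleton k)]
    have haeeq : (χstar ⁻¹' {k} : Set Ω)
        =ᵐ[ℙ] {ω | qfun μ (k:ℕ) < U ω ∧ U ω ≤ qfun μ ((k:ℕ)+1)} := by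
      rw [Filter.eventuallyEq_set]
      filter_upwards [haepos] with ω h0
      simpa using hkey ω h0 k
    rw [measure_congr haeeq, hEk k]
  refine ⟨part1, part2, ?_⟩
  -- integrability
  have hΓint : Integrable Γ ℙ := hΓ2.integrable one_le_two
  have hΓξint : Integrable (fun ω => Γ ω * ξ ω) ℙ := by
    have hsmul : MemLp (Γ • ξ) 1 ℙ := hξ2.smul (r := 1) hΓ2
    rw [← memLp_one_iff_integrable]
    exact hsmul
  have hbound : ∀ (h : Ω → ℝ), Measurable h → (∃ C, ∀ ω, |h ω| ≤ C) →
      Integrable (fun ω => Γ ω * h ω) ℙ := by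
    rintro h hm ⟨C, hC⟩
    have := hΓint.bdd_mul (c := C) hm.aestronglyMeasurable (Eventually.of_forall fun ω => by simpa using hC ω)
    simpa [mul_comm] using this
  -- gsp and d
  set gsp : ℕ → ℝ := fun m => γ ⟨min m (N-1), by omega⟩ with hgspdef
  set d : ℕ → ℝ := fun i => gsp (i+1) - gsp i with hddef
  have hgsp_mono : Monotone gsp := by
    intro a b hab
    exact hγ.monotone (by simp only [Fin.mk_le_mk]; omega)
  have hd_nonneg : ∀ i, 0 ≤ d i := fun i => sub_nonneg.mpr (hgsp_mono (Nat.le_succ i))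
  have hγ_eq : ∀ k : Fin N, γ k = gsp 0
      + ∑ i ∈ Finset.range (N-1), d i * (if i < (k:ℕ) then (1:ℝ) else 0) := by
    intro k
    have hkle : (k:ℕ) ≤ N - 1 := by have := k.isLt; omega
    have h1 : ∑ i ∈ Finset.range (N-1), d i * (if i < (k:ℕ) then (1:ℝ) else 0)
        = ∑ i ∈ Finset.range (k:ℕ), d i := by
      rw [← Finset.sum_subset (Finset.range_subset_range.mpr hkle)
        (fun i _ hni => by
          rw [if_neg (by simpa using hni), mul_zero])]
      exact Finset.sum_congr rfl (fun i hi => by rw [if_pos (Finset.mem_range.mp hi), mul_one])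
    have h2 : ∑ i ∈ Finset.range (k:ℕ), d i = gsp (k:ℕ) - gsp 0 := by
      simp only [hddef]
      exact Finset.sum_range_sub gsp (k:ℕ)
    have h3 : gsp (k:ℕ) = γ k := by
      apply congrArg γ
      apply Fin.ext
      simp only []
      omega
    rw [h1, h2, h3]; ring
  -- the sets and their measurability
  have hAmeas : ∀ (χ : Ω → Fin N), Measurable χ → ∀ i : ℕ,
      MeasurableSet {ω | i < ((χ ω):ℕ)} := by
    intro χ hχm i
    exact hχm (MeasurableSet.of_discrete (s := {k : Fin N | i < (k:ℕ)}))
  -- integral formula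
  have hIform : ∀ χ : Ω → Fin N, Measurable χ →
      ∫ ω, Γ ω * (ξ ω + γ (χ ω)) ∂ℙ = ∫ ω, Γ ω * ξ ω ∂ℙ + gsp 0 * ∫ ω, Γ ω ∂ℙ
        + ∑ i ∈ Finset.range (N-1), d i * ∫ ω in {ω | i < ((χ ω):ℕ)}, Γ ω ∂ℙ := by
    intro χ hχm
    have hitem : ∀ i : ℕ, Measurable (fun ω => if i < ((χ ω):ℕ) then (1:ℝ) else 0) := by
      intro i
      exact (Measurable.of_discrete (f := fun k : Fin N => if i < (k:ℕ) then (1:ℝ) else 0)).comp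
        hχm
    have hind_int : ∀ i : ℕ,
        Integrable (fun ω => Γ ω * (if i < ((χ ω):ℕ) then (1:ℝ) else 0)) ℙ := by
      intro i
      exact hbound _ (hitem i) ⟨1, fun ω => by split <;> simp⟩
    have hpt : ∀ ω, Γ ω * (ξ ω + γ (χ ω)) = Γ ω * ξ ω + (gsp 0 * Γ ω
        + ∑ i ∈ Finset.range (N-1), d i * (Γ ω * (if i < ((χ ω):ℕ) then (1:ℝ) else 0))) := by
      intro ω
      rw [hγ_eq (χ ω), mul_add, mul_add, Finset.mul_sum]
      have : ∀ i ∈ Finset.range (N-1),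
          Γ ω * (d i * (if i < ((χ ω):ℕ) then (1:ℝ) else 0))
          = d i * (Γ ω * (if i < ((χ ω):ℕ) then (1:ℝ) else 0)) := fun i _ => by ring
      rw [Finset.sum_congr rfl this]
      ring
    have hsum_int : Integrable (fun ω => ∑ i ∈ Finset.range (N-1),
        d i * (Γ ω * (if i < ((χ ω):ℕ) then (1:ℝ) else 0))) ℙ :=
      integrable_finset_sum _ (fun i _ => (hind_int i).const_mul _)
    have hrest : Integrable (fun ω => gsp 0 * Γ ω + ∑ i ∈ Finset.range (N-1),
        d i * (Γ ω * (if i < ((χ ω):ℕ) then (1:ℝ) else 0))) ℙ :=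
      (hΓint.const_mul _).add hsum_int
    calc ∫ ω, Γ ω * (ξ ω + γ (χ ω)) ∂ℙ
        = ∫ ω, (Γ ω * ξ ω + (gsp 0 * Γ ω
            + ∑ i ∈ Finset.range (N-1), d i * (Γ ω * (if i < ((χ ω):ℕ) then (1:ℝ) else 0)))) ∂ℙ := by
          exact integral_congr_ae (Filter.Eventually.of_forall hpt)
      _ = ∫ ω, Γ ω * ξ ω ∂ℙ + (gsp 0 * ∫ ω, Γ ω ∂ℙ
            + ∑ i ∈ Finset.range (N-1), d i * ∫ ω, Γ ω * (if i < ((χ ω):ℕ) then (1:ℝ) else 0) ∂ℙ) := by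
          rw [integral_add hΓξint hrest,
            integral_add (hΓint.const_mul _) hsum_int, integral_const_mul _ _,
            integral_finset_sum _ (fun i _ => (hind_int i).const_mul _)]
          simp_rw [integral_const_mul]
      _ = ∫ ω, Γ ω * ξ ω ∂ℙ + gsp 0 * ∫ ω, Γ ω ∂ℙ
            + ∑ i ∈ Finset.range (N-1), d i * ∫ ω in {ω | i < ((χ ω):ℕ)}, Γ ω ∂ℙ := by
          have hii : ∀ i : ℕ, ∫ ω, Γ ω * (if i < ((χ ω):ℕ) then (1:ℝ) else 0) ∂ℙ
              = ∫ ω in {ω | i < ((χ ω):ℕ)}, Γ ω ∂ℙ := by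
            intro i
            rw [← integral_indicator (hAmeas χ hχm i)]
            apply integral_congr_ae
            apply Filter.Eventually.of_forall
            intro ω
            by_cases h : i < ((χ ω):ℕ)
            · simp only [Set.indicator_apply, Set.mem_setOf_eq]
              simp [h]
            · simp only [Set.indicator_apply, Set.mem_setOf_eq]
              simp [h]
          simp_rw [hii]
          ring
  -- per-index comparison
  have hcomp : ∀ i ∈ Finset.range (N-1), ∀ χ : Ω → Fin N, Measurable χ → ℙ.map χ = μ →
      ∫ ω in {ω | i < ((χstar ω):ℕ)}, Γ ω ∂ℙ ≤ ∫ ω in {ω | i < ((χ ω):ℕ)}, Γ ω ∂ℙ := by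
    intro i hi χ hχm hχlaw
    have hiN : i + 1 < N := by have := Finset.mem_range.mp hi; omega
    have hu0 : 0 < qfun μ (i+1) := by
      have h01 : qfun μ 0 < qfun μ 1 := qfun_lt μ hμ (by omega)
      have hmm := qfun_mono μ (by omega : 1 ≤ i+1)
      rw [qfun_zero] at h01; linarith
    have hu1 : qfun μ (i+1) < 1 := by
      have hlt := qfun_lt μ hμ hiN
      have h2 := hqle1 (i+2)
      linarith
    obtain ⟨a, hFa, hsub1, hsub2⟩ := level_set_eq ρ (mcdf_continuous ρ hatomρ) hu0 hu1
    have hXa : ℙ {ω | X ω = a} = 0 := by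
      have heq : {ω | X ω = a} = X ⁻¹' {a} := rfl
      rw [heq, ← Measure.map_apply hXmeas (measurableSet_singleton a)]
      exact hatomρ' a
    have hXane : ∀ᵐ ω ∂ℙ, X ω ≠ a := by
      rw [ae_iff]
      have : {ω | ¬ X ω ≠ a} = {ω | X ω = a} := by ext ω; simp
      rw [this]; exact hXa
    have haeAi : ({ω | i < ((χstar ω):ℕ)} : Set Ω) =ᵐ[ℙ] {ω | Γ ω < -a} := by
      rw [Filter.eventuallyEq_set]
      filter_upwards [haepos, hXane] with ω h0 hne
      have hkk : qfun μ ((χstar ω : ℕ)) < U ω ∧ U ω ≤ qfun μ ((χstar ω:ℕ)+1) :=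
        (hkey ω h0 (χstar ω)).mp rfl
      have hXΓ : Γ ω < -a ↔ a < X ω := by
        constructor
        · intro h; show a < -Γ ω; linarith
        · intro h; have : a < -Γ ω := h; linarith
      constructor
      · intro hmem
        have hmem' : i < ((χstar ω):ℕ) := hmem
        have hUgt : qfun μ (i+1) < U ω :=
          lt_of_le_of_lt (qfun_mono μ (by omega)) hkk.1
        have hXgt : ¬ (X ω ≤ a) := by
          intro hXle
          rcases lt_or_eq_of_le hXle with hlt | heq
          · exact absurd (hsub1 hlt) (by simp only [Set.mem_setOf_eq]; exact not_le.mpr hUgt)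
          · exact hne heq
        exact hXΓ.mpr (not_le.mp hXgt)
      · intro hmem
        have hXgt : a < X ω := hXΓ.mp hmem
        have hUgt : ¬ (U ω ≤ qfun μ (i+1)) := by
          intro hle
          exact absurd (hsub2 hle) (not_le.mpr hXgt)
        by_contra hni
        have hni' : ((χstar ω):ℕ) ≤ i := not_lt.mp hni
        exact hUgt (le_trans hkk.2 (qfun_mono μ (by omega)))
    have hIeq : ∫ ω in {ω | i < ((χstar ω):ℕ)}, Γ ω ∂ℙ = ∫ ω in {ω | Γ ω < -a}, Γ ω ∂ℙ :=
      setIntegral_congr_set haeAi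
    rw [hIeq]
    apply bathtub ℙ Γ hΓmeas hΓint (-a) _ (hAmeas χ hχm i)
    have h1 : ℙ {ω | i < ((χ ω):ℕ)} = 1 - μ {j : Fin N | (j:ℕ) < i+1} := by
      have hpre : {ω | i < ((χ ω):ℕ)} = χ ⁻¹' {k : Fin N | i < (k:ℕ)} := rfl
      rw [hpre, ← Measure.map_apply hχm MeasurableSet.of_discrete, hχlaw]
      have hcompl : {k : Fin N | i < (k:ℕ)} = {j : Fin N | (j:ℕ) < i+1}ᶜ := by
        ext j; simp [Nat.lt_succ_iff, not_le]
      rw [hcompl, measure_compl MeasurableSet.of_discrete (measure_ne_top μ _), measure_univ]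
    have h2 : ℙ {ω | Γ ω < -a} = 1 - μ {j : Fin N | (j:ℕ) < i+1} := by
      have hset2 : {ω | Γ ω < -a} = X ⁻¹' (Set.Ioi a) := by
        ext ω
        simp only [Set.mem_setOf_eq, Set.mem_preimage, Set.mem_Ioi]
        constructor
        · intro h; show a < -Γ ω; linarith
        · intro h; have : a < -Γ ω := h; linarith
      rw [hset2, ← Measure.map_apply hXmeas measurableSet_Ioi, ← hρdef]
      rw [← Set.compl_Iic]
      rw [measure_compl measurableSet_Iic (measure_ne_top ρ _), measure_univ]
      rw [← ofReal_mcdf ρ a, hFa, qfun, ENNReal.ofReal_toReal (measure_ne_top μ _)]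
    rw [h1, h2]
  -- final
  have hval : ∀ χ : Ω → Fin N, Measurable χ → ℙ.map χ = μ →
      ∫ ω, Γ ω * (ξ ω + γ (χstar ω)) ∂ℙ ≤ ∫ ω, Γ ω * (ξ ω + γ (χ ω)) ∂ℙ := by
    intro χ hχm hχlaw
    rw [hIform χstar part1, hIform χ hχm]
    apply add_le_add_right
    apply Finset.sum_le_sum
    intro i hi
    exact mul_le_mul_of_nonneg_left (hcomp i hi χ hχm hχlaw) (hd_nonneg i)
  symm
  apply IsLeast.csInf_eq
  constructor
  · exact ⟨χstar, part1, part2, rfl⟩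
  · rintro v ⟨χ, hχm, hχlaw, rfl⟩
    exact hval χ hχm hχlaw
end

section
/- The map V_OT is monotone with respect to first-order stochastic dominance: for any two probability measures ν, μ on 𝒮 with ν ⪰ μ, one has V_OT(ν) ≥ V_OT(μ). -/
open MeasureTheory Set Filter Topology
open scoped ENNReal


lemma lemC (ρ : Measure ℝ) [IsFiniteMeasure ρ] (hat : ∀ x : ℝ, ρ {x} = 0)
    (c : ℝ) (hc : 0 ≤ c) :
    (ρ {t | (ρ (Set.Iic t)).toReal ≤ c}).toReal = min c (ρ Set.univ).toReal := by
  set F : ℝ → ℝ := fun t => (ρ (Set.Iic t)).toReal with hF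
  set T : ℝ := (ρ Set.univ).toReal with hT
  have hfin : ∀ s : Set ℝ, ρ s ≠ ⊤ := fun s => measure_ne_top ρ s
  have hFmono : Monotone F := fun s t hst =>
    ENNReal.toReal_mono (hfin _) (measure_mono (Set.Iic_subset_Iic.2 hst))
  have hFle : ∀ t, F t ≤ T := fun t =>
    ENNReal.toReal_mono (hfin _) (measure_mono (Set.subset_univ _))
  set S : Set ℝ := {t | F t ≤ c} with hS
  have hSlower : IsLowerSet S := fun s t hts hs => le_trans (hFmono hts) hs
  have hSmeas : MeasurableSet S := (hSlower.ordConnected).measurableSet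
  rcases le_or_gt T c with hTc | hTc
  · have : S = Set.univ := Set.eq_univ_of_forall fun t => le_trans (hFle t) hTc
    rw [this, min_eq_right hTc]
  · rw [min_eq_left hTc.le]
    -- F tends to T at atTop
    have hFtop : Tendsto F atTop (𝓝 T) :=
      (ENNReal.tendsto_toReal (hfin _)).comp (tendsto_measure_Iic_atTop ρ)
    -- S is bounded above
    have hbdd : BddAbove S := by
      obtain ⟨T₀, hT₀⟩ := (hFtop.eventually (eventually_gt_nhds hTc)).exists_forall_of_atTop
      refine ⟨T₀, fun t ht => ?_⟩
      by_contra hlt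
      exact absurd ht (not_le.2 (hT₀ t (le_of_not_ge hlt)))
    rcases Set.eq_empty_or_nonempty S with hSe | hSne
    · -- S empty: need c = 0
      rcases eq_or_lt_of_le hc with hc0 | hc0
      · rw [hSe]; simp [← hc0]
      · exfalso
        -- F tends to 0 at -∞ along -n
        have hemp : ⋂ n : ℕ, Set.Iic (-(n : ℝ)) = (∅ : Set ℝ) := by
          ext x
          simp only [Set.mem_iInter, Set.mem_Iic, Set.mem_empty_iff_false, iff_false, not_forall]
          obtain ⟨n, hn⟩ := exists_nat_gt (-x)
          exact ⟨n, by push_neg; linarith⟩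
        have htd : Tendsto (fun n : ℕ => ρ (Set.Iic (-(n : ℝ)))) atTop (𝓝 (ρ (⋂ n : ℕ, Set.Iic (-(n : ℝ))))) := by
          refine tendsto_measure_iInter_atTop (fun n => (measurableSet_Iic).nullMeasurableSet)
            (fun i j hij => Set.Iic_subset_Iic.2 (by exact_mod_cast neg_le_neg (Nat.cast_le.2 hij))) ⟨0, hfin _⟩
        rw [hemp, measure_empty] at htd
        have : ∀ᶠ n : ℕ in atTop, ρ (Set.Iic (-(n : ℝ))) < ENNReal.ofReal c :=
          htd.eventually_lt_const (by simpa using hc0)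
        obtain ⟨n, hn⟩ := this.exists
        have hFn : F (-(n : ℝ)) < c := by
          have h2 := (ENNReal.toReal_lt_toReal (hfin _) ENNReal.ofReal_ne_top).2 hn
          rwa [ENNReal.toReal_ofReal hc] at h2
        have hmem : (-(n : ℝ)) ∈ S := le_of_lt hFn
        rw [hSe] at hmem
        exact Set.notMem_empty _ hmem
    · set t₀ : ℝ := sSup S with ht₀
      have hIio : Set.Iio t₀ ⊆ S := by
        intro t ht
        obtain ⟨y, hyS, hty⟩ := exists_lt_of_lt_csSup hSne ht
        exact le_trans (hFmono hty.le) hyS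
      have hSIic : S ⊆ Set.Iic t₀ := fun t ht => le_csSup hbdd ht
      -- ρ S = ρ (Iic t₀)
      have hρeq : ρ S = ρ (Set.Iic t₀) := by
        apply le_antisymm (measure_mono hSIic)
        calc ρ (Set.Iic t₀) ≤ ρ (Set.Iio t₀ ∪ {t₀}) := by rw [Set.Iio_union_right]
          _ ≤ ρ (Set.Iio t₀) + ρ {t₀} := measure_union_le _ _
          _ = ρ (Set.Iio t₀) := by rw [hat t₀, add_zero]
          _ ≤ ρ S := measure_mono hIio
      -- Iio as increasing union
      have hIioU : Set.Iio t₀ = ⋃ n : ℕ, Set.Iic (t₀ - 1/(n+1)) := by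
        ext x
        simp only [Set.mem_Iio, Set.mem_iUnion, Set.mem_Iic]
        constructor
        · intro hx
          obtain ⟨n, hn⟩ := exists_nat_one_div_lt (sub_pos.2 hx)
          exact ⟨n, by linarith⟩
        · rintro ⟨n, hn⟩
          have : (0:ℝ) < 1/(n+1) := by positivity
          linarith
      have hlim : Tendsto (fun n : ℕ => ρ (Set.Iic (t₀ - 1/(n+1)))) atTop (𝓝 (ρ (Set.Iio t₀))) := by
        rw [hIioU]
        refine tendsto_measure_iUnion_atTop (fun i j hij => Set.Iic_subset_Iic.2 ?_)
        have : (1:ℝ)/(j+1) ≤ 1/(i+1) := by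
          apply one_div_le_one_div_of_le (by positivity)
          exact_mod_cast by omega
        linarith
      have hIiole : ρ (Set.Iio t₀) ≤ ENNReal.ofReal c := by
        refine le_of_tendsto hlim (Filter.Eventually.of_forall fun n => ?_)
        have hmem : t₀ - 1/(n+1) ∈ S := by
          apply hIio
          simp only [Set.mem_Iio]
          have : (0:ℝ) < 1/(n+1) := by positivity
          linarith
        calc ρ (Set.Iic (t₀ - 1/(n+1))) = ENNReal.ofReal (F (t₀ - 1/(n+1))) := by
              rw [hF]; exact (ENNReal.ofReal_toReal (hfin _)).symm
          _ ≤ ENNReal.ofReal c := ENNReal.ofReal_le_ofReal hmem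
      have hle : (ρ S).toReal ≤ c := by
        rw [hρeq]
        calc (ρ (Set.Iic t₀)).toReal ≤ (ρ (Set.Iio t₀) + ρ {t₀}).toReal := by
              apply ENNReal.toReal_mono (by rw [hat]; simpa using hfin _)
              rw [← Set.Iio_union_right]; exact measure_union_le _ _
          _ = (ρ (Set.Iio t₀)).toReal := by rw [hat, add_zero]
          _ ≤ (ENNReal.ofReal c).toReal := ENNReal.toReal_mono ENNReal.ofReal_ne_top hIiole
          _ = c := ENNReal.toReal_ofReal hc
      have hge : c ≤ (ρ S).toReal := by
        by_contra hlt
        push_neg at hlt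
        rw [hρeq] at hlt
        -- right continuity
        have hIicI : Set.Iic t₀ = ⋂ n : ℕ, Set.Iic (t₀ + 1/(n+1)) := by
          ext x
          simp only [Set.mem_Iic, Set.mem_iInter]
          constructor
          · intro hx n
            have : (0:ℝ) < 1/(n+1) := by positivity
            linarith
          · intro hx
            by_contra hgt
            push_neg at hgt
            obtain ⟨n, hn⟩ := exists_nat_one_div_lt (sub_pos.2 hgt)
            have := hx n
            linarith
        have hrlim : Tendsto (fun n : ℕ => ρ (Set.Iic (t₀ + 1/(n+1)))) atTop (𝓝 (ρ (Set.Iic t₀))) := by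
          rw [hIicI]
          refine tendsto_measure_iInter_atTop (fun n => (measurableSet_Iic).nullMeasurableSet)
            (fun i j hij => Set.Iic_subset_Iic.2 ?_) ⟨0, hfin _⟩
          have : (1:ℝ)/(j+1) ≤ 1/(i+1) := by
            apply one_div_le_one_div_of_le (by positivity)
            exact_mod_cast by omega
          linarith
        have hrlim' : Tendsto (fun n : ℕ => F (t₀ + 1/(n+1))) atTop (𝓝 (F t₀)) :=
          (ENNReal.tendsto_toReal (hfin _)).comp hrlim
        have : ∀ᶠ n : ℕ in atTop, F (t₀ + 1/(n+1)) < c := hrlim'.eventually_lt_const hlt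
        obtain ⟨n, hn⟩ := this.exists
        have hmem : t₀ + 1/(n+1) ∈ S := hn.le
        have := le_csSup hbdd hmem
        have hpos : (0:ℝ) < 1/(n+1) := by positivity
        linarith
      linarith


lemma arith (p q s : ℝ) (hpq : p ≤ q) (hs : 0 ≤ s) (hp : 0 ≤ p) :
    min (max (s - p) 0) (q - p) = min s q - min s p := by
  rcases le_total s p with h1 | h1 <;> rcases le_total s q with h2 | h2 <;>
    simp [min_def, max_def] <;> split_ifs <;> linarith

lemma lemA {Ω : Type*} [MeasurableSpace Ω] (ℙ : Measure Ω) [IsProbabilityMeasure ℙ]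
    (N : ℕ) (hN : 1 ≤ N)
    (Γ : Ω → ℝ) (hΓ : Measurable Γ) (hatom : ∀ x : ℝ, ℙ (Γ ⁻¹' {x}) = 0)
    (χ : Ω → Fin N) (hχ : Measurable χ)
    (μ : Measure (Fin N)) [IsProbabilityMeasure μ]
    (hdomC : ∀ k : Fin N, ℙ (χ ⁻¹' {m | m ≤ k}) ≤ μ {m | m ≤ k}) :
    ∃ χ' : Ω → Fin N, Measurable χ' ∧ ℙ.map χ' = μ ∧ ∀ ω, χ' ω ≤ χ ω := by
  classical
  have hfinsets : ∀ s : Set (Fin N), MeasurableSet s := fun s => trivial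
  -- basic objects
  set E : Fin N → Set Ω := fun k => χ ⁻¹' {k} with hE
  have hEmeas : ∀ k, MeasurableSet (E k) := fun k => hχ (hfinsets _)
  set ρ : Fin N → Measure ℝ := fun k => (ℙ.restrict (E k)).map Γ with hρ
  haveI : ∀ k, IsFiniteMeasure (ρ k) := by
    intro k
    constructor
    rw [hρ, Measure.map_apply hΓ MeasurableSet.univ, Set.preimage_univ,
      Measure.restrict_apply_univ]
    exact measure_lt_top ℙ (E k)
  have hρapp : ∀ k (B : Set ℝ), MeasurableSet B → ρ k B = ℙ (E k ∩ Γ ⁻¹' B) := by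
    intro k B hB
    rw [hρ, Measure.map_apply hΓ hB, Measure.restrict_apply (hΓ hB), Set.inter_comm]
  have hρatom : ∀ k (x : ℝ), ρ k {x} = 0 := by
    intro k x
    rw [hρapp k _ (measurableSet_singleton x)]
    exact le_antisymm (le_trans (measure_mono Set.inter_subset_right) (le_of_eq (hatom x)))
      (zero_le)
  set H : Fin N → ℝ → ℝ := fun k t => (ρ k (Set.Iic t)).toReal with hH
  set m : Fin N → ℝ := fun k => (ρ k Set.univ).toReal with hm
  set a : ℕ → ℝ := fun i => (ℙ (χ ⁻¹' {x : Fin N | (x : ℕ) < i})).toReal with ha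
  set U : Ω → ℝ := fun ω => a (χ ω) + H (χ ω) (Γ ω) with hU
  set Cμ : Fin N → ℝ := fun k => (μ {m : Fin N | m ≤ k}).toReal with hCμ
  have hfinP : ∀ s : Set Ω, ℙ s ≠ ⊤ := fun s => measure_ne_top ℙ s
  have hfinμ : ∀ s : Set (Fin N), μ s ≠ ⊤ := fun s => measure_ne_top μ s
  have hmval : ∀ k, m k = (ℙ (E k)).toReal := by
    intro k
    rw [hm]
    simp only [hρapp k Set.univ MeasurableSet.univ, Set.preimage_univ, Set.inter_univ]
  have hmnn : ∀ k, 0 ≤ m k := fun k => ENNReal.toReal_nonneg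
  have hHle : ∀ k t, H k t ≤ m k := fun k t =>
    ENNReal.toReal_mono (measure_ne_top _ _) (measure_mono (Set.subset_univ _))
  have hHnn : ∀ k t, 0 ≤ H k t := fun k t => ENNReal.toReal_nonneg
  have hamono : ∀ i j : ℕ, i ≤ j → a i ≤ a j := by
    intro i j hij
    exact ENNReal.toReal_mono (hfinP _)
      (measure_mono (Set.preimage_mono (fun x hx => lt_of_lt_of_le hx (by exact_mod_cast hij))))
  have ha0 : a 0 = 0 := by
    rw [ha]
    have : {x : Fin N | (x : ℕ) < 0} = (∅ : Set (Fin N)) := by ext x; simp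
    simp [this]
  have haN : a N = 1 := by
    rw [ha]
    have : {x : Fin N | (x : ℕ) < N} = (Set.univ : Set (Fin N)) := by
      ext x; simp [x.isLt]
    simp [this]
  have hann : ∀ i, 0 ≤ a i := fun i => ENNReal.toReal_nonneg
  have hsplit : ∀ k : Fin N, a ((k : ℕ) + 1) = a k + m k := by
    intro k
    rw [hmval]
    show (ℙ (χ ⁻¹' {x : Fin N | (x : ℕ) < (k : ℕ) + 1})).toReal
      = (ℙ (χ ⁻¹' {x : Fin N | (x : ℕ) < (k : ℕ)})).toReal + (ℙ (E k)).toReal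
    have hdecomp : {x : Fin N | (x : ℕ) < (k : ℕ) + 1}
        = {x : Fin N | (x : ℕ) < (k : ℕ)} ∪ {k} := by
      ext x
      simp only [Set.mem_setOf_eq, Set.mem_union, Set.mem_singleton_iff, Fin.ext_iff]
      omega
    rw [hdecomp, Set.preimage_union,
      measure_union (by
        rw [Set.disjoint_iff]
        rintro ω ⟨h1, h2⟩
        simp only [Set.mem_preimage, Set.mem_setOf_eq] at h1
        simp only [Set.mem_preimage, Set.mem_singleton_iff] at h2
        rw [h2] at h1
        omega) (hχ (hfinsets _)),
      ENNReal.toReal_add (hfinP _) (hfinP _)]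
  -- dominance converted
  have hCν : ∀ k : Fin N, a ((k : ℕ) + 1) = (ℙ (χ ⁻¹' {m : Fin N | m ≤ k})).toReal := by
    intro k
    have hseteq : {x : Fin N | (x : ℕ) < (k : ℕ) + 1} = {m : Fin N | m ≤ k} := by
      ext x
      simp only [Set.mem_setOf_eq, Fin.le_def]
      omega
    show (ℙ (χ ⁻¹' {x : Fin N | (x : ℕ) < (k : ℕ) + 1})).toReal = _
    rw [hseteq]
  have hdom' : ∀ k : Fin N, a ((k : ℕ) + 1) ≤ Cμ k := by
    intro k
    rw [hCν, hCμ]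
    exact ENNReal.toReal_mono (hfinμ _) (hdomC k)
  have hCμmono : Monotone Cμ := by
    intro i j hij
    exact ENNReal.toReal_mono (hfinμ _) (measure_mono (fun x hx => le_trans hx hij))
  have hNZ : NeZero N := ⟨by omega⟩
  set kmax : Fin N := ⟨N - 1, by omega⟩ with hkmax
  have hkmaxtop : ∀ k : Fin N, k ≤ kmax := fun k => by
    simp only [hkmax, Fin.le_def]
    have := k.isLt
    omega
  have hCμtop : Cμ kmax = 1 := by
    rw [hCμ]
    have : {m : Fin N | m ≤ kmax} = Set.univ := Set.eq_univ_of_forall fun x => hkmaxtop x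
    simp [this]
  have hUle : ∀ ω, U ω ≤ a ((χ ω : ℕ) + 1) := by
    intro ω
    rw [hsplit (χ ω)]
    show a ((χ ω : ℕ)) + H (χ ω) (Γ ω) ≤ _
    exact add_le_add_right (hHle _ _) _
  have hUle1 : ∀ ω, U ω ≤ 1 := by
    intro ω
    refine le_trans (hUle ω) ?_
    rw [← haN]
    exact hamono _ _ (χ ω).isLt
  -- measurability of U
  have hUmeas : Measurable U := by
    have h1 : Measurable (fun ω => a ((χ ω : ℕ))) :=
      (measurable_of_countable (fun k : Fin N => a (k : ℕ))).comp hχ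
    have h2 : Measurable (fun ω => H (χ ω) (Γ ω)) := by
      have heq : (fun ω => H (χ ω) (Γ ω))
          = fun ω => ∑ k : Fin N, if χ ω = k then H k (Γ ω) else 0 := by
        funext ω
        rw [Finset.sum_ite_eq (Finset.univ) (χ ω) (fun k => H k (Γ ω))]
        simp
      rw [heq]
      refine Finset.measurable_sum _ (fun k _ => Measurable.ite
        (show MeasurableSet {a | χ a = k} from hχ (hfinsets {k})) ?_ measurable_const)
      have hHkmono : Monotone (H k) := fun s t hst =>
        ENNReal.toReal_mono (measure_ne_top _ _) (measure_mono (Set.Iic_subset_Iic.2 hst))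
      exact (hHkmono.measurable).comp hΓ
    exact h1.add h2
  -- the uniform distribution property
  have hunif : ∀ s : ℝ, 0 ≤ s → s ≤ 1 → (ℙ {ω | U ω ≤ s}).toReal = s := by
    intro s hs0 hs1
    set B : Fin N → Set ℝ := fun k => {t | H k t ≤ s - a (k : ℕ)} with hB
    have hBlower : ∀ k, IsLowerSet (B k) := by
      intro k t t' htt' ht
      exact le_trans (ENNReal.toReal_mono (measure_ne_top _ _)
        (measure_mono (Set.Iic_subset_Iic.2 htt'))) ht
    have hBmeas : ∀ k, MeasurableSet (B k) := fun k => ((hBlower k).ordConnected).measurableSet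
    have hdecomp : {ω | U ω ≤ s} = ⋃ k : Fin N, (E k ∩ Γ ⁻¹' (B k)) := by
      ext ω
      simp only [Set.mem_setOf_eq, Set.mem_iUnion, Set.mem_inter_iff, Set.mem_preimage,
        hE, Set.mem_singleton_iff]
      constructor
      · intro h
        have h' : a ((χ ω : ℕ)) + H (χ ω) (Γ ω) ≤ s := h
        exact ⟨χ ω, rfl, show H (χ ω) (Γ ω) ≤ s - a ((χ ω : ℕ)) by linarith⟩
      · rintro ⟨k, hk, hb⟩
        have hb' : H k (Γ ω) ≤ s - a ((k : ℕ)) := hb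
        show a ((χ ω : ℕ)) + H (χ ω) (Γ ω) ≤ s
        rw [hk]
        linarith
    have hdisj : Pairwise (Function.onFun Disjoint (fun k => E k ∩ Γ ⁻¹' (B k))) := by
      intro i j hij
      refine Set.disjoint_left.2 ?_
      rintro ω ⟨h1, _⟩ ⟨h2, _⟩
      exact hij (by rw [← h1, ← h2])
    have hμUnion : ℙ {ω | U ω ≤ s} = ∑ k : Fin N, ℙ (E k ∩ Γ ⁻¹' (B k)) := by
      rw [hdecomp, measure_iUnion hdisj (fun k => (hEmeas k).inter (hΓ (hBmeas k))), tsum_fintype]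
    rw [hμUnion, ENNReal.toReal_sum (fun k _ => hfinP _)]
    have hterm : ∀ k : Fin N, (ℙ (E k ∩ Γ ⁻¹' (B k))).toReal
        = min s (a ((k : ℕ) + 1)) - min s (a (k : ℕ)) := by
      intro k
      rw [← hρapp k _ (hBmeas k)]
      have harith := arith (a (k : ℕ)) (a ((k : ℕ) + 1)) s
        (by rw [hsplit]; linarith [hmnn k]) hs0 (hann _)
      rw [← harith]
      have hdiffeq : a ((k : ℕ) + 1) - a (k : ℕ) = m k := by rw [hsplit]; ring
      show (ρ k (B k)).toReal = _
      rcases le_or_gt 0 (s - a (k : ℕ)) with hc | hc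
      · have hres := lemC (ρ k) (hρatom k) (s - a (k : ℕ)) hc
        have hBeq : B k = {t | (ρ k (Set.Iic t)).toReal ≤ s - a (k : ℕ)} := rfl
        rw [hBeq, hres, max_eq_left hc, hdiffeq]
      · have hBempty : B k = ∅ := by
          ext t
          simp only [hB, Set.mem_setOf_eq, Set.mem_empty_iff_false, iff_false, not_le]
          exact lt_of_lt_of_le hc (hHnn k t)
        rw [hBempty]
        simp only [measure_empty, ENNReal.toReal_zero]
        rw [max_eq_right hc.le, hdiffeq, min_eq_left (hmnn k)]
    rw [Finset.sum_congr rfl (fun k _ => hterm k)]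
    rw [Fin.sum_univ_eq_sum_range (fun i => min s (a (i + 1)) - min s (a i)) N,
      Finset.sum_range_sub (fun i => min s (a i))]
    rw [ha0, haN]
    rw [min_eq_left hs1, min_eq_right hs0]
    ring
  -- definition of χ'
  have hfilter_ne : ∀ ω, (Finset.univ.filter (fun k : Fin N => U ω ≤ Cμ k)).Nonempty := by
    intro ω
    exact ⟨kmax, Finset.mem_filter.2 ⟨Finset.mem_univ _, by rw [hCμtop]; exact hUle1 ω⟩⟩
  set χ' : Ω → Fin N := fun ω => (Finset.univ.filter (fun k : Fin N => U ω ≤ Cμ k)).min' (hfilter_ne ω) with hχ'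
  have hkey : ∀ ω (k : Fin N), χ' ω ≤ k ↔ U ω ≤ Cμ k := by
    intro ω k
    constructor
    · intro h
      have hmem := Finset.min'_mem _ (hfilter_ne ω)
      rw [Finset.mem_filter] at hmem
      exact le_trans hmem.2 (hCμmono h)
    · intro h
      exact Finset.min'_le _ k (Finset.mem_filter.2 ⟨Finset.mem_univ _, h⟩)
  have hχ'le : ∀ ω, χ' ω ≤ χ ω := by
    intro ω
    exact (hkey ω (χ ω)).2 (le_trans (hUle ω) (hdom' (χ ω)))
  have hχ'meas : Measurable χ' := by
    apply measurable_to_countable'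
    intro k
    have hset : χ' ⁻¹' {k} = (U ⁻¹' (Set.Iic (Cμ k))) \ ⋃ (j : Fin N) (_ : j < k), U ⁻¹' (Set.Iic (Cμ j)) := by
      ext ω
      simp only [Set.mem_preimage, Set.mem_singleton_iff, Set.mem_diff, Set.mem_iUnion,
        Set.mem_Iic, not_exists]
      constructor
      · intro h
        refine ⟨(hkey ω k).1 (le_of_eq h), fun j hj hUj => ?_⟩
        have := (hkey ω j).2 hUj
        rw [h] at this
        exact absurd hj (not_lt.2 this)
      · rintro ⟨h1, h2⟩
        have hle := (hkey ω k).2 h1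
        rcases lt_or_eq_of_le hle with hlt | heq
        · exact absurd ((hkey ω (χ' ω)).1 le_rfl) (h2 _ hlt)
        · exact heq
    rw [hset]
    exact ((hUmeas measurableSet_Iic).diff
      (MeasurableSet.iUnion (fun j => MeasurableSet.iUnion (fun _ => hUmeas measurableSet_Iic))))
  -- the law of χ'
  have hCμ01 : ∀ k, 0 ≤ Cμ k ∧ Cμ k ≤ 1 := by
    intro k
    refine ⟨ENNReal.toReal_nonneg, ?_⟩
    rw [hCμ]
    calc (μ {m : Fin N | m ≤ k}).toReal ≤ (μ Set.univ).toReal :=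
          ENNReal.toReal_mono (hfinμ _) (measure_mono (Set.subset_univ _))
      _ = 1 := by simp
  have hlaw_le : ∀ k : Fin N, (ℙ {ω | χ' ω ≤ k}).toReal = Cμ k := by
    intro k
    have hset : {ω | χ' ω ≤ k} = {ω | U ω ≤ Cμ k} := by
      ext ω
      exact hkey ω k
    rw [hset, hunif (Cμ k) (hCμ01 k).1 (hCμ01 k).2]
  -- conclude map equality
  refine ⟨χ', hχ'meas, ?_, hχ'le⟩
  rw [Measure.ext_iff_singleton]
  intro k
  rw [Measure.map_apply hχ'meas (measurableSet_singleton k)]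
  rw [← ENNReal.toReal_eq_toReal_iff' (hfinP _) (hfinμ _)]
  have hμk : ∀ j : Fin N, (μ {m : Fin N | m ≤ j}).toReal = Cμ j := fun j => rfl
  rcases Nat.eq_zero_or_pos (k : ℕ) with hk0 | hkpos
  · have hsetχ : χ' ⁻¹' {k} = {ω | χ' ω ≤ k} := by
      ext ω
      simp only [Set.mem_preimage, Set.mem_singleton_iff, Set.mem_setOf_eq]
      constructor
      · exact fun h => le_of_eq h
      · intro h
        refine le_antisymm h ?_
        rw [Fin.le_def]
        omega
    have hsetμ : ({k} : Set (Fin N)) = {m : Fin N | m ≤ k} := by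
      ext x
      simp only [Set.mem_singleton_iff, Set.mem_setOf_eq, Fin.le_def, Fin.ext_iff]
      omega
    rw [hsetχ, hlaw_le k, hsetμ]
  · set k' : Fin N := ⟨(k : ℕ) - 1, by omega⟩ with hk'
    have hk'lt : k' < k := by rw [Fin.lt_def]; simp only [hk']; omega
    have hsetχ : χ' ⁻¹' {k} = {ω | χ' ω ≤ k} \ {ω | χ' ω ≤ k'} := by
      ext ω
      simp only [Set.mem_preimage, Set.mem_singleton_iff, Set.mem_diff, Set.mem_setOf_eq]
      constructor
      · intro h
        refine ⟨le_of_eq h, fun hle => ?_⟩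
        rw [h] at hle
        exact absurd hk'lt (not_lt.2 (by exact_mod_cast hle))
      · rintro ⟨h1, h2⟩
        refine le_antisymm h1 ?_
        rw [Fin.le_def]
        rw [Fin.le_def] at h2
        have hk'val : (k' : ℕ) = (k : ℕ) - 1 := rfl
        omega
    have hsetμ : ({k} : Set (Fin N)) = {m : Fin N | m ≤ k} \ {m : Fin N | m ≤ k'} := by
      ext x
      simp only [Set.mem_singleton_iff, Set.mem_diff, Set.mem_setOf_eq, Fin.le_def, Fin.ext_iff]
      have hk'val : (k' : ℕ) = (k : ℕ) - 1 := rfl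
      omega
    have hsub1 : {ω | χ' ω ≤ k'} ⊆ {ω | χ' ω ≤ k} := fun ω h => le_trans h hk'lt.le
    have hsub2 : {m : Fin N | m ≤ k'} ⊆ {m : Fin N | m ≤ k} := fun x h => le_trans h hk'lt.le
    have hmeasχle : ∀ j : Fin N, MeasurableSet {ω | χ' ω ≤ j} := by
      intro j
      have : {ω | χ' ω ≤ j} = χ' ⁻¹' {m : Fin N | m ≤ j} := rfl
      rw [this]
      exact hχ'meas (hfinsets _)
    rw [hsetχ, hsetμ,
      measure_diff hsub1 (hmeasχle k').nullMeasurableSet (hfinP _),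
      measure_diff hsub2 (hfinsets _).nullMeasurableSet (hfinμ _),
      ENNReal.toReal_sub_of_le (measure_mono hsub1) (hfinP _),
      ENNReal.toReal_sub_of_le (measure_mono hsub2) (hfinμ _),
      hlaw_le k, hlaw_le k']


/-- `V_OT` is monotone with respect to first-order stochastic dominance:
if `ν ⪰ μ` (i.e. `F_ν(n) ≥ F_μ(n)` for every `n`, where `F_μ(n) = μ({n, …, N})`),
then `V_OT(ν) ≥ V_OT(μ)`. -/
theorem stmt2
    {Ω : Type*} [MeasurableSpace Ω] (ℙ : Measure Ω) [IsProbabilityMeasure ℙ]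
    (N : ℕ) (hN : 1 ≤ N)
    (μ ν : Measure (Fin N)) [IsProbabilityMeasure μ] [IsProbabilityMeasure ν]
    (hdom : ∀ n : Fin N, μ {m : Fin N | n ≤ m} ≤ ν {m : Fin N | n ≤ m})
    (Γ ξ : Ω → ℝ) (hΓmeas : Measurable Γ) (hξmeas : Measurable ξ)
    (hΓ2 : MemLp Γ 2 ℙ) (hξ2 : MemLp ξ 2 ℙ)
    (hΓpos : ∀ᵐ ω ∂ℙ, 0 < Γ ω)
    (hΓatomless : ∀ x : ℝ, ℙ (Γ ⁻¹' {x}) = 0)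
    (γ : Fin N → ℝ) (hγ : StrictMono γ) :
    sInf {v : ℝ | ∃ χ : Ω → Fin N, Measurable χ ∧ ℙ.map χ = μ ∧
        v = ∫ ω, Γ ω * (ξ ω + γ (χ ω)) ∂ℙ}
      ≤ sInf {v : ℝ | ∃ χ : Ω → Fin N, Measurable χ ∧ ℙ.map χ = ν ∧
          v = ∫ ω, Γ ω * (ξ ω + γ (χ ω)) ∂ℙ} := by
  classical
  have hfinsets : ∀ s : Set (Fin N), MeasurableSet s := fun s => trivial
  set k0 : Fin N := ⟨0, by omega⟩ with hk0
  set kmax : Fin N := ⟨N - 1, by omega⟩ with hkmax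
  have hkmaxtop : ∀ k : Fin N, k ≤ kmax := fun k => by
    rw [Fin.le_def]
    have := k.isLt
    simp only [hkmax]
    omega
  have hk0bot : ∀ k : Fin N, k0 ≤ k := fun k => by
    rw [Fin.le_def]
    simp only [hk0]
    omega
  -- integrability
  have hint : ∀ χ : Ω → Fin N, Measurable χ →
      Integrable (fun ω => Γ ω * (ξ ω + γ (χ ω))) ℙ := by
    intro χ hχm
    have h1 : Integrable (fun ω => Γ ω * ξ ω) ℙ := by
      have hh : (1 : ℝ≥0∞) / 1 = 1 / 2 + 1 / 2 := by
        simp only [one_div, inv_one]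
        exact (ENNReal.inv_two_add_inv_two).symm
      have := memLp_one_iff_integrable.1 (hξ2.smul hΓ2 (r := 1))
      exact this
    obtain ⟨C, hC⟩ := Finite.exists_le (fun k : Fin N => ‖γ k‖)
    have h3 : Integrable (fun ω => γ (χ ω) * Γ ω) ℙ :=
      (hΓ2.integrable one_le_two).bdd_mul
        (((measurable_of_countable γ).comp hχm).aestronglyMeasurable)
        (c := C) (Filter.Eventually.of_forall fun ω => hC (χ ω))
    have heq : (fun ω => Γ ω * (ξ ω + γ (χ ω)))
        = fun ω => Γ ω * ξ ω + γ (χ ω) * Γ ω := by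
      funext ω
      ring
    rw [heq]
    exact h1.add h3
  -- pointwise comparison under a.e. positivity
  have hcomp : ∀ (χ₁ χ₂ : Ω → Fin N), Measurable χ₁ → Measurable χ₂ →
      (∀ ω, χ₁ ω ≤ χ₂ ω) →
      ∫ ω, Γ ω * (ξ ω + γ (χ₁ ω)) ∂ℙ ≤ ∫ ω, Γ ω * (ξ ω + γ (χ₂ ω)) ∂ℙ := by
    intro χ₁ χ₂ h1 h2 hle
    refine integral_mono_ae (hint χ₁ h1) (hint χ₂ h2) ?_
    filter_upwards [hΓpos] with ω hpos
    exact mul_le_mul_of_nonneg_left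
      (add_le_add_right (hγ.monotone (hle ω)) _) hpos.le
  -- lower bound for the μ-set
  have hbdd : BddBelow {v : ℝ | ∃ χ : Ω → Fin N, Measurable χ ∧ ℙ.map χ = μ ∧
      v = ∫ ω, Γ ω * (ξ ω + γ (χ ω)) ∂ℙ} := by
    refine ⟨∫ ω, Γ ω * (ξ ω + γ k0) ∂ℙ, ?_⟩
    rintro v ⟨χ, hχm, hχl, rfl⟩
    exact hcomp (fun _ => k0) χ (measurable_const) hχm (fun ω => hk0bot (χ ω))
  -- dominance in CDF form
  have hdomC : ∀ k : Fin N, ν {m : Fin N | m ≤ k} ≤ μ {m : Fin N | m ≤ k} := by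
    intro k
    have hc : μ {m : Fin N | m ≤ k}ᶜ ≤ ν {m : Fin N | m ≤ k}ᶜ := by
      have hcompl : {m : Fin N | m ≤ k}ᶜ = {m : Fin N | k < m} := by
        ext x
        simp [not_le]
      rcases lt_or_ge ((k : ℕ) + 1) N with hk | hk
      · have hkk : {m : Fin N | k < m} = {m : Fin N | (⟨(k : ℕ) + 1, hk⟩ : Fin N) ≤ m} := by
          ext x
          simp only [Set.mem_setOf_eq, Fin.lt_def, Fin.le_def]
          omega
        rw [hcompl, hkk]
        exact hdom _
      · have hkk : {m : Fin N | k < m} = ∅ := by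
          ext x
          simp only [Set.mem_setOf_eq, Fin.lt_def, Set.mem_empty_iff_false, iff_false, not_lt]
          have := x.isLt
          omega
        rw [hcompl, hkk]
        simp
    have e1 : ν {m : Fin N | m ≤ k} = 1 - ν {m : Fin N | m ≤ k}ᶜ := by
      rw [← compl_compl {m : Fin N | m ≤ k}, prob_compl_eq_one_sub (hfinsets _), compl_compl]
    have e2 : μ {m : Fin N | m ≤ k} = 1 - μ {m : Fin N | m ≤ k}ᶜ := by
      rw [← compl_compl {m : Fin N | m ≤ k}, prob_compl_eq_one_sub (hfinsets _), compl_compl]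
    rw [e1, e2]
    exact tsub_le_tsub_left hc 1
  -- the ν-set is nonempty
  have hνne : Set.Nonempty {v : ℝ | ∃ χ : Ω → Fin N, Measurable χ ∧ ℙ.map χ = ν ∧
      v = ∫ ω, Γ ω * (ξ ω + γ (χ ω)) ∂ℙ} := by
    have hdomC0 : ∀ k : Fin N, ℙ ((fun _ : Ω => kmax) ⁻¹' {m | m ≤ k}) ≤ ν {m | m ≤ k} := by
      intro k
      by_cases hk : kmax ≤ k
      · have h2 : {m : Fin N | m ≤ k} = Set.univ :=
          Set.eq_univ_of_forall fun m => le_trans (hkmaxtop m) hk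
        rw [h2]
        simp
      · have h1 : (fun _ : Ω => kmax) ⁻¹' {m | m ≤ k} = ∅ := by
          ext ω
          simp only [Set.mem_preimage, Set.mem_setOf_eq, Set.mem_empty_iff_false, iff_false]
          exact hk
        rw [h1]
        simp
    obtain ⟨χν, hχνm, hχνl, _⟩ := lemA ℙ N hN Γ hΓmeas hΓatomless (fun _ => kmax)
      measurable_const ν hdomC0
    exact ⟨_, χν, hχνm, hχνl, rfl⟩
  refine le_csInf hνne ?_
  rintro v ⟨χ, hχm, hχl, rfl⟩
  have hdomCχ : ∀ k : Fin N, ℙ (χ ⁻¹' {m | m ≤ k}) ≤ μ {m | m ≤ k} := by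
    intro k
    have heq : ℙ (χ ⁻¹' {m | m ≤ k}) = ν {m | m ≤ k} := by
      rw [← hχl, Measure.map_apply hχm (hfinsets _)]
    rw [heq]
    exact hdomC k
  obtain ⟨χ', hχ'm, hχ'l, hχ'le⟩ := lemA ℙ N hN Γ hΓmeas hΓatomless χ hχm μ hdomCχ
  calc sInf {v : ℝ | ∃ χ : Ω → Fin N, Measurable χ ∧ ℙ.map χ = μ ∧
        v = ∫ ω, Γ ω * (ξ ω + γ (χ ω)) ∂ℙ}
      ≤ ∫ ω, Γ ω * (ξ ω + γ (χ' ω)) ∂ℙ := csInf_le hbdd ⟨χ', hχ'm, hχ'l, rfl⟩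
    _ ≤ ∫ ω, Γ ω * (ξ ω + γ (χ ω)) ∂ℙ := hcomp χ' χ hχ'm hχm hχ'le
end

section
/- The stochastic-dominance constraint is saturated at the optimum: inf_{χ ∈ T₊(μ)} E[Γ(ξ + γ(χ))] = inf_{χ ∈ T(μ)} E[Γ(ξ + γ(χ))] = V_OT(μ), where T₊(μ) is the set of measurable χ : Ω → 𝒮 whose law dominates μ in first-order stochastic dominance. -/
open MeasureTheory

namespace Stmt3Aux
open Set Filter

lemma lemU {Ω : Type*} [MeasurableSpace Ω] (ℙ : Measure Ω) [IsProbabilityMeasure ℙ]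
    (Γ : Ω → ℝ) (hΓ : Measurable Γ) (hatom : ∀ x : ℝ, ℙ (Γ ⁻¹' {x}) = 0)
    {A : Set Ω} (hA : MeasurableSet A) (s : ℝ) :
    (ℙ (A ∩ {ω | (ℙ (A ∩ Γ ⁻¹' Iic (Γ ω))).toReal ≤ s})).toReal
      = max 0 (min s (ℙ A).toReal) := by
  set g : ℝ → ℝ := fun x => (ℙ (A ∩ Γ ⁻¹' Iic x)).toReal with hg
  have hfin : ∀ t : Set Ω, ℙ t ≠ ⊤ := fun t => measure_ne_top ℙ t
  have gmono : Monotone g := by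
    intro x y hxy
    exact ENNReal.toReal_mono (hfin _) (measure_mono (inter_subset_inter_right _
      (preimage_mono (Iic_subset_Iic.2 hxy))))
  have g0 : ∀ x, 0 ≤ g x := fun x => ENNReal.toReal_nonneg
  set P : ℝ := (ℙ A).toReal with hP
  have hP0 : 0 ≤ P := ENNReal.toReal_nonneg
  have gleP : ∀ x, g x ≤ P :=
    fun x => ENNReal.toReal_mono (hfin _) (measure_mono inter_subset_left)
  rcases lt_or_ge s 0 with hs | hs
  · have hempty : A ∩ {ω | g (Γ ω) ≤ s} = ∅ := by
      ext ω; simp only [mem_inter_iff, mem_empty_iff_false, iff_false, mem_setOf_eq, not_and]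
      intro _ h
      exact absurd (le_trans (g0 _) h) (not_le.2 hs)
    rw [hempty, measure_empty]
    have : min s P ≤ 0 := le_trans (min_le_left _ _) hs.le
    simp [max_eq_left this]
  rcases le_or_gt P s with hsP | hsP
  · have hall : A ∩ {ω | g (Γ ω) ≤ s} = A := by
      apply inter_eq_left.2
      intro ω _
      exact le_trans (gleP _) hsP
    rw [hall, min_eq_right hsP, max_eq_right hP0]
  -- main case : 0 ≤ s < P
  · rw [min_eq_left hsP.le, max_eq_right hs]
    set S : Set ℝ := {x | g x ≤ s} with hS
    -- existence of an upper bound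
    have hub : ∃ x₀, s < g x₀ := by
      have hU : ⋃ n : ℕ, (A ∩ Γ ⁻¹' Iic (n : ℝ)) = A := by
        ext ω
        simp only [mem_iUnion, mem_inter_iff, mem_preimage, mem_Iic]
        constructor
        · rintro ⟨n, hωA, -⟩; exact hωA
        · intro hωA
          obtain ⟨n, hn⟩ := exists_nat_ge (Γ ω)
          exact ⟨n, hωA, hn⟩
      have hmon : Monotone (fun n : ℕ => A ∩ Γ ⁻¹' Iic (n : ℝ)) := by
        intro a b hab
        exact inter_subset_inter_right _ (preimage_mono (Iic_subset_Iic.2 (by exact_mod_cast hab)))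
      have ht := tendsto_measure_iUnion_atTop (μ := ℙ) hmon
      rw [hU] at ht
      have ht2 : Tendsto (fun n : ℕ => g n) atTop (nhds P) :=
        (ENNReal.tendsto_toReal (hfin A)).comp ht
      obtain ⟨n, hn⟩ := (ht2.eventually (eventually_gt_nhds hsP)).exists
      exact ⟨n, hn⟩
    obtain ⟨x₀, hx₀⟩ := hub
    have hSbdd : BddAbove S := by
      refine ⟨x₀, fun y hy => ?_⟩
      by_contra hxy
      push_neg at hxy
      exact absurd (le_trans (gmono hxy.le) hy) (not_le.2 hx₀)
    by_cases hSne : S.Nonempty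
    · set x' : ℝ := sSup S with hx'
      have hlt : ∀ y, y < x' → g y ≤ s := by
        intro y hy
        obtain ⟨z, hzS, hyz⟩ := exists_lt_of_lt_csSup hSne hy
        exact le_trans (gmono hyz.le) hzS
      have hgt : ∀ y, x' < y → s < g y := by
        intro y hy
        by_contra h
        push_neg at h
        exact absurd (le_csSup hSbdd h) (not_le.2 hy)
      -- ℙ (A ∩ Γ⁻¹' Iio x') ≤ ofReal s
      have hIio : ℙ (A ∩ Γ ⁻¹' Iio x') ≤ ENNReal.ofReal s := by
        have hU : ⋃ n : ℕ, (A ∩ Γ ⁻¹' Iic (x' - 1 / (n + 1))) = A ∩ Γ ⁻¹' Iio x' := by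
          ext ω
          simp only [mem_iUnion, mem_inter_iff, mem_preimage, mem_Iic, mem_Iio]
          constructor
          · rintro ⟨n, hωA, hn⟩
            refine ⟨hωA, lt_of_le_of_lt hn ?_⟩
            have : (0:ℝ) < 1 / (n + 1) := by positivity
            linarith
          · rintro ⟨hωA, hω⟩
            obtain ⟨n, hn⟩ := exists_nat_one_div_lt (sub_pos.2 hω)
            exact ⟨n, hωA, by linarith⟩
        have hmon : Monotone (fun n : ℕ => A ∩ Γ ⁻¹' Iic (x' - 1 / (n + 1))) := by
          intro a b hab
          apply inter_subset_inter_right _ (preimage_mono (Iic_subset_Iic.2 _))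
          have : (1:ℝ) / (b + 1) ≤ 1 / (a + 1) := by
            apply one_div_le_one_div_of_le (by positivity)
            exact_mod_cast by omega
          linarith
        have ht := tendsto_measure_iUnion_atTop (μ := ℙ) hmon
        rw [hU] at ht
        refine le_of_tendsto ht (Eventually.of_forall fun n => ?_)
        show ℙ (A ∩ Γ ⁻¹' Iic (x' - 1 / (n + 1))) ≤ ENNReal.ofReal s
        have := hlt (x' - 1/(n+1)) (sub_lt_self _ (by positivity))
        rwa [← ENNReal.le_ofReal_iff_toReal_le (hfin _) hs] at this
      -- ofReal s ≤ ℙ (A ∩ Γ⁻¹' Iic x')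
      have hIic : ENNReal.ofReal s ≤ ℙ (A ∩ Γ ⁻¹' Iic x') := by
        have hI : ⋂ n : ℕ, (A ∩ Γ ⁻¹' Iic (x' + 1 / (n + 1))) = A ∩ Γ ⁻¹' Iic x' := by
          ext ω
          simp only [mem_iInter, mem_inter_iff, mem_preimage, mem_Iic]
          constructor
          · intro h
            refine ⟨(h 0).1, ?_⟩
            by_contra hc
            push_neg at hc
            obtain ⟨n, hn⟩ := exists_nat_one_div_lt (sub_pos.2 hc)
            exact absurd ((h n).2) (by push_neg; linarith)
          · rintro ⟨hωA, hω⟩ n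
            have : (0:ℝ) < 1 / ((n:ℝ) + 1) := by positivity
            exact ⟨hωA, by linarith⟩
        have hanti : Antitone (fun n : ℕ => A ∩ Γ ⁻¹' Iic (x' + 1 / (n + 1))) := by
          intro a b hab
          apply inter_subset_inter_right _ (preimage_mono (Iic_subset_Iic.2 _))
          have : (1:ℝ) / (b + 1) ≤ 1 / (a + 1) := by
            apply one_div_le_one_div_of_le (by positivity)
            exact_mod_cast by omega
          linarith
        have ht := tendsto_measure_iInter_atTop (μ := ℙ)
          (fun n => (hA.inter (hΓ measurableSet_Iic)).nullMeasurableSet) hanti ⟨0, hfin _⟩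
        rw [hI] at ht
        refine ge_of_tendsto ht (Eventually.of_forall fun n => ?_)
        show ENNReal.ofReal s ≤ ℙ (A ∩ Γ ⁻¹' Iic (x' + 1 / (n + 1)))
        have h1 := hgt (x' + 1/(n+1)) (lt_add_of_pos_right _ (by positivity))
        rw [ENNReal.ofReal_le_iff_le_toReal (hfin _)]
        exact h1.le
      -- the atom at x' is null
      have hIicIio : ℙ (A ∩ Γ ⁻¹' Iic x') ≤ ENNReal.ofReal s := by
        have hsplit : A ∩ Γ ⁻¹' Iic x' ⊆ (A ∩ Γ ⁻¹' Iio x') ∪ Γ ⁻¹' {x'} := by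
          rintro ω ⟨hωA, hω⟩
          rcases lt_or_eq_of_le (show Γ ω ≤ x' from hω) with h | h
          · exact Or.inl ⟨hωA, h⟩
          · exact Or.inr h
        calc ℙ (A ∩ Γ ⁻¹' Iic x') ≤ ℙ (A ∩ Γ ⁻¹' Iio x') + ℙ (Γ ⁻¹' {x'}) :=
              le_trans (measure_mono hsplit) (measure_union_le _ _)
          _ = ℙ (A ∩ Γ ⁻¹' Iio x') := by rw [hatom x', add_zero]
          _ ≤ ENNReal.ofReal s := hIio
      -- squeeze the event between Iio and Iic
      have hsub1 : A ∩ Γ ⁻¹' Iio x' ⊆ A ∩ {ω | g (Γ ω) ≤ s} := by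
        rintro ω ⟨hωA, hω⟩
        exact ⟨hωA, hlt _ hω⟩
      have hsub2 : A ∩ {ω | g (Γ ω) ≤ s} ⊆ A ∩ Γ ⁻¹' Iic x' := by
        rintro ω ⟨hωA, hω⟩
        exact ⟨hωA, le_csSup hSbdd hω⟩
      have heq : ℙ (A ∩ {ω | g (Γ ω) ≤ s}) = ENNReal.ofReal s := by
        apply le_antisymm
        · exact le_trans (measure_mono hsub2) hIicIio
        · calc ENNReal.ofReal s ≤ ℙ (A ∩ Γ ⁻¹' Iic x') := hIic
            _ ≤ ℙ (A ∩ Γ ⁻¹' Iio x') + ℙ (Γ ⁻¹' {x'}) := by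
                refine le_trans (measure_mono ?_) (measure_union_le _ _)
                rintro ω ⟨hωA, hω⟩
                rcases lt_or_eq_of_le (show Γ ω ≤ x' from hω) with h | h
                · exact Or.inl ⟨hωA, h⟩
                · exact Or.inr h
            _ = ℙ (A ∩ Γ ⁻¹' Iio x') := by rw [hatom x', add_zero]
            _ ≤ ℙ (A ∩ {ω | g (Γ ω) ≤ s}) := measure_mono hsub1
      rw [heq, ENNReal.toReal_ofReal hs]
    · -- S empty : s must be 0 (since g → 0 at -∞ would give membership if s > 0)
      rcases eq_or_lt_of_le hs with hs0 | hs0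
      · have hempty : A ∩ {ω | g (Γ ω) ≤ s} = ∅ := by
          ext ω
          simp only [mem_inter_iff, mem_empty_iff_false, iff_false, mem_setOf_eq, not_and]
          intro _ h
          exact hSne ⟨Γ ω, h⟩
        rw [hempty, measure_empty, ← hs0]
        simp
      · exfalso
        apply hSne
        have hI : ⋂ n : ℕ, (A ∩ Γ ⁻¹' Iic (-(n : ℝ))) = ∅ := by
          ext ω
          simp only [mem_iInter, mem_inter_iff, mem_preimage, mem_Iic, mem_empty_iff_false,
            iff_false, not_forall]
          obtain ⟨n, hn⟩ := exists_nat_gt (-(Γ ω))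
          refine ⟨n, fun h => ?_⟩
          have := h.2
          linarith
        have hanti : Antitone (fun n : ℕ => A ∩ Γ ⁻¹' Iic (-(n:ℝ))) := by
          intro a b hab
          apply inter_subset_inter_right _ (preimage_mono (Iic_subset_Iic.2 _))
          simp only [neg_le_neg_iff]
          exact_mod_cast hab
        have ht := tendsto_measure_iInter_atTop (μ := ℙ)
          (fun n => (hA.inter (hΓ measurableSet_Iic)).nullMeasurableSet) hanti ⟨0, hfin _⟩
        rw [hI, measure_empty] at ht
        have ht2 : Tendsto (fun n : ℕ => g (-(n:ℝ))) atTop (nhds 0) := by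
          have := (ENNReal.tendsto_toReal (by simp)).comp ht
          rw [ENNReal.toReal_zero] at this
          exact this
        obtain ⟨n, hn⟩ := (ht2.eventually (eventually_lt_nhds hs0)).exists
        exact ⟨-(n:ℝ), hn.le⟩



noncomputable def cum {N : ℕ} (ρ : Measure (Fin N)) (k : ℕ) : ℝ :=
  (ρ {m : Fin N | (m : ℕ) < k}).toReal

variable {N : ℕ} (ρ : Measure (Fin N)) [IsProbabilityMeasure ρ]

lemma cum_zero : cum ρ 0 = 0 := by
  have : {m : Fin N | (m : ℕ) < 0} = ∅ := by ext m; simp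
  simp [cum, this]

lemma cum_nonneg (k : ℕ) : 0 ≤ cum ρ k := ENNReal.toReal_nonneg

lemma cum_mono : Monotone (cum ρ) := by
  intro a b hab
  exact ENNReal.toReal_mono (measure_ne_top _ _)
    (measure_mono fun m hm => lt_of_lt_of_le hm hab)

lemma cum_of_ge {k : ℕ} (hk : N ≤ k) : cum ρ k = 1 := by
  have : {m : Fin N | (m : ℕ) < k} = univ := by
    ext m; simpa using lt_of_lt_of_le m.isLt hk
  simp [cum, this]

lemma cum_le_one (k : ℕ) : cum ρ k ≤ 1 := by
  have : cum ρ k ≤ cum ρ (max k N) := cum_mono ρ (le_max_left _ _)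
  rwa [cum_of_ge ρ (le_max_right _ _)] at this

lemma cum_step (m : Fin N) : cum ρ ((m : ℕ) + 1) = cum ρ (m : ℕ) + (ρ {m}).toReal := by
  have hset : {m' : Fin N | (m' : ℕ) < (m : ℕ) + 1}
      = {m' : Fin N | (m' : ℕ) < (m : ℕ)} ∪ {m} := by
    ext m'
    simp only [mem_setOf_eq, mem_union, mem_singleton_iff, Fin.ext_iff]
    omega
  have hdisj : Disjoint {m' : Fin N | (m' : ℕ) < (m : ℕ)} ({m} : Set (Fin N)) := by
    simp only [disjoint_singleton_right, mem_setOf_eq]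
    omega
  rw [cum, hset, measure_union hdisj trivial,
    ENNReal.toReal_add (measure_ne_top _ _) (measure_ne_top _ _)]
  rfl

lemma cum_tail (n : Fin N) : (ρ {m : Fin N | n ≤ m}).toReal = 1 - cum ρ (n : ℕ) := by
  have hset : {m : Fin N | (m : ℕ) < (n : ℕ)} = {m : Fin N | n ≤ m}ᶜ := by
    ext m
    simp only [mem_setOf_eq, mem_compl_iff, not_le]
    exact Fin.lt_def.symm
  have hc := measure_compl (μ := ρ) (s := {m : Fin N | n ≤ m}) trivial (measure_ne_top _ _)
  rw [cum, hset, hc, measure_univ,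
    ENNReal.toReal_sub_of_le prob_le_one ENNReal.one_ne_top, ENNReal.toReal_one]
  ring

lemma fin_meas_ext (ρ₁ ρ₂ : Measure (Fin N)) (h : ∀ m, ρ₁ {m} = ρ₂ {m}) : ρ₁ = ρ₂ := by
  ext s hs
  have hdisj : (↑(Finset.univ : Finset (Fin N)) : Set (Fin N)).PairwiseDisjoint
      (fun m : Fin N => s ∩ ({m} : Set (Fin N))) := by
    intro a _ b _ hab
    simp only [Function.onFun]
    refine Set.disjoint_left.2 ?_
    rintro x ⟨-, hx1⟩ ⟨-, hx2⟩
    simp only [mem_singleton_iff] at hx1 hx2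
    exact hab (by rw [← hx1, ← hx2])
  have hdecomp : ∀ ρ : Measure (Fin N), ρ s = ∑ m : Fin N, ρ (s ∩ {m}) := by
    intro ρ
    have hs' : s = ⋃ m ∈ (Finset.univ : Finset (Fin N)), (s ∩ ({m} : Set (Fin N))) := by
      ext m
      simp
    conv_lhs => rw [hs']
    rw [measure_biUnion_finset hdisj (fun _ _ => trivial)]
  rw [hdecomp ρ₁, hdecomp ρ₂]
  refine Finset.sum_congr rfl fun m _ => ?_
  by_cases hm : m ∈ s
  · have : s ∩ ({m} : Set (Fin N)) = {m} := by
      ext x; simp only [mem_inter_iff, mem_singleton_iff, and_iff_right_iff_imp]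
      rintro rfl; exact hm
    rw [this, h m]
  · have : s ∩ ({m} : Set (Fin N)) = ∅ := by
      ext x; simp only [mem_inter_iff, mem_singleton_iff, mem_empty_iff_false, iff_false, not_and]
      rintro hx rfl; exact hm hx
    rw [this, measure_empty, measure_empty]


lemma alg {t a b : ℝ} (h : a ≤ b) :
    max 0 (min (t - a) (b - a)) = min t b - min t a := by
  rcases le_total t a with h1 | h1
  · rw [min_eq_left h1, min_eq_left (h1.trans h),
      max_eq_left (le_trans (min_le_left _ _) (by linarith))]
    ring
  · rcases le_total t b with h2 | h2
    · rw [min_eq_right h1, min_eq_left h2, min_eq_left (by linarith),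
        max_eq_right (by linarith)]
    · rw [min_eq_right h1, min_eq_right h2, min_eq_right (by linarith),
        max_eq_right (by linarith)]

lemma construct {Ω : Type*} [MeasurableSpace Ω] (ℙ : Measure Ω) [IsProbabilityMeasure ℙ]
    {N : ℕ} (hN : 1 ≤ N) (μ : Measure (Fin N)) [IsProbabilityMeasure μ]
    (Γ : Ω → ℝ) (hΓmeas : Measurable Γ) (hΓatomless : ∀ x : ℝ, ℙ (Γ ⁻¹' {x}) = 0)
    (χ : Ω → Fin N) (hχ : Measurable χ)
    (hdom : ∀ n : Fin N, μ {m : Fin N | n ≤ m} ≤ (ℙ.map χ) {m : Fin N | n ≤ m}) :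
    ∃ χ' : Ω → Fin N, Measurable χ' ∧ ℙ.map χ' = μ ∧ ∀ ω, χ' ω ≤ χ ω := by
  classical
  haveI : NeZero N := ⟨by omega⟩
  set ν : Measure (Fin N) := ℙ.map χ with hνdef
  haveI hνprob : IsProbabilityMeasure ν := Measure.isProbabilityMeasure_map hχ.aemeasurable
  have hνfiber : ∀ n : Fin N, ν {n} = ℙ (χ ⁻¹' {n}) :=
    fun n => Measure.map_apply hχ (measurableSet_singleton n)
  have hgmono : ∀ n : Fin N, Monotone (fun x => (ℙ (χ ⁻¹' {n} ∩ Γ ⁻¹' Iic x)).toReal) := by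
    intro n x y hxy
    exact ENNReal.toReal_mono (measure_ne_top _ _) (measure_mono (inter_subset_inter_right _
      (preimage_mono (Iic_subset_Iic.2 hxy))))
  have hg0 : ∀ (n : Fin N) x, 0 ≤ (ℙ (χ ⁻¹' {n} ∩ Γ ⁻¹' Iic x)).toReal :=
    fun n x => ENNReal.toReal_nonneg
  have hgle : ∀ (n : Fin N) x, (ℙ (χ ⁻¹' {n} ∩ Γ ⁻¹' Iic x)).toReal ≤ (ν {n}).toReal := by
    intro n x
    rw [hνfiber]
    exact ENNReal.toReal_mono (measure_ne_top _ _) (measure_mono inter_subset_left)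
  set R : Ω → ℝ :=
    fun ω => cum ν (χ ω : ℕ) + (ℙ (χ ⁻¹' {χ ω} ∩ Γ ⁻¹' Iic (Γ ω))).toReal with hRdef
  have hRfiber : ∀ (n : Fin N) (ω : Ω), χ ω = n →
      R ω = cum ν (n : ℕ) + (ℙ (χ ⁻¹' {n} ∩ Γ ⁻¹' Iic (Γ ω))).toReal := by
    intro n ω h
    rw [hRdef]
    simp only [h]
  have hRmeas : Measurable R := by
    have hfun : R = fun ω => ∑ n : Fin N,
        if χ ω = n then cum ν (n : ℕ) + (ℙ (χ ⁻¹' {n} ∩ Γ ⁻¹' Iic (Γ ω))).toReal else 0 := by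
      funext ω
      rw [Finset.sum_ite_eq Finset.univ (χ ω)
        (fun n => cum ν (n : ℕ) + (ℙ (χ ⁻¹' {n} ∩ Γ ⁻¹' Iic (Γ ω))).toReal)]
      simp [hRdef]
    rw [hfun]
    apply Finset.measurable_sum
    intro n _
    refine Measurable.ite ?_ ?_ measurable_const
    · exact hχ (measurableSet_singleton n)
    · exact measurable_const.add ((hgmono n).measurable.comp hΓmeas)
  have hR0 : ∀ ω, 0 ≤ R ω := fun ω => add_nonneg (cum_nonneg _ _) (hg0 _ _)
  have hRle : ∀ ω, R ω ≤ cum ν ((χ ω : ℕ) + 1) := by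
    intro ω
    rw [hRdef, cum_step ν (χ ω)]
    exact add_le_add_right (hgle _ _) _
  have hR1 : ∀ ω, R ω ≤ 1 := fun ω => (hRle ω).trans (cum_le_one ν _)
  have hRmeasSet : ∀ t : ℝ, MeasurableSet {ω | R ω ≤ t} := fun t => hRmeas measurableSet_Iic
  -- distribution of R
  have hF : ∀ t : ℝ, 0 ≤ t → (ℙ {ω | R ω ≤ t}).toReal = min t 1 := by
    intro t ht
    have hunion : {ω | R ω ≤ t} = ⋃ n ∈ (Finset.univ : Finset (Fin N)),
        (χ ⁻¹' {n} ∩ {ω | (ℙ (χ ⁻¹' {n} ∩ Γ ⁻¹' Iic (Γ ω))).toReal ≤ t - cum ν (n : ℕ)}) := by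
      ext ω
      constructor
      · intro h
        simp only [mem_setOf_eq] at h
        refine mem_iUnion₂.2 ⟨χ ω, Finset.mem_univ _, rfl, ?_⟩
        simp only [mem_setOf_eq]
        have h2 := hRfiber (χ ω) ω rfl
        linarith [h2 ▸ h]
      · intro h
        obtain ⟨n, -, hn1, hn2⟩ := mem_iUnion₂.1 h
        simp only [mem_setOf_eq] at hn2 ⊢
        have h2 := hRfiber n ω hn1
        rw [h2]
        linarith
    have hdisjf : (↑(Finset.univ : Finset (Fin N)) : Set (Fin N)).PairwiseDisjoint
        (fun n : Fin N => χ ⁻¹' {n} ∩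
          {ω | (ℙ (χ ⁻¹' {n} ∩ Γ ⁻¹' Iic (Γ ω))).toReal ≤ t - cum ν (n : ℕ)}) := by
      intro a _ b _ hab
      refine Set.disjoint_left.2 ?_
      rintro ω ⟨ha, -⟩ ⟨hb, -⟩
      exact hab (by rw [← show χ ω = a from ha, ← show χ ω = b from hb])
    have hmeasf : ∀ n ∈ (Finset.univ : Finset (Fin N)), MeasurableSet
        (χ ⁻¹' {n} ∩ {ω | (ℙ (χ ⁻¹' {n} ∩ Γ ⁻¹' Iic (Γ ω))).toReal ≤ t - cum ν (n : ℕ)}) := by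
      intro n _
      refine (hχ (measurableSet_singleton n)).inter ?_
      exact ((hgmono n).measurable.comp hΓmeas) measurableSet_Iic
    rw [hunion, measure_biUnion_finset hdisjf hmeasf,
      ENNReal.toReal_sum (fun _ _ => measure_ne_top _ _)]
    have hterm : ∀ n : Fin N,
        (ℙ (χ ⁻¹' {n} ∩ {ω | (ℙ (χ ⁻¹' {n} ∩ Γ ⁻¹' Iic (Γ ω))).toReal ≤ t - cum ν (n : ℕ)})).toReal
        = min t (cum ν ((n : ℕ) + 1)) - min t (cum ν (n : ℕ)) := by
      intro n
      rw [lemU ℙ Γ hΓmeas hΓatomless (hχ (measurableSet_singleton n)) (t - cum ν (n : ℕ))]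
      have hPA : (ℙ (χ ⁻¹' {n})).toReal = cum ν ((n : ℕ) + 1) - cum ν (n : ℕ) := by
        have := cum_step ν n
        rw [hνfiber] at this
        linarith
      rw [hPA]
      exact alg (cum_mono ν (Nat.le_succ (n : ℕ)))
    rw [Finset.sum_congr rfl (fun n _ => hterm n)]
    have htel : ∑ n : Fin N, (min t (cum ν ((n : ℕ) + 1)) - min t (cum ν (n : ℕ)))
        = min t (cum ν N) - min t (cum ν 0) := by
      rw [Fin.sum_univ_eq_sum_range (fun k => min t (cum ν (k + 1)) - min t (cum ν k)) N]
      exact Finset.sum_range_sub (fun k => min t (cum ν k)) N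
    rw [htel, cum_zero, cum_of_ge ν le_rfl, min_eq_right ht, sub_zero]
  -- the quantile function of μ
  set Q : ℝ → Fin N :=
    fun u => WithBot.unbotD 0 ((Finset.univ.filter fun m : Fin N => cum μ (m : ℕ) < u).max) with hQdef
  have hQ0or : ∀ u, Q u = 0 ∨ cum μ ((Q u : Fin N) : ℕ) < u := by
    intro u
    rcases hmax : (Finset.univ.filter fun m : Fin N => cum μ (m : ℕ) < u).max with _ | m₀
    · left
      rw [hQdef]
      simp only [hmax]
      rfl
    · right
      have hmem := Finset.mem_of_max hmax
      have hQm : Q u = m₀ := by rw [hQdef]; simp only [hmax]; rfl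
      rw [hQm]
      exact (Finset.mem_filter.1 hmem).2
  have hQmem : ∀ u (m : Fin N), cum μ (m : ℕ) < u → m ≤ Q u := by
    intro u m hm
    have hmem : m ∈ Finset.univ.filter fun m : Fin N => cum μ (m : ℕ) < u :=
      Finset.mem_filter.2 ⟨Finset.mem_univ _, hm⟩
    have hle := Finset.le_max hmem
    rcases hmax : (Finset.univ.filter fun m : Fin N => cum μ (m : ℕ) < u).max with _ | m₀
    · rw [hmax] at hle
      exact absurd hle (WithBot.not_coe_le_bot m)
    · rw [hmax] at hle
      have hQm : Q u = m₀ := by rw [hQdef]; simp only [hmax]; rfl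
      rw [hQm]
      exact WithBot.coe_le_coe.1 hle
  have hQle : ∀ u (m : Fin N), (∀ m' : Fin N, cum μ (m' : ℕ) < u → m' ≤ m) → Q u ≤ m := by
    intro u m hm
    rcases hQ0or u with h | h
    · rw [h]; exact Fin.zero_le m
    · exact hm _ h
  -- domination of cumulatives
  have hCC : ∀ k : ℕ, cum ν k ≤ cum μ k := by
    intro k
    rcases le_or_gt N k with hk | hk
    · rw [cum_of_ge ν hk, cum_of_ge μ hk]
    · have h2 : (μ {m : Fin N | (⟨k, hk⟩ : Fin N) ≤ m}).toReal
          ≤ (ν {m : Fin N | (⟨k, hk⟩ : Fin N) ≤ m}).toReal :=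
        ENNReal.toReal_mono (measure_ne_top _ _) (hdom ⟨k, hk⟩)
      rw [cum_tail μ ⟨k, hk⟩, cum_tail ν ⟨k, hk⟩] at h2
      simpa using by linarith
  -- the new map
  have hup : ∀ u (m : Fin N), u ≤ 1 → Q u = m → u ≤ cum μ ((m : ℕ) + 1) := by
    intro u m hu hQm
    rcases le_or_gt N ((m : ℕ) + 1) with hk | hk
    · rw [cum_of_ge μ hk]; exact hu
    · by_contra hc
      push_neg at hc
      have h1 := hQmem u ⟨(m : ℕ) + 1, hk⟩ hc
      rw [hQm] at h1
      have := Fin.le_def.1 h1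
      simp at this
  have hdown : ∀ u (m : Fin N), m ≠ 0 → Q u = m → cum μ (m : ℕ) < u := by
    intro u m hm hQm
    rcases hQ0or u with h | h
    · rw [hQm] at h; exact absurd h hm
    · rwa [hQm] at h
  have hpre0 : (fun ω => Q (R ω)) ⁻¹' {0} = {ω | R ω ≤ cum μ 1} := by
    ext ω
    simp only [mem_preimage, mem_singleton_iff, mem_setOf_eq]
    constructor
    · intro h
      have := hup (R ω) 0 (hR1 ω) h
      simpa using this
    · intro h
      refine le_antisymm ?_ (Fin.zero_le _)
      apply hQle
      intro m' hm'
      by_contra hc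
      have h1 : 1 ≤ (m' : ℕ) := by
        rcases Nat.eq_zero_or_pos (m' : ℕ) with h0 | h0
        · exact absurd (Fin.le_def.2 (by simp [h0])) hc
        · exact h0
      have := cum_mono μ h1
      linarith
  have hpreM : ∀ m : Fin N, m ≠ 0 → (fun ω => Q (R ω)) ⁻¹' {m}
      = {ω | R ω ≤ cum μ ((m : ℕ) + 1)} \ {ω | R ω ≤ cum μ (m : ℕ)} := by
    intro m hm
    ext ω
    simp only [mem_preimage, mem_singleton_iff, mem_diff, mem_setOf_eq, not_le]
    constructor
    · intro h
      exact ⟨hup _ _ (hR1 ω) h, hdown _ _ hm h⟩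
    · rintro ⟨h1, h2⟩
      refine le_antisymm (hQle _ _ ?_) (hQmem _ _ h2)
      intro m' hm'
      by_contra hc
      push_neg at hc
      have h3 : (m : ℕ) + 1 ≤ (m' : ℕ) := Fin.lt_def.1 hc
      have := cum_mono μ h3
      linarith
  have hQRmeas : Measurable fun ω => Q (R ω) := by
    apply measurable_to_countable'
    intro m
    by_cases hm : m = 0
    · rw [hm, hpre0]
      exact hRmeasSet _
    · rw [hpreM m hm]
      exact (hRmeasSet _).diff (hRmeasSet _)
  have hmap : ℙ.map (fun ω => Q (R ω)) = μ := by
    apply fin_meas_ext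
    intro m
    rw [Measure.map_apply hQRmeas (measurableSet_singleton m)]
    by_cases hm : m = 0
    · subst hm
      rw [hpre0]
      apply (ENNReal.toReal_eq_toReal_iff' (measure_ne_top _ _) (measure_ne_top _ _)).1
      have h1 := hF (cum μ 1) (cum_nonneg μ 1)
      rw [min_eq_left (cum_le_one μ 1)] at h1
      have h2 := cum_step μ 0
      simp only [Fin.val_zero] at h2
      rw [cum_zero μ] at h2
      rw [h1]
      linarith
    · rw [hpreM m hm]
      have hsub : {ω | R ω ≤ cum μ (m : ℕ)} ⊆ {ω | R ω ≤ cum μ ((m : ℕ) + 1)} :=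
        fun ω h => le_trans h (cum_mono μ (Nat.le_succ _))
      rw [measure_diff hsub (hRmeasSet _).nullMeasurableSet (measure_ne_top _ _)]
      apply (ENNReal.toReal_eq_toReal_iff'
        (ne_top_of_le_ne_top (measure_ne_top _ _) tsub_le_self) (measure_ne_top _ _)).1
      rw [ENNReal.toReal_sub_of_le (measure_mono hsub) (measure_ne_top _ _)]
      rw [hF _ (cum_nonneg μ _), hF _ (cum_nonneg μ _),
        min_eq_left (cum_le_one μ _), min_eq_left (cum_le_one μ _)]
      have := cum_step μ m
      linarith
  refine ⟨fun ω => Q (R ω), hQRmeas, hmap, ?_⟩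
  intro ω
  apply hQle
  intro m' hm'
  by_contra hc
  push_neg at hc
  have h1 : ((χ ω : ℕ) + 1) ≤ (m' : ℕ) := Fin.lt_def.1 hc
  have h2 : R ω ≤ cum μ (m' : ℕ) :=
    le_trans (hRle ω) (le_trans (hCC _) (cum_mono μ h1))
  exact absurd hm' (not_lt.2 h2)

end Stmt3Aux

open Stmt3Aux

/-- the stochastic-dominance constraint is saturated at the optimum:
the infimum of `E[Γ(ξ + γ(χ))]` over `χ ∈ T₊(μ)` (measurable `χ : Ω → 𝒮` whose law dominates
`μ` in first-order stochastic dominance) coincides with the infimum over `χ ∈ T(μ)`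
(law exactly `μ`), i.e. with `V_OT(μ)`. -/
theorem stmt3
    {Ω : Type*} [MeasurableSpace Ω] (ℙ : Measure Ω) [IsProbabilityMeasure ℙ]
    (N : ℕ) (hN : 1 ≤ N)
    (μ : Measure (Fin N)) [IsProbabilityMeasure μ]
    (Γ ξ : Ω → ℝ) (hΓmeas : Measurable Γ) (hξmeas : Measurable ξ)
    (hΓ2 : MemLp Γ 2 ℙ) (hξ2 : MemLp ξ 2 ℙ)
    (hΓpos : ∀ᵐ ω ∂ℙ, 0 < Γ ω)
    (hΓatomless : ∀ x : ℝ, ℙ (Γ ⁻¹' {x}) = 0)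
    (γ : Fin N → ℝ) (hγ : StrictMono γ) :
    sInf {v : ℝ | ∃ χ : Ω → Fin N, Measurable χ ∧
        (∀ n : Fin N, μ {m : Fin N | n ≤ m} ≤ (ℙ.map χ) {m : Fin N | n ≤ m}) ∧
        v = ∫ ω, Γ ω * (ξ ω + γ (χ ω)) ∂ℙ}
      = sInf {v : ℝ | ∃ χ : Ω → Fin N, Measurable χ ∧ ℙ.map χ = μ ∧
          v = ∫ ω, Γ ω * (ξ ω + γ (χ ω)) ∂ℙ} := by
  classical
  haveI : NeZero N := ⟨by omega⟩
  set A := {v : ℝ | ∃ χ : Ω → Fin N, Measurable χ ∧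
      (∀ n : Fin N, μ {m : Fin N | n ≤ m} ≤ (ℙ.map χ) {m : Fin N | n ≤ m}) ∧
      v = ∫ ω, Γ ω * (ξ ω + γ (χ ω)) ∂ℙ} with hA
  set B := {v : ℝ | ∃ χ : Ω → Fin N, Measurable χ ∧ ℙ.map χ = μ ∧
      v = ∫ ω, Γ ω * (ξ ω + γ (χ ω)) ∂ℙ} with hB
  -- integrability
  have hint : ∀ χ : Ω → Fin N, Measurable χ →
      Integrable (fun ω => Γ ω * (ξ ω + γ (χ ω))) ℙ := by
    intro χ hχ
    have h1 : Integrable (fun ω => Γ ω * ξ ω) ℙ := by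
      have := (hξ2.smul (r := 1) hΓ2)
      rw [← memLp_one_iff_integrable]
      exact this
    have h2 : Integrable (fun ω => Γ ω * γ (χ ω)) ℙ := by
      have hΓint : Integrable Γ ℙ := hΓ2.integrable (by norm_num)
      have hγχmeas : Measurable fun ω => γ (χ ω) :=
        (measurable_from_top (f := γ)).comp hχ
      have hbd : ∃ C, ∀ ω, ‖γ (χ ω)‖ ≤ C := by
        refine ⟨∑ n : Fin N, ‖γ n‖, fun ω => ?_⟩
        exact Finset.single_le_sum (f := fun n : Fin N => ‖γ n‖)
          (fun n _ => norm_nonneg _) (Finset.mem_univ (χ ω))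
      have := Integrable.bdd_mul hΓint hγχmeas.aestronglyMeasurable (Filter.Eventually.of_forall hbd.choose_spec)
      simpa [mul_comm] using this
    have := h1.add h2
    refine this.congr (Filter.Eventually.of_forall fun ω => ?_); simp [mul_add]
  -- monotonicity of the objective
  have hmono : ∀ χ₁ χ₂ : Ω → Fin N, Measurable χ₁ → Measurable χ₂ → (∀ ω, χ₁ ω ≤ χ₂ ω) →
      ∫ ω, Γ ω * (ξ ω + γ (χ₁ ω)) ∂ℙ ≤ ∫ ω, Γ ω * (ξ ω + γ (χ₂ ω)) ∂ℙ := by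
    intro χ₁ χ₂ h1 h2 hle
    apply integral_mono_ae (hint _ h1) (hint _ h2)
    filter_upwards [hΓpos] with ω hω
    have hγle : γ (χ₁ ω) ≤ γ (χ₂ ω) := hγ.monotone (hle ω)
    exact mul_le_mul_of_nonneg_left (by linarith) hω.le
  -- B ⊆ A
  have hBA : B ⊆ A := by
    rintro v ⟨χ, hχ, hmap, rfl⟩
    exact ⟨χ, hχ, fun n => by rw [hmap], rfl⟩
  -- B is nonempty
  have hBne : B.Nonempty := by
    have hlast : ∀ n : Fin N, n ≤ (⟨N - 1, by omega⟩ : Fin N) := by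
      intro n
      rw [Fin.le_def]
      have := n.isLt
      simp only []
      omega
    have hdomtop : ∀ n : Fin N, μ {m : Fin N | n ≤ m}
        ≤ (ℙ.map fun _ => (⟨N - 1, by omega⟩ : Fin N)) {m : Fin N | n ≤ m} := by
      intro n
      rw [Measure.map_apply measurable_const (show MeasurableSet {m : Fin N | n ≤ m} from trivial)]
      have : (fun _ : Ω => (⟨N - 1, by omega⟩ : Fin N)) ⁻¹' {m : Fin N | n ≤ m} = Set.univ := by
        ext ω
        simp [hlast n]
      rw [this, measure_univ]
      exact prob_le_one
    obtain ⟨χ₀, hχ₀m, hχ₀map, -⟩ := construct ℙ hN μ Γ hΓmeas hΓatomless _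
      measurable_const hdomtop
    exact ⟨_, χ₀, hχ₀m, hχ₀map, rfl⟩
  have hAne : A.Nonempty := hBne.mono hBA
  -- lower bound
  have hAbdd : BddBelow A := by
    refine ⟨∫ ω, Γ ω * (ξ ω + γ 0) ∂ℙ, ?_⟩
    rintro v ⟨χ, hχ, -, rfl⟩
    exact hmono (fun _ => 0) χ measurable_const hχ (fun ω => Fin.zero_le _)
  have hBbdd : BddBelow B := hAbdd.mono hBA
  apply le_antisymm
  · exact csInf_le_csInf hAbdd hBne hBA
  · apply le_csInf hAne
    rintro v ⟨χ, hχ, hdom, rfl⟩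
    obtain ⟨χ', hχ'm, hχ'map, hχ'le⟩ := construct ℙ hN μ Γ hΓmeas hΓatomless χ hχ hdom
    calc sInf B ≤ ∫ ω, Γ ω * (ξ ω + γ (χ' ω)) ∂ℙ :=
          csInf_le hBbdd ⟨χ', hχ'm, hχ'map, rfl⟩
      _ ≤ ∫ ω, Γ ω * (ξ ω + γ (χ ω)) ∂ℙ := hmono χ' χ hχ'm hχ hχ'le
end

section
/- Monge and Kantorovitch values coincide in the linear setting: let 𝒢 ⊆ 𝒜 be a sub-σ-algebra, H = (H¹, …, Hᴺ) a 𝒢-measurable random vector in L¹(ℙ; ℝᴺ), and suppose there exists a random variable U uniformly distributed on [0,1] and independent of 𝒢. Then inf over measurable χ : Ω → 𝒮 with χ♯ℙ = μ of E[H^χ] equals inf over P ∈ 𝒫_μ(𝒜) of E[Σ_{n=1}^N Hⁿ Pⁿ]. -/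
open MeasureTheory

open MeasurableSpace Set
open ProbabilityTheory (IndepFun indepFun_iff_map_prod_eq_prod_map_map)

lemma key_indep {Ω : Type*} (m𝒢 : MeasurableSpace Ω) {mΩ : MeasurableSpace Ω}
    (hm𝒢 : m𝒢 ≤ mΩ) (ℙ : Measure Ω) [IsProbabilityMeasure ℙ]
    (U : Ω → ℝ) (hUmeas : Measurable U)
    (hUlaw : ℙ.map U = MeasureTheory.volume.restrict (Set.Icc (0 : ℝ) 1))
    (hind : ProbabilityTheory.Indep (MeasurableSpace.comap U (borel ℝ)) m𝒢 ℙ)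
    (f g : Ω → ℝ) (hf : Measurable[m𝒢] f) (hfi : Integrable f ℙ)
    (hg : Measurable[m𝒢] g) (hg0 : ∀ ω, 0 ≤ g ω) (hg1 : ∀ ω, g ω ≤ 1) :
    ∫ ω, (if g ω ≤ U ω then f ω else 0) ∂ℙ = ∫ ω, f ω * (1 - g ω) ∂ℙ := by
  set unif : Measure ℝ := MeasureTheory.volume.restrict (Set.Icc (0 : ℝ) 1) with hunif
  have hunifprob : IsProbabilityMeasure unif := ⟨by simp [hunif, Real.volume_Icc]⟩
  set Y : Ω → ℝ × ℝ := fun ω => (f ω, g ω) with hY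
  have hYmeas𝒢 : Measurable[m𝒢] Y := hf.prodMk hg
  have hYmeas : Measurable Y := (hf.mono hm𝒢 le_rfl).prodMk (hg.mono hm𝒢 le_rfl)
  have hindUY : IndepFun U Y ℙ :=
    ProbabilityTheory.Kernel.indep_of_indep_of_le_right hind
      (MeasurableSpace.comap_le_iff_le_map.mpr (fun s hs => hYmeas𝒢 hs))
  have hmap : ℙ.map (fun ω => (U ω, Y ω)) = (ℙ.map U).prod (ℙ.map Y) :=
    (indepFun_iff_map_prod_eq_prod_map_map hUmeas.aemeasurable hYmeas.aemeasurable).mp hindUY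
  set ν : Measure (ℝ × ℝ) := ℙ.map Y with hν
  rw [hUlaw] at hmap
  have hνprob : IsProbabilityMeasure ν := Measure.isProbabilityMeasure_map hYmeas.aemeasurable
  set φ : ℝ × (ℝ × ℝ) → ℝ := fun z => if z.2.2 ≤ z.1 then z.2.1 else 0 with hφ
  have hφmeas : Measurable φ :=
    Measurable.ite (measurableSet_le (measurable_snd.comp measurable_snd) measurable_fst)
      (measurable_fst.comp measurable_snd) measurable_const
  -- integrability of φ on the product
  have h1 : Integrable (fun y : ℝ × ℝ => y.1) ν := by
    rw [hν]
    exact (integrable_map_measure measurable_fst.aestronglyMeasurable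
      hYmeas.aemeasurable).mpr hfi
  have h2 : Integrable (fun z : ℝ × (ℝ × ℝ) => z.2.1) (unif.prod ν) := by
    have hsnd : (unif.prod ν).map Prod.snd = ν := by
      rw [Measure.map_snd_prod]; simp
    have := (integrable_map_measure measurable_fst.aestronglyMeasurable
      measurable_snd.aemeasurable (μ := unif.prod ν)).mp (by rwa [hsnd])
    exact this
  have hφint : Integrable φ (unif.prod ν) := by
    refine h2.norm.mono' hφmeas.aestronglyMeasurable ?_
    filter_upwards with z
    rw [hφ]
    by_cases h : z.2.2 ≤ z.1 <;> simp [h]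
  have step1 : ∫ ω, (if g ω ≤ U ω then f ω else 0) ∂ℙ = ∫ z, φ z ∂(unif.prod ν) := by
    rw [← hmap, integral_map (hUmeas.prodMk hYmeas).aemeasurable
      hφmeas.aestronglyMeasurable]
  rw [step1, integral_prod_symm _ hφint]
  have hae : ∀ᵐ y ∂ν, y.2 ∈ Set.Icc (0:ℝ) 1 := by
    rw [hν]
    refine (ae_map_iff hYmeas.aemeasurable ?_).mpr ?_
    · exact measurable_snd (measurableSet_Icc)
    · exact Filter.Eventually.of_forall fun ω => ⟨hg0 ω, hg1 ω⟩
  have hinner : ∀ᵐ y ∂ν, (∫ u, φ (u, y) ∂unif) = y.1 * (1 - y.2) := by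
    filter_upwards [hae] with y hy
    have : (fun u => φ (u, y)) = (Set.Ici y.2).indicator (fun _ => y.1) := by
      funext u
      by_cases h : y.2 ≤ u <;> simp [hφ, h, Set.indicator_apply, Set.mem_Ici]
    rw [this, integral_indicator_const _ measurableSet_Ici]
    have hset : Set.Ici y.2 ∩ Set.Icc (0:ℝ) 1 = Set.Icc y.2 1 := by
      ext x
      simp only [Set.mem_inter_iff, Set.mem_Ici, Set.mem_Icc]
      constructor
      · rintro ⟨a, _, c⟩; exact ⟨a, c⟩
      · rintro ⟨a, b⟩; exact ⟨a, le_trans hy.1 a, b⟩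
    rw [hunif, measureReal_restrict_apply measurableSet_Ici, hset, measureReal_def, Real.volume_Icc,
      ENNReal.toReal_ofReal (sub_nonneg.mpr hy.2), smul_eq_mul, mul_comm]
  rw [integral_congr_ae hinner, hν,
    integral_map hYmeas.aemeasurable
      (by exact (measurable_fst.mul (measurable_const.sub measurable_snd)).aestronglyMeasurable)]

lemma construct {Ω : Type*} (m𝒢 : MeasurableSpace Ω) {mΩ : MeasurableSpace Ω}
    (hm𝒢 : m𝒢 ≤ mΩ) (ℙ : Measure Ω) [IsProbabilityMeasure ℙ]
    (N : ℕ) (hN : 1 ≤ N)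
    (H : Fin N → Ω → ℝ) (hHmeas : ∀ n, Measurable[m𝒢] (H n)) (hHint : ∀ n, Integrable (H n) ℙ)
    (U : Ω → ℝ) (hUmeas : Measurable U)
    (hUlaw : ℙ.map U = MeasureTheory.volume.restrict (Set.Icc (0 : ℝ) 1))
    (hind : ProbabilityTheory.Indep (MeasurableSpace.comap U (borel ℝ)) m𝒢 ℙ)
    (Q : Fin N → Ω → ℝ) (hQmeas : ∀ n, Measurable[m𝒢] (Q n))
    (hQ0 : ∀ ω n, 0 ≤ Q n ω) (hQsum : ∀ ω, ∑ n, Q n ω = 1) :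
    ∃ χ : Ω → Fin N, Measurable χ ∧
      (∀ n : Fin N, ℙ (χ ⁻¹' {n}) = ENNReal.ofReal (∫ ω, Q n ω ∂ℙ)) ∧
      ∫ ω, H (χ ω) ω ∂ℙ = ∫ ω, ∑ n, H n ω * Q n ω ∂ℙ := by
  have hN0 : 0 < N := hN
  -- extended weights and cumulative distribution function
  set Qe : ℕ → Ω → ℝ := fun i ω => if h : i < N then Q ⟨i, h⟩ ω else 0 with hQe
  set F : ℕ → Ω → ℝ := fun j ω => ∑ i ∈ Finset.range j, Qe i ω with hF
  have hQe0 : ∀ i ω, 0 ≤ Qe i ω := by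
    intro i ω; by_cases h : i < N
    · simpa [hQe, h] using hQ0 ω _
    · simp [hQe, h]
  have hQemeas : ∀ i, Measurable[m𝒢] (Qe i) := by
    intro i; by_cases h : i < N
    · simpa [hQe, h] using hQmeas ⟨i, h⟩
    · simpa [hQe, h] using @measurable_const ℝ Ω _ m𝒢 0
  have hFmeas𝒢 : ∀ j, Measurable[m𝒢] (F j) :=
    fun j => Finset.measurable_sum _ (fun i _ => hQemeas i)
  have hFmeas : ∀ j, Measurable (F j) := fun j => (hFmeas𝒢 j).mono hm𝒢 le_rfl
  have hFmono : ∀ ω, Monotone (fun j => F j ω) := by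
    intro ω j j' hj
    exact Finset.sum_le_sum_of_subset_of_nonneg (Finset.range_subset_range.mpr hj)
      (fun i _ _ => hQe0 i ω)
  have hFN : ∀ ω, F N ω = 1 := by
    intro ω
    have : F N ω = ∑ i : Fin N, Qe i ω := (Fin.sum_univ_eq_sum_range (fun i => Qe i ω) N).symm
    rw [this, ← hQsum ω]
    refine Finset.sum_congr rfl fun i _ => ?_
    simp [hQe, i.isLt]
  have hF0 : ∀ j ω, 0 ≤ F j ω := fun j ω => Finset.sum_nonneg fun i _ => hQe0 i ω
  have hFtop : ∀ j ω, N ≤ j → F j ω = 1 := by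
    intro j ω h
    rw [← hFN ω, hF]
    refine (Finset.sum_subset (Finset.range_subset_range.mpr h) ?_).symm
    intro i hi hni
    simp only [Finset.mem_range] at hi hni
    simp [hQe, not_lt.mp (by simpa using hni)]
  have hFle1 : ∀ j ω, F j ω ≤ 1 := by
    intro j ω
    rcases le_total j N with h | h
    · calc F j ω ≤ F N ω := hFmono ω h
        _ = 1 := hFN ω
    · exact le_of_eq (hFtop j ω h)
  have hsucc : ∀ (n : Fin N) ω, F (↑n + 1) ω - F ↑n ω = Q n ω := by
    intro n ω
    rw [hF]
    simp only [Finset.sum_range_succ]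
    have : Qe ↑n ω = Q n ω := by simp [hQe, n.isLt]
    rw [← this]; ring
  -- the transport map
  set k : Ω → ℕ := fun ω => Nat.findGreatest (fun j => F j ω ≤ U ω) (N - 1) with hk
  have hklt : ∀ ω, k ω < N := fun ω =>
    lt_of_le_of_lt (Nat.findGreatest_le _) (Nat.sub_lt hN0 one_pos)
  set χ : Ω → Fin N := fun ω => ⟨k ω, hklt ω⟩ with hχ
  have hkmeas : Measurable k :=
    measurable_findGreatest fun j _ => measurableSet_le (hFmeas j) hUmeas
  have hχmeas : Measurable χ := by
    have : χ = (fun j : ℕ => if h : j < N then (⟨j, h⟩ : Fin N) else ⟨0, hN0⟩) ∘ k := by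
      funext ω; simp [hχ, Function.comp, hklt ω]
    rw [this]
    exact measurable_from_top.comp hkmeas
  -- almost every ω has U ω ∈ [0, 1)
  have hgood : ∀ᵐ ω ∂ℙ, 0 ≤ U ω ∧ U ω < 1 := by
    have h1 : ℙ (U ⁻¹' Set.Ico (0:ℝ) 1) = 1 := by
      rw [← Measure.map_apply hUmeas measurableSet_Ico, hUlaw,
        Measure.restrict_apply measurableSet_Ico,
        Set.inter_eq_self_of_subset_left Set.Ico_subset_Icc_self, Real.volume_Ico]
      simp
    have h2 : ℙ (U ⁻¹' Set.Ico (0:ℝ) 1)ᶜ = 0 := by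
      rw [measure_compl (hUmeas measurableSet_Ico) (measure_ne_top _ _), h1,
        measure_univ, tsub_self]
    have hset : {ω | ¬(0 ≤ U ω ∧ U ω < 1)} = (U ⁻¹' Set.Ico (0:ℝ) 1)ᶜ := by
      ext ω; simp [Set.mem_Ico]
    rw [ae_iff, hset]
    exact h2
  -- key identity
  have claim : ∀ (n : Fin N) (f : Ω → ℝ), Measurable[m𝒢] f → Integrable f ℙ →
      ∫ ω, (if χ ω = n then f ω else 0) ∂ℙ = ∫ ω, f ω * Q n ω ∂ℙ := by
    intro n f hfmeas hfi
    have hpoint : ∀ᵐ ω ∂ℙ, (if χ ω = n then f ω else 0) =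
        (if F ↑n ω ≤ U ω then f ω else 0) - (if F (↑n + 1) ω ≤ U ω then f ω else 0) := by
      filter_upwards [hgood] with ω hω
      obtain ⟨h0, h1⟩ := hω
      have hdown : ∀ {a b : ℕ}, a ≤ b → F b ω ≤ U ω → F a ω ≤ U ω :=
        fun hab hb => le_trans (hFmono ω hab) hb
      have hiff : χ ω = n ↔ (F ↑n ω ≤ U ω ∧ ¬ F (↑n + 1) ω ≤ U ω) := by
        rw [hχ]
        rw [show ((⟨k ω, hklt ω⟩ : Fin N) = n) ↔ k ω = ↑n from Fin.ext_iff]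
        rw [hk, Nat.findGreatest_eq_iff]
        constructor
        · rintro ⟨hle, hne, hall⟩
          have hPn : F ↑n ω ≤ U ω := by
            rcases Nat.eq_zero_or_pos ↑n with h | h
            · rw [h]; simpa [hF] using h0
            · exact hne (Nat.pos_iff_ne_zero.mp h)
          refine ⟨hPn, ?_⟩
          by_cases h' : ↑n + 1 ≤ N - 1
          · exact hall (Nat.lt_succ_self _) h'
          · have hn1 : ↑n + 1 = N := by omega
            rw [hn1, hFN ω]
            linarith
        · rintro ⟨hP, hnP⟩
          refine ⟨by omega, fun _ => hP, fun m hm _ hPm => ?_⟩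
          exact hnP (hdown (by omega) hPm)
      by_cases hc : χ ω = n
      · obtain ⟨hP, hnP⟩ := hiff.mp hc
        rw [if_pos hc, if_pos hP, if_neg hnP, sub_zero]
      · rw [if_neg hc]
        by_cases hP1 : F (↑n + 1) ω ≤ U ω
        · rw [if_pos hP1, if_pos (hdown (Nat.le_succ _) hP1), sub_self]
        · have hPn : ¬ F ↑n ω ≤ U ω := fun hP => hc (hiff.mpr ⟨hP, hP1⟩)
          rw [if_neg hPn, if_neg hP1, sub_zero]
    have hint : ∀ j : ℕ, Integrable (fun ω => if F j ω ≤ U ω then f ω else 0) ℙ := by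
      intro j
      have : (fun ω => if F j ω ≤ U ω then f ω else 0) =
          Set.indicator {ω | F j ω ≤ U ω} f := by
        funext ω; rw [Set.indicator_apply]; simp [Set.mem_setOf_eq]
      rw [this]
      exact hfi.indicator (measurableSet_le (hFmeas j) hUmeas)
    rw [integral_congr_ae hpoint, integral_sub (hint _) (hint _),
      key_indep m𝒢 hm𝒢 ℙ U hUmeas hUlaw hind f (F ↑n) hfmeas hfi (hFmeas𝒢 _)
        (hF0 _) (hFle1 _),
      key_indep m𝒢 hm𝒢 ℙ U hUmeas hUlaw hind f (F (↑n + 1)) hfmeas hfi (hFmeas𝒢 _)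
        (hF0 _) (hFle1 _)]
    have hintm : ∀ j : ℕ, Integrable (fun ω => f ω * (1 - F j ω)) ℙ := by
      intro j
      have h1 : Integrable (fun ω => (1 - F j ω) * f ω) ℙ := by
        refine Integrable.bdd_mul (c := 1) hfi
          ((measurable_const.sub (hFmeas j))).aestronglyMeasurable (Filter.Eventually.of_forall fun ω => ?_)
        rw [Real.norm_eq_abs, abs_le]
        constructor <;> [linarith [hFle1 j ω]; linarith [hF0 j ω]]
      exact h1.congr (Filter.Eventually.of_forall fun ω => by ring)
    rw [← integral_sub (hintm _) (hintm _)]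
    refine integral_congr_ae (Filter.Eventually.of_forall fun ω => ?_)
    linear_combination f ω * hsucc n ω
  -- conclude
  refine ⟨χ, hχmeas, ?_, ?_⟩
  · intro n
    have h := claim n (fun _ => 1) measurable_const (integrable_const 1)
    have hl : ∫ ω, (if χ ω = n then (1:ℝ) else 0) ∂ℙ = (ℙ (χ ⁻¹' {n})).toReal := by
      rw [← measureReal_def, ← integral_indicator_one (hχmeas (measurableSet_singleton n))]
      refine integral_congr_ae (Filter.Eventually.of_forall fun ω => ?_)
      by_cases h : χ ω = n <;> simp [Set.indicator_apply, Set.mem_preimage, h]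
    rw [hl] at h
    simp only [one_mul] at h
    rw [← h, ENNReal.ofReal_toReal (measure_ne_top _ _)]
  · have hpt : ∀ ω, H (χ ω) ω = ∑ n, (if χ ω = n then H n ω else 0) := by
      intro ω
      rw [Finset.sum_ite_eq Finset.univ (χ ω) (fun n => H n ω)]
      simp
    have hintn : ∀ n : Fin N, Integrable (fun ω => if χ ω = n then H n ω else 0) ℙ := by
      intro n
      have : (fun ω => if χ ω = n then H n ω else 0) =
          Set.indicator (χ ⁻¹' {n}) (H n) := by
        funext ω; by_cases h : χ ω = n <;> simp [Set.indicator_apply, Set.mem_preimage, h]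
      rw [this]
      exact (hHint n).indicator (hχmeas (measurableSet_singleton n))
    have hintq : ∀ n : Fin N, Integrable (fun ω => H n ω * Q n ω) ℙ := by
      intro n
      have h1 : Integrable (fun ω => Q n ω * H n ω) ℙ := by
        refine Integrable.bdd_mul (c := 1) (hHint n)
          ((hQmeas n).mono hm𝒢 le_rfl).aestronglyMeasurable ?_
        filter_upwards with ω
        rw [Real.norm_eq_abs, abs_le]
        have hle : Q n ω ≤ 1 := by
          rw [← hQsum ω]
          exact Finset.single_le_sum (fun i _ => hQ0 ω i) (Finset.mem_univ n)
        constructor <;> [linarith [hQ0 ω n]; linarith]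
      exact h1.congr (Filter.Eventually.of_forall fun ω => by ring)
    calc ∫ ω, H (χ ω) ω ∂ℙ = ∫ ω, ∑ n, (if χ ω = n then H n ω else 0) ∂ℙ := by
          refine integral_congr_ae (Filter.Eventually.of_forall fun ω => ?_)
          exact hpt ω
      _ = ∑ n, ∫ ω, (if χ ω = n then H n ω else 0) ∂ℙ :=
          integral_finset_sum _ (fun n _ => hintn n)
      _ = ∑ n, ∫ ω, H n ω * Q n ω ∂ℙ :=
          Finset.sum_congr rfl fun n _ => claim n (H n) (hHmeas n) (hHint n)
      _ = ∫ ω, ∑ n, H n ω * Q n ω ∂ℙ := (integral_finset_sum _ (fun n _ => hintq n)).symm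

/-- Monge and Kantorovitch values coincide in the linear setting: for a
`𝒢`-measurable integrable `H : Ω → ℝᴺ`, if there exists a uniform random variable independent
of `𝒢`, then the infimum of `E[H^χ]` over measurable `χ` with law `μ` equals the infimum of
`E[Σ Hⁿ Pⁿ]` over `P ∈ 𝒫_μ(𝒜)`. -/
theorem stmt5
    {Ω : Type*} (m𝒢 : MeasurableSpace Ω) {mΩ : MeasurableSpace Ω} (hm𝒢 : m𝒢 ≤ mΩ)
    (ℙ : Measure Ω) [IsProbabilityMeasure ℙ]
    (N : ℕ) (hN : 1 ≤ N)
    (μ : Measure (Fin N)) [IsProbabilityMeasure μ]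
    (H : Fin N → Ω → ℝ)
    (hHmeas : ∀ n, Measurable[m𝒢] (H n))
    (hHint : ∀ n, Integrable (H n) ℙ)
    (hU : ∃ U : Ω → ℝ, Measurable U ∧
      ℙ.map U = MeasureTheory.volume.restrict (Set.Icc (0 : ℝ) 1) ∧
      ProbabilityTheory.Indep (MeasurableSpace.comap U (borel ℝ)) m𝒢 ℙ) :
    sInf {v : ℝ | ∃ χ : Ω → Fin N, Measurable χ ∧ ℙ.map χ = μ ∧
        v = ∫ ω, H (χ ω) ω ∂ℙ}
      = sInf {v : ℝ | ∃ P : Fin N → Ω → ℝ,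
          (∀ n, Measurable (P n)) ∧
          (∀ᵐ ω ∂ℙ, ∀ n, 0 ≤ P n ω) ∧
          (∀ᵐ ω ∂ℙ, ∑ n, P n ω = 1) ∧
          (∀ n, ∫ ω, P n ω ∂ℙ = (μ {n}).toReal) ∧
          v = ∫ ω, ∑ n, H n ω * P n ω ∂ℙ} := by
  classical
  obtain ⟨U, hUmeas, hUlaw, hind⟩ := hU
  have hN0 : 0 < N := hN
  set A : Set ℝ := {v : ℝ | ∃ χ : Ω → Fin N, Measurable χ ∧ ℙ.map χ = μ ∧
    v = ∫ ω, H (χ ω) ω ∂ℙ} with hA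
  set B : Set ℝ := {v : ℝ | ∃ P : Fin N → Ω → ℝ,
    (∀ n, Measurable (P n)) ∧ (∀ᵐ ω ∂ℙ, ∀ n, 0 ≤ P n ω) ∧
    (∀ᵐ ω ∂ℙ, ∑ n, P n ω = 1) ∧ (∀ n, ∫ ω, P n ω ∂ℙ = (μ {n}).toReal) ∧
    v = ∫ ω, ∑ n, H n ω * P n ω ∂ℙ} with hB
  -- A ⊆ B
  have hAB : A ⊆ B := by
    rintro v ⟨χ, hχm, hχlaw, rfl⟩
    refine ⟨fun n ω => if χ ω = n then 1 else 0, ?_, ?_, ?_, ?_, ?_⟩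
    · intro n
      exact Measurable.ite (hχm (measurableSet_singleton n)) measurable_const measurable_const
    · filter_upwards with ω n
      split <;> norm_num
    · filter_upwards with ω
      rw [Finset.sum_ite_eq Finset.univ (χ ω) (fun _ => (1:ℝ))]
      simp
    · intro n
      have hl : ∫ ω, (if χ ω = n then (1:ℝ) else 0) ∂ℙ = (ℙ (χ ⁻¹' {n})).toReal := by
        rw [← measureReal_def, ← integral_indicator_one (hχm (measurableSet_singleton n))]
        refine integral_congr_ae (Filter.Eventually.of_forall fun ω => ?_)
        by_cases h : χ ω = n <;> simp [Set.indicator_apply, Set.mem_preimage, h]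
      rw [hl, ← Measure.map_apply hχm (measurableSet_singleton n), hχlaw]
    · refine integral_congr_ae (Filter.Eventually.of_forall fun ω => ?_)
      simp only [mul_ite, mul_one, mul_zero]
      rw [Finset.sum_ite_eq Finset.univ (χ ω) (fun n => H n ω)]
      simp
  -- B is bounded below
  have hBbdd : BddBelow B := by
    refine ⟨-∑ n, ∫ ω, |H n ω| ∂ℙ, ?_⟩
    rintro v ⟨P, hPmeas, hP0, hPsum, hPint_eq, rfl⟩
    have hP1 : ∀ᵐ ω ∂ℙ, ∀ n, P n ω ≤ 1 := by
      filter_upwards [hP0, hPsum] with ω h0 hsum n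
      rw [← hsum]
      exact Finset.single_le_sum (fun i _ => h0 i) (Finset.mem_univ n)
    have hintP : ∀ n : Fin N, Integrable (fun ω => H n ω * P n ω) ℙ := by
      intro n
      have h1 : Integrable (fun ω => P n ω * H n ω) ℙ := by
        refine Integrable.bdd_mul (c := 1) (hHint n)
          (hPmeas n).aestronglyMeasurable ?_
        filter_upwards [hP0, hP1] with ω h0 h1
        rw [Real.norm_eq_abs, abs_le]
        exact ⟨by linarith [h0 n], h1 n⟩
      exact h1.congr (Filter.Eventually.of_forall fun ω => by ring)
    have hintSum : Integrable (fun ω => ∑ n, H n ω * P n ω) ℙ :=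
      integrable_finset_sum _ (fun n _ => hintP n)
    have hintAbs : Integrable (fun ω => -∑ n, |H n ω|) ℙ :=
      (integrable_finset_sum _ (fun n (_ : n ∈ Finset.univ) => (hHint n).abs)).neg
    have hle : (fun ω => -∑ n, |H n ω|) ≤ᵐ[ℙ] (fun ω => ∑ n, H n ω * P n ω) := by
      filter_upwards [hP0, hP1] with ω h0 h1
      have : ∀ n : Fin N, -|H n ω| ≤ H n ω * P n ω := by
        intro n
        have habs : |H n ω * P n ω| ≤ |H n ω| := by
          rw [abs_mul]
          calc |H n ω| * |P n ω| ≤ |H n ω| * 1 := by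
                refine mul_le_mul_of_nonneg_left ?_ (abs_nonneg _)
                rw [abs_le]; exact ⟨by linarith [h0 n], h1 n⟩
            _ = |H n ω| := mul_one _
        linarith [neg_abs_le (H n ω * P n ω), (abs_le.mp habs).1]
      calc -∑ n, |H n ω| = ∑ n, -|H n ω| := by rw [Finset.sum_neg_distrib]
        _ ≤ ∑ n, H n ω * P n ω := Finset.sum_le_sum (fun n _ => this n)
    have := integral_mono_ae hintAbs hintSum hle
    calc -∑ n, ∫ ω, |H n ω| ∂ℙ = ∫ ω, -∑ n, |H n ω| ∂ℙ := by
          rw [integral_neg, integral_finset_sum _ (fun n _ => (hHint n).abs)]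
      _ ≤ _ := this
  have hAbdd : BddBelow A := hBbdd.mono hAB
  -- law of a constructed χ from weights Q
  have hlaw_of : ∀ (χ : Ω → Fin N), Measurable χ →
      (∀ n : Fin N, ℙ (χ ⁻¹' {n}) = μ {n}) → ℙ.map χ = μ := by
    intro χ hχm h
    refine Measure.ext_of_singleton fun n => ?_
    rw [Measure.map_apply hχm (measurableSet_singleton n), h n]
  -- A is nonempty
  have hAne : A.Nonempty := by
    obtain ⟨χ, hχm, hχlaw, _⟩ := construct m𝒢 hm𝒢 ℙ N hN H hHmeas hHint U hUmeas hUlaw hind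
      (fun n _ => (μ {n}).toReal)
      (fun n => measurable_const) (fun ω n => ENNReal.toReal_nonneg)
      (fun ω => by
        rw [← ENNReal.toReal_sum (fun n _ => measure_ne_top μ {n})]
        have : ∑ n : Fin N, μ {n} = μ Set.univ := by
          have := sum_measure_preimage_singleton (μ := μ) Finset.univ
            (f := id) (fun y _ => measurableSet_singleton y)
          simpa using this
        rw [this, measure_univ, ENNReal.toReal_one])
    refine ⟨∫ ω, H (χ ω) ω ∂ℙ, χ, hχm, ?_, rfl⟩
    refine hlaw_of χ hχm fun n => ?_
    rw [hχlaw n]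
    rw [integral_const]
    simp only [probReal_univ, smul_eq_mul, one_mul]
    exact ENNReal.ofReal_toReal (measure_ne_top μ {n})
  have hBne : B.Nonempty := hAne.mono hAB
  -- Kantorovich value ≥ Monge value: conditional expectation + construction
  have hmain : ∀ v ∈ B, sInf A ≤ v := by
    rintro v ⟨P, hPmeas, hP0, hPsum, hPint_eq, rfl⟩
    have hP1 : ∀ᵐ ω ∂ℙ, ∀ n, P n ω ≤ 1 := by
      filter_upwards [hP0, hPsum] with ω h0 hsum n
      rw [← hsum]
      exact Finset.single_le_sum (fun i _ => h0 i) (Finset.mem_univ n)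
    have hPint : ∀ n, Integrable (P n) ℙ := by
      intro n
      refine (integrable_const (1:ℝ)).mono' (hPmeas n).aestronglyMeasurable ?_
      filter_upwards [hP0, hP1] with ω h0 h1
      rw [Real.norm_eq_abs, abs_le]
      exact ⟨by linarith [h0 n], h1 n⟩
    set Qc : Fin N → Ω → ℝ := fun n => ℙ[P n|m𝒢] with hQc
    have hQc_sm : ∀ n, StronglyMeasurable[m𝒢] (Qc n) := fun n => stronglyMeasurable_condExp
    have hQc0 : ∀ n, 0 ≤ᵐ[ℙ] Qc n := by
      intro n
      refine condExp_nonneg ?_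
      filter_upwards [hP0] with ω h0 using h0 n
    have hQcsum : ∀ᵐ ω ∂ℙ, ∑ n, Qc n ω = 1 := by
      have hsum_eq : (fun ω => ∑ n, P n ω) = ∑ n, P n := by
        funext ω; simp [Finset.sum_apply]
      have h1 : ℙ[fun ω => ∑ n, P n ω|m𝒢] =ᵐ[ℙ] fun ω => ∑ n, Qc n ω := by
        rw [hsum_eq]
        refine (condExp_finsetSum (fun n (_ : n ∈ Finset.univ) => hPint n) m𝒢).trans ?_
        filter_upwards with ω
        simp [Finset.sum_apply]
        rfl
      have h2 : ℙ[fun ω => ∑ n, P n ω|m𝒢] =ᵐ[ℙ] ℙ[fun _ => (1:ℝ)|m𝒢] :=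
        condExp_congr_ae hPsum
      have h3 : ℙ[fun _ => (1:ℝ)|m𝒢] = fun _ => (1:ℝ) := condExp_const hm𝒢 1
      filter_upwards [h1.symm.trans (h2.trans (by rw [h3]))] with ω hω using hω
    set G : Set Ω := {ω | (∀ n, 0 ≤ Qc n ω) ∧ ∑ n, Qc n ω = 1} with hG
    have hGmeas𝒢 : MeasurableSet[m𝒢] G := by
      rw [hG, Set.setOf_and]
      refine MeasurableSet.inter ?_ ?_
      · rw [Set.setOf_forall]
        exact MeasurableSet.iInter fun n =>
          measurableSet_le measurable_const (hQc_sm n).measurable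
      · exact (Finset.measurable_sum Finset.univ
          (fun n (_ : n ∈ Finset.univ) => (hQc_sm n).measurable)) (measurableSet_singleton 1)
    have hG_ae : ∀ᵐ ω ∂ℙ, ω ∈ G := by
      have h0 : ∀ᵐ ω ∂ℙ, ∀ n, 0 ≤ Qc n ω := ae_all_iff.mpr fun n => hQc0 n
      filter_upwards [h0, hQcsum] with ω h0 hs using ⟨h0, hs⟩
    set Q : Fin N → Ω → ℝ := fun n ω =>
      if ω ∈ G then Qc n ω else (if n = (⟨0, hN0⟩ : Fin N) then 1 else 0) with hQ
    have hQmeas𝒢 : ∀ n, Measurable[m𝒢] (Q n) := fun n =>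
      Measurable.ite hGmeas𝒢 (hQc_sm n).measurable measurable_const
    have hQ0 : ∀ ω n, 0 ≤ Q n ω := by
      intro ω n
      rw [hQ]
      by_cases h : ω ∈ G
      · simpa [h] using (h.1 n)
      · simp only [h, if_false]
        split <;> norm_num
    have hQsum : ∀ ω, ∑ n, Q n ω = 1 := by
      intro ω
      rw [hQ]
      by_cases h : ω ∈ G
      · simpa [h] using h.2
      · simp only [h, if_false]
        rw [Finset.sum_ite_eq' Finset.univ (⟨0, hN0⟩ : Fin N) (fun _ => (1:ℝ))]
        simp
    have hQae : ∀ n, Q n =ᵐ[ℙ] Qc n := by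
      intro n
      filter_upwards [hG_ae] with ω h
      rw [hQ]; simp [h]
    obtain ⟨χ, hχm, hχlaw, hχval⟩ := construct m𝒢 hm𝒢 ℙ N hN H hHmeas hHint U hUmeas hUlaw hind
      Q hQmeas𝒢 hQ0 hQsum
    have hintQ : ∀ n, ∫ ω, Q n ω ∂ℙ = (μ {n}).toReal := by
      intro n
      rw [integral_congr_ae (hQae n), hQc, integral_condExp hm𝒢, hPint_eq n]
    -- the value of the constructed χ equals v
    have hHP : ∀ n : Fin N, Integrable (fun ω => H n ω * P n ω) ℙ := by
      intro n
      have h1 : Integrable (fun ω => P n ω * H n ω) ℙ := by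
        refine Integrable.bdd_mul (c := 1) (hHint n) (hPmeas n).aestronglyMeasurable ?_
        filter_upwards [hP0, hP1] with ω h0 h1
        rw [Real.norm_eq_abs, abs_le]
        exact ⟨by linarith [h0 n], h1 n⟩
      exact h1.congr (Filter.Eventually.of_forall fun ω => by ring)
    have hHQ : ∀ n : Fin N, Integrable (fun ω => H n ω * Q n ω) ℙ := by
      intro n
      have hle : Q n ≤ fun ω => (1:ℝ) := by
        intro ω
        calc Q n ω ≤ ∑ m, Q m ω := Finset.single_le_sum (fun i _ => hQ0 ω i) (Finset.mem_univ n)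
          _ = 1 := hQsum ω
      have h1 : Integrable (fun ω => Q n ω * H n ω) ℙ := by
        refine Integrable.bdd_mul (c := 1) (hHint n)
          ((hQmeas𝒢 n).mono hm𝒢 le_rfl).aestronglyMeasurable ?_
        filter_upwards with ω
        rw [Real.norm_eq_abs, abs_le]
        exact ⟨by linarith [hQ0 ω n], hle ω⟩
      exact h1.congr (Filter.Eventually.of_forall fun ω => by ring)
    have hval : ∫ ω, H (χ ω) ω ∂ℙ = ∫ ω, ∑ n, H n ω * P n ω ∂ℙ := by
      rw [hχval, integral_finset_sum _ (fun n _ => hHQ n),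
        integral_finset_sum _ (fun n _ => hHP n)]
      refine Finset.sum_congr rfl fun n _ => ?_
      have e1 : ∫ ω, H n ω * Q n ω ∂ℙ = ∫ ω, H n ω * Qc n ω ∂ℙ :=
        integral_congr_ae (by filter_upwards [hQae n] with ω h; rw [h])
      have e2 : ℙ[fun ω => H n ω * P n ω|m𝒢] =ᵐ[ℙ] fun ω => H n ω * Qc n ω := by
        have := condExp_mul_of_stronglyMeasurable_left (μ := ℙ) (m := m𝒢)
          (hHmeas n).stronglyMeasurable
          (by exact hHP n) (hPint n)
        filter_upwards [this] with ω h
        exact h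
      rw [e1, ← integral_congr_ae e2, integral_condExp hm𝒢]
    -- membership in A
    have hmem : (∫ ω, ∑ n, H n ω * P n ω ∂ℙ) ∈ A := by
      refine ⟨χ, hχm, ?_, hval.symm⟩
      refine hlaw_of χ hχm fun n => ?_
      rw [hχlaw n, hintQ n, ENNReal.ofReal_toReal (measure_ne_top μ {n})]
    exact csInf_le hAbdd hmem
  exact le_antisymm (le_csInf hBne hmain) (csInf_le_csInf hBbdd hAne hAB)
end

section
/- Martingale domination lemma: let (Ω, 𝒜, (ℱ_t)_{t∈[0,T]}, ℙ) be a filtered probability space, ν, μ probability measures on 𝒮 with ν ⪰ μ, and let Q¹, …, Q^{N+1} be continuous martingales on [0,T] such that ℙ-a.s., for all t ∈ [0,T], Q¹_t = 1, Q^{N+1}_t = 0, Qⁿ_t ≥ Q^{n+1}_t for 1 ≤ n ≤ N, and Qⁿ_0 = F_ν(n) for 1 ≤ n ≤ N. Then there exist continuous martingales Q̂¹, …, Q̂^{N+1} on [0,T] such that ℙ-a.s., for all t ∈ [0,T]: Q̂^{N+1}_t = 0, Q̂ⁿ_t ≥ Q̂^{n+1}_t for 1 ≤ n ≤ N, Q̂ⁿ_t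 ≤ Qⁿ_t for all n, and Q̂ⁿ_0 = F_μ(n) for 1 ≤ n ≤ N. In particular the ℱ_T-measurable vector (Q̂ⁿ_T)_{n=1}^{N+1} is ℙ-a.s. non-increasing in n with first component 1 and last component 0, dominated componentwise by (Qⁿ_T), and satisfies E[Q̂ⁿ_T] = F_μ(n) for all 1 ≤ n ≤ N. -/
open MeasureTheory

private lemma min_sub_mono7 {a b x y : ℝ} (hab : a ≤ b) (hyx : y ≤ x) :
    min a x - min a y ≤ min b x - min b y := by
  simp only [min_def]; split_ifs <;> linarith

private lemma min_sub_le7 {a x y : ℝ} (hyx : y ≤ x) :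
    min a x - min a y ≤ x - y := by
  simp only [min_def]; split_ifs <;> linarith

private lemma min_sub_nonneg7 {a x y : ℝ} (h : y ≤ x) :
    0 ≤ min a x - min a y := by
  simp only [min_def]; split_ifs <;> linarith

private lemma telescope7 (a b : ℕ) (g : ℕ → ℝ) (hab : a ≤ b) :
    ∑ j ∈ Finset.Icc a b, (g j - g (j + 1)) = g a - g (b + 1) := by
  rw [← Finset.Ico_add_one_right_eq_Icc, Finset.sum_Ico_eq_sum_range]
  have h : ∀ i, g (a + i) - g (a + i + 1)
      = (fun i => g (a + i)) i - (fun i => g (a + i)) (i + 1) := by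
    intro i; rw [Nat.add_assoc]
  simp_rw [h, Finset.sum_range_sub' (fun i => g (a + i))]
  congr 2
  omega

/-- martingale domination lemma. Given `ν ⪰ μ` (first-order stochastic dominance,
`F_ν(n) = Σ_{j=n}^N pνʲ ≥ F_μ(n)` for all `n`) and continuous martingales `Q¹, …, Q^{N+1}` on
`[0,T]` with `Q¹ = 1`, `Q^{N+1} = 0`, `Qⁿ ≥ Q^{n+1}` and `Qⁿ_0 = F_ν(n)`, there exist continuous
martingales `Q̂¹, …, Q̂^{N+1}` on `[0,T]` with `Q̂^{N+1} = 0`, `Q̂ⁿ ≥ Q̂^{n+1}`, `Q̂ⁿ ≤ Qⁿ`,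
`Q̂ⁿ_0 = F_μ(n)`; in particular `Q̂¹_T = 1` a.s. and `E[Q̂ⁿ_T] = F_μ(n)` for `1 ≤ n ≤ N`. -/
theorem stmt7
    {Ω : Type*} {mΩ : MeasurableSpace Ω} (ℙ : Measure Ω) [IsProbabilityMeasure ℙ]
    (ℱ : Filtration ℝ mΩ) (T : ℝ) (hT : 0 < T)
    (N : ℕ) (hN : 1 ≤ N)
    (pν pμ : ℕ → ℝ)
    (hpν0 : ∀ n ∈ Finset.Icc 1 N, 0 ≤ pν n) (hpν1 : ∑ n ∈ Finset.Icc 1 N, pν n = 1)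
    (hpμ0 : ∀ n ∈ Finset.Icc 1 N, 0 ≤ pμ n) (hpμ1 : ∑ n ∈ Finset.Icc 1 N, pμ n = 1)
    (hdom : ∀ n ∈ Finset.Icc 1 N,
      ∑ j ∈ Finset.Icc n N, pμ j ≤ ∑ j ∈ Finset.Icc n N, pν j)
    (Q : ℕ → ℝ → Ω → ℝ)
    (hQmart : ∀ n ∈ Finset.Icc 1 (N + 1), Martingale (Q n) ℱ ℙ)
    (hQcont : ∀ n ∈ Finset.Icc 1 (N + 1),
      ∀ᵐ ω ∂ℙ, ContinuousOn (fun t => Q n t ω) (Set.Icc 0 T))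
    (hQbounds : ∀ᵐ ω ∂ℙ, ∀ t ∈ Set.Icc 0 T,
      Q 1 t ω = 1 ∧ Q (N + 1) t ω = 0 ∧
        ∀ n ∈ Finset.Icc 1 N, Q (n + 1) t ω ≤ Q n t ω)
    (hQinit : ∀ n ∈ Finset.Icc 1 N, ∀ᵐ ω ∂ℙ, Q n 0 ω = ∑ j ∈ Finset.Icc n N, pν j) :
    ∃ Qh : ℕ → ℝ → Ω → ℝ,
      (∀ n ∈ Finset.Icc 1 (N + 1), Martingale (Qh n) ℱ ℙ) ∧
      (∀ n ∈ Finset.Icc 1 (N + 1),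
        ∀ᵐ ω ∂ℙ, ContinuousOn (fun t => Qh n t ω) (Set.Icc 0 T)) ∧
      (∀ᵐ ω ∂ℙ, ∀ t ∈ Set.Icc 0 T,
        Qh (N + 1) t ω = 0 ∧
        (∀ n ∈ Finset.Icc 1 N, Qh (n + 1) t ω ≤ Qh n t ω) ∧
        (∀ n ∈ Finset.Icc 1 (N + 1), Qh n t ω ≤ Q n t ω)) ∧
      (∀ n ∈ Finset.Icc 1 N, ∀ᵐ ω ∂ℙ, Qh n 0 ω = ∑ j ∈ Finset.Icc n N, pμ j) ∧
      (∀ᵐ ω ∂ℙ, Qh 1 T ω = 1) ∧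
      (∀ n ∈ Finset.Icc 1 N, ∫ ω, Qh n T ω ∂ℙ = ∑ j ∈ Finset.Icc n N, pμ j) := by
  classical
  -- tail sums
  set Tν : ℕ → ℝ := fun n => ∑ j ∈ Finset.Icc n N, pν j with hTνdef
  set Tμ : ℕ → ℝ := fun n => ∑ j ∈ Finset.Icc n N, pμ j with hTμdef
  have hTνanti : ∀ {m m' : ℕ}, 1 ≤ m → m ≤ m' → Tν m' ≤ Tν m := by
    intro m m' h1 h2
    apply Finset.sum_le_sum_of_subset_of_nonneg (Finset.Icc_subset_Icc h2 le_rfl)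
    intro j hj _
    have := Finset.mem_Icc.mp hj
    exact hpν0 j (Finset.mem_Icc.mpr ⟨le_trans h1 this.1, this.2⟩)
  have hTμanti : ∀ {m m' : ℕ}, 1 ≤ m → m ≤ m' → Tμ m' ≤ Tμ m := by
    intro m m' h1 h2
    apply Finset.sum_le_sum_of_subset_of_nonneg (Finset.Icc_subset_Icc h2 le_rfl)
    intro j hj _
    have := Finset.mem_Icc.mp hj
    exact hpμ0 j (Finset.mem_Icc.mpr ⟨le_trans h1 this.1, this.2⟩)
  have hTνnn : ∀ {m : ℕ}, 1 ≤ m → 0 ≤ Tν m := by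
    intro m h1
    apply Finset.sum_nonneg
    intro j hj
    have := Finset.mem_Icc.mp hj
    exact hpν0 j (Finset.mem_Icc.mpr ⟨le_trans h1 this.1, this.2⟩)
  have hTμnn : ∀ {m : ℕ}, 1 ≤ m → 0 ≤ Tμ m := by
    intro m h1
    apply Finset.sum_nonneg
    intro j hj
    have := Finset.mem_Icc.mp hj
    exact hpμ0 j (Finset.mem_Icc.mpr ⟨le_trans h1 this.1, this.2⟩)
  have hTνtop : Tν (N + 1) = 0 := by
    show (∑ j ∈ Finset.Icc (N + 1) N, pν j) = 0
    rw [Finset.Icc_eq_empty (by omega), Finset.sum_empty]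
  have hTμtop : Tμ (N + 1) = 0 := by
    show (∑ j ∈ Finset.Icc (N + 1) N, pμ j) = 0
    rw [Finset.Icc_eq_empty (by omega), Finset.sum_empty]
  have hTν1 : Tν 1 = 1 := hpν1
  have hTμ1 : Tμ 1 = 1 := hpμ1
  have hcross : ∀ {m n : ℕ}, 1 ≤ m → m ≤ n → n ≤ N + 1 → Tμ n ≤ Tν m := by
    intro m n h1 h2 h3
    rcases Nat.lt_or_ge n (N + 1) with h | h
    · exact le_trans (hdom n (Finset.mem_Icc.mpr ⟨le_trans h1 h2, by omega⟩)) (hTνanti h1 h2)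
    · have hn : n = N + 1 := by omega
      rw [hn, hTμtop]
      exact hTνnn h1
  have hsucc : ∀ j ∈ Finset.Icc 1 N, Tν j = pν j + Tν (j + 1) := by
    intro j hj
    have hj' := Finset.mem_Icc.mp hj
    show (∑ k ∈ Finset.Icc j N, pν k) = pν j + ∑ k ∈ Finset.Icc (j + 1) N, pν k
    have he : Finset.Icc j N = insert j (Finset.Icc (j + 1) N) := by
      ext k; simp only [Finset.mem_Icc, Finset.mem_insert]; omega
    rw [he, Finset.sum_insert (by simp)]
  -- coupling coefficients
  set d : ℕ → ℕ → ℝ := fun n j => min (Tμ n) (Tν j) - min (Tμ n) (Tν (j + 1)) with hddef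
  set c : ℕ → ℕ → ℝ := fun n j => if pν j = 0 then 0 else d n j / pν j with hcdef
  have hd_nonneg : ∀ n j, 1 ≤ j → 0 ≤ d n j := by
    intro n j hj
    exact min_sub_nonneg7 (hTνanti hj (by omega))
  have hd_le : ∀ n j, j ∈ Finset.Icc 1 N → d n j ≤ pν j := by
    intro n j hj
    have hj1 := (Finset.mem_Icc.mp hj).1
    calc d n j ≤ Tν j - Tν (j + 1) := min_sub_le7 (hTνanti hj1 (by omega))
      _ = pν j := by rw [hsucc j hj]; ring
  have hd_zero : ∀ n j, 1 ≤ j → j + 1 ≤ n → n ≤ N + 1 → d n j = 0 := by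
    intro n j hj hjn hn
    have h1 : Tμ n ≤ Tν (j + 1) := hcross (by omega) hjn hn
    have h2 : Tμ n ≤ Tν j := le_trans h1 (hTνanti (by omega) (by omega))
    show min (Tμ n) (Tν j) - min (Tμ n) (Tν (j + 1)) = 0
    rw [min_eq_left h2, min_eq_left h1, sub_self]
  have hc_mul : ∀ n j, j ∈ Finset.Icc 1 N → c n j * pν j = d n j := by
    intro n j hj
    by_cases h : pν j = 0
    · have h0 : d n j = 0 :=
        le_antisymm (h ▸ hd_le n j hj) (hd_nonneg n j (Finset.mem_Icc.mp hj).1)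
      simp [hcdef, h, h0]
    · simp only [hcdef, if_neg h]
      field_simp
  have hc_nonneg : ∀ n j, j ∈ Finset.Icc 1 N → 0 ≤ c n j := by
    intro n j hj
    by_cases h : pν j = 0
    · simp [hcdef, h]
    · simp only [hcdef, if_neg h]
      exact div_nonneg (hd_nonneg n j (Finset.mem_Icc.mp hj).1) (hpν0 j hj)
  have hc_le_one : ∀ n j, j ∈ Finset.Icc 1 N → c n j ≤ 1 := by
    intro n j hj
    by_cases h : pν j = 0
    · simp [hcdef, h]
    · simp only [hcdef, if_neg h]
      have hpos : 0 < pν j := lt_of_le_of_ne (hpν0 j hj) (Ne.symm h)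
      rw [div_le_one hpos]
      exact hd_le n j hj
  have hc_mono : ∀ n j, 1 ≤ n → j ∈ Finset.Icc 1 N → c (n + 1) j ≤ c n j := by
    intro n j hn hj
    by_cases h : pν j = 0
    · simp [hcdef, h]
    · simp only [hcdef, if_neg h]
      have hpos : 0 < pν j := lt_of_le_of_ne (hpν0 j hj) (Ne.symm h)
      have hj1 := (Finset.mem_Icc.mp hj).1
      have hdd : d (n + 1) j ≤ d n j :=
        min_sub_mono7 (hTμanti hn (by omega)) (hTνanti hj1 (by omega))
      gcongr
  have hc_zero : ∀ n j, 1 ≤ j → j + 1 ≤ n → n ≤ N + 1 → c n j = 0 := by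
    intro n j hj hjn hn
    by_cases h : pν j = 0
    · simp [hcdef, h]
    · simp only [hcdef, if_neg h]
      rw [hd_zero n j hj hjn hn, zero_div]
  have hc_sum : ∀ n, 1 ≤ n → n ≤ N + 1 → ∑ j ∈ Finset.Icc 1 N, c n j * pν j = Tμ n := by
    intro n h1 h2
    rw [Finset.sum_congr rfl (fun j hj => hc_mul n j hj)]
    have htel := telescope7 1 N (fun j => min (Tμ n) (Tν j)) hN
    have hshape : ∀ j, d n j
        = (fun j => min (Tμ n) (Tν j)) j - (fun j => min (Tμ n) (Tν j)) (j + 1) := fun j => rfl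
    rw [show (∑ j ∈ Finset.Icc 1 N, d n j)
        = ∑ j ∈ Finset.Icc 1 N, ((fun j => min (Tμ n) (Tν j)) j
          - (fun j => min (Tμ n) (Tν j)) (j + 1)) from Finset.sum_congr rfl fun j _ => hshape j,
      htel]
    have ha : Tμ n ≤ 1 := hTμ1 ▸ hTμanti le_rfl h1
    have hb : (0:ℝ) ≤ Tμ n := hTμnn h1
    rw [hTν1, hTνtop, min_eq_left ha, min_eq_right hb, sub_zero]
  -- the new martingales
  set Qh : ℕ → ℝ → Ω → ℝ := fun n => ∑ j ∈ Finset.Icc 1 N, c n j • (Q j - Q (j + 1)) with hQhdef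
  have hQh_apply : ∀ n t ω,
      Qh n t ω = ∑ j ∈ Finset.Icc 1 N, c n j * (Q j t ω - Q (j + 1) t ω) := by
    intro n t ω
    show (∑ j ∈ Finset.Icc 1 N, c n j • (Q j - Q (j + 1))) t ω = _
    rw [Finset.sum_apply, Finset.sum_apply]
    simp [smul_eq_mul]
  have hmem : ∀ j ∈ Finset.Icc 1 N,
      j ∈ Finset.Icc 1 (N + 1) ∧ j + 1 ∈ Finset.Icc 1 (N + 1) := by
    intro j hj
    have := Finset.mem_Icc.mp hj
    exact ⟨Finset.mem_Icc.mpr ⟨this.1, by omega⟩, Finset.mem_Icc.mpr ⟨by omega, by omega⟩⟩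
  have hQhmart : ∀ n ∈ Finset.Icc 1 (N + 1), Martingale (Qh n) ℱ ℙ := by
    intro n _
    apply Finset.sum_induction _ (fun g => Martingale g ℱ ℙ)
      (fun a b ha hb => ha.add hb) (martingale_zero _ _ _)
    intro j hj
    exact Martingale.smul (c n j)
      ((hQmart j (hmem j hj).1).sub (hQmart (j + 1) (hmem j hj).2))
  -- a.e. versions of hypotheses
  have hQcont' : ∀ᵐ ω ∂ℙ, ∀ j, j ∈ Finset.Icc 1 (N + 1) →
      ContinuousOn (fun t => Q j t ω) (Set.Icc 0 T) := by
    rw [MeasureTheory.ae_all_iff]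
    intro j
    by_cases h : j ∈ Finset.Icc 1 (N + 1)
    · filter_upwards [hQcont j h] with ω hω _ using hω
    · filter_upwards with ω hj using absurd hj h
  have hQinit' : ∀ᵐ ω ∂ℙ, ∀ j, j ∈ Finset.Icc 1 N → Q j 0 ω = Tν j := by
    rw [MeasureTheory.ae_all_iff]
    intro j
    by_cases h : j ∈ Finset.Icc 1 N
    · filter_upwards [hQinit j h] with ω hω _ using hω
    · filter_upwards with ω hj using absurd hj h
  have hQhcont : ∀ n ∈ Finset.Icc 1 (N + 1),
      ∀ᵐ ω ∂ℙ, ContinuousOn (fun t => Qh n t ω) (Set.Icc 0 T) := by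
    intro n _
    filter_upwards [hQcont'] with ω hω
    have he : (fun t => Qh n t ω)
        = fun t => ∑ j ∈ Finset.Icc 1 N, c n j * (Q j t ω - Q (j + 1) t ω) :=
      funext fun t => hQh_apply n t ω
    rw [he]
    apply continuousOn_finset_sum
    intro j hj
    exact continuousOn_const.mul ((hω j (hmem j hj).1).sub (hω (j + 1) (hmem j hj).2))
  -- main a.e. bounds
  have hae_main : ∀ᵐ ω ∂ℙ, ∀ t ∈ Set.Icc 0 T,
      Qh (N + 1) t ω = 0 ∧
      (∀ n ∈ Finset.Icc 1 N, Qh (n + 1) t ω ≤ Qh n t ω) ∧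
      (∀ n ∈ Finset.Icc 1 (N + 1), Qh n t ω ≤ Q n t ω) := by
    filter_upwards [hQbounds] with ω hω
    intro t ht
    obtain ⟨h1, hN1, hmono⟩ := hω t ht
    refine ⟨?_, ?_, ?_⟩
    · rw [hQh_apply]
      apply Finset.sum_eq_zero
      intro j hj
      have hj' := Finset.mem_Icc.mp hj
      rw [hc_zero (N + 1) j hj'.1 (by omega) le_rfl, zero_mul]
    · intro n hn
      have hn' := Finset.mem_Icc.mp hn
      rw [hQh_apply, hQh_apply]
      apply Finset.sum_le_sum
      intro j hj
      have hdiff : 0 ≤ Q j t ω - Q (j + 1) t ω := sub_nonneg.mpr (hmono j hj)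
      exact mul_le_mul_of_nonneg_right (hc_mono n j hn'.1 hj) hdiff
    · intro n hn
      have hn' := Finset.mem_Icc.mp hn
      have hsub : Finset.Icc n N ⊆ Finset.Icc 1 N := Finset.Icc_subset_Icc hn'.1 le_rfl
      have htel : Q n t ω = ∑ j ∈ Finset.Icc n N, (Q j t ω - Q (j + 1) t ω) := by
        rcases Nat.lt_or_ge N n with h | h
        · have hn2 : n = N + 1 := by omega
          rw [Finset.Icc_eq_empty (by omega), Finset.sum_empty, hn2, hN1]
        · rw [telescope7 n N (fun j => Q j t ω) h, hN1, sub_zero]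
      have hstep1 : Qh n t ω = ∑ j ∈ Finset.Icc n N, c n j * (Q j t ω - Q (j + 1) t ω) := by
        rw [hQh_apply]
        refine (Finset.sum_subset hsub ?_).symm
        intro j hj hj2
        have hj' := Finset.mem_Icc.mp hj
        have hjn : j + 1 ≤ n := by
          rcases Nat.lt_or_ge j n with h' | h'
          · omega
          · exact absurd (Finset.mem_Icc.mpr ⟨h', hj'.2⟩) hj2
        rw [hc_zero n j hj'.1 hjn hn'.2, zero_mul]
      rw [hstep1, htel]
      apply Finset.sum_le_sum
      intro j hj
      have hdiff : 0 ≤ Q j t ω - Q (j + 1) t ω := sub_nonneg.mpr (hmono j (hsub hj))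
      exact mul_le_of_le_one_left hdiff (hc_le_one n j (hsub hj))
  have h0mem : (0 : ℝ) ∈ Set.Icc 0 T := ⟨le_rfl, hT.le⟩
  have hTmem : T ∈ Set.Icc 0 T := ⟨hT.le, le_rfl⟩
  -- initial values
  have hQhinit : ∀ n ∈ Finset.Icc 1 N, ∀ᵐ ω ∂ℙ, Qh n 0 ω = Tμ n := by
    intro n hn
    have hn' := Finset.mem_Icc.mp hn
    filter_upwards [hQinit', hQbounds] with ω hω hb
    obtain ⟨h1, hN1, _⟩ := hb 0 h0mem
    rw [hQh_apply]
    have hterm : ∀ j ∈ Finset.Icc 1 N,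
        c n j * (Q j 0 ω - Q (j + 1) 0 ω) = c n j * pν j := by
      intro j hj
      have hj' := Finset.mem_Icc.mp hj
      have hQj : Q j 0 ω = Tν j := hω j hj
      have hQj1 : Q (j + 1) 0 ω = Tν (j + 1) := by
        rcases Nat.lt_or_ge j N with h | h
        · exact hω (j + 1) (Finset.mem_Icc.mpr ⟨by omega, by omega⟩)
        · have hjN : j = N := by omega
          rw [hjN, hN1, hTνtop]
      rw [hQj, hQj1]
      congr 1
      rw [hsucc j hj]
      ring
    rw [Finset.sum_congr rfl hterm, hc_sum n hn'.1 (by omega)]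
  -- integrals at time T
  have hmemlift : ∀ n ∈ Finset.Icc 1 N, n ∈ Finset.Icc 1 (N + 1) := by
    intro n hn
    have := Finset.mem_Icc.mp hn
    exact Finset.mem_Icc.mpr ⟨this.1, by omega⟩
  have hint_shift : ∀ n ∈ Finset.Icc 1 (N + 1), ∫ ω, Qh n T ω ∂ℙ = ∫ ω, Qh n 0 ω ∂ℙ := by
    intro n hn
    have h := (hQhmart n hn).setIntegral_eq hT.le (s := Set.univ) MeasurableSet.univ
    simp only [setIntegral_univ] at h
    exact h.symm
  have hint_T : ∀ n ∈ Finset.Icc 1 N, ∫ ω, Qh n T ω ∂ℙ = Tμ n := by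
    intro n hn
    rw [hint_shift n (hmemlift n hn), integral_congr_ae (hQhinit n hn), integral_const]
    simp
  -- Qh 1 at time T equals 1 a.s.
  have h1mem : (1 : ℕ) ∈ Finset.Icc 1 (N + 1) := Finset.mem_Icc.mpr ⟨le_rfl, by omega⟩
  have h1memN : (1 : ℕ) ∈ Finset.Icc 1 N := Finset.mem_Icc.mpr ⟨le_rfl, hN⟩
  have hle1 : ∀ᵐ ω ∂ℙ, Qh 1 T ω ≤ 1 := by
    filter_upwards [hae_main, hQbounds] with ω h hb
    have h' := (h T hTmem).2.2 1 h1mem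
    rw [(hb T hTmem).1] at h'
    exact h'
  have hint1 : ∫ ω, Qh 1 T ω ∂ℙ = 1 := by
    rw [hint_T 1 h1memN]
    exact hTμ1
  have hQh1T : ∀ᵐ ω ∂ℙ, Qh 1 T ω = 1 := by
    have hi : Integrable (fun ω => 1 - Qh 1 T ω) ℙ :=
      (integrable_const 1).sub ((hQhmart 1 h1mem).integrable T)
    have hz : ∫ ω, (1 - Qh 1 T ω) ∂ℙ = 0 := by
      rw [integral_sub (integrable_const 1) ((hQhmart 1 h1mem).integrable T), hint1]
      simp
    have hnn : 0 ≤ᵐ[ℙ] fun ω => 1 - Qh 1 T ω := by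
      filter_upwards [hle1] with ω h
      simp only [Pi.zero_apply]
      linarith
    have hz2 := (integral_eq_zero_iff_of_nonneg_ae hnn hi).mp hz
    filter_upwards [hz2] with ω h
    have : 1 - Qh 1 T ω = 0 := h
    linarith
  exact ⟨Qh, hQhmart, hQhcont, hae_main, hQhinit, hQh1T, hint_T⟩
end

section
/- Existence of an optimal coupling: let F : L²(Ω, ℱ_T, ℙ) → ℝ be convex and continuous (for the L² norm), and let G = (G¹, …, Gᴺ) ∈ L²(Ω, ℱ_T; ℝᴺ). Then there exists P̄ ∈ 𝒫_μ(ℱ_T) such that F(Σ_{n=1}^N Gⁿ P̄ⁿ) = inf_{P ∈ 𝒫_μ(ℱ_T)} F(Σ_{n=1}^N Gⁿ Pⁿ). -/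
open MeasureTheory NormedSpace Bornology Filter ENNReal NNReal Topology RealInnerProductSpace

section WeakCompactness

variable {E : Type*} [NormedAddCommGroup E] [InnerProductSpace ℝ E] [CompleteSpace E]

/-- The canonical map from a real Hilbert space to its weak dual. -/
noncomputable def stmt8WdMap (E : Type*) [NormedAddCommGroup E] [InnerProductSpace ℝ E]
    [CompleteSpace E] : E → WeakDual ℝ E :=
  fun x => StrongDual.toWeakDual (InnerProductSpace.toDual ℝ E x)

lemma stmt8WdMap_injective : Function.Injective (stmt8WdMap E) := by
  intro x y h
  exact (InnerProductSpace.toDual ℝ E).injective (StrongDual.toWeakDual.injective h)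

lemma stmt8_continuous_wdMap_symm :
    Continuous fun g : WeakDual ℝ E =>
      toWeakSpace ℝ E ((InnerProductSpace.toDual ℝ E).symm (StrongDual.toWeakDual.symm g)) := by
  apply WeakBilin.continuous_of_continuous_eval
  intro f
  obtain ⟨x, rfl⟩ : ∃ x, InnerProductSpace.toDual ℝ E x = f :=
    (InnerProductSpace.toDual ℝ E).surjective f
  have key : ∀ g : WeakDual ℝ E,
      (topDualPairing ℝ E).flip
        (toWeakSpace ℝ E ((InnerProductSpace.toDual ℝ E).symm (StrongDual.toWeakDual.symm g)))
        (InnerProductSpace.toDual ℝ E x) = g x := by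
    intro g
    show (InnerProductSpace.toDual ℝ E x)
      ((InnerProductSpace.toDual ℝ E).symm (StrongDual.toWeakDual.symm g)) = g x
    rw [InnerProductSpace.toDual_apply_apply, real_inner_comm, InnerProductSpace.toDual_symm_apply]
    rfl
  exact (WeakBilin.eval_continuous (topDualPairing ℝ E) x).congr fun g => (key g).symm

/-- A closed bounded convex set in a real Hilbert space is weakly compact. -/
lemma stmt8_isCompact_wdMap_image {K : Set E} (hKc : Convex ℝ K) (hKcl : IsClosed K)
    (hKb : IsBounded K) : IsCompact (stmt8WdMap E '' K) := by
  apply WeakDual.isCompact_of_bounded_of_closed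
  · have h0 : stmt8WdMap E '' K = ⇑StrongDual.toWeakDual '' (⇑(InnerProductSpace.toDual ℝ E) '' K) := by
      rw [Set.image_image]; rfl
    rw [h0, ← WeakDual.isBounded_toWeakDual_preimage_iff_isBounded, Set.preimage_image_eq _ StrongDual.toWeakDual.injective]
    exact ((InnerProductSpace.toDual ℝ E).isometry.lipschitz.isBounded_image hKb)
  · have hWK : IsClosed (toWeakSpace ℝ E '' K) := by
      have h1 := hKc.toWeakSpace_closure (𝕜 := ℝ)
      rw [hKcl.closure_eq] at h1
      rw [h1]
      exact isClosed_closure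
    have h2 : stmt8WdMap E '' K = (fun g : WeakDual ℝ E =>
        toWeakSpace ℝ E ((InnerProductSpace.toDual ℝ E).symm (StrongDual.toWeakDual.symm g)))
          ⁻¹' (toWeakSpace ℝ E '' K) := by
      ext g
      simp only [Set.mem_image, Set.mem_preimage]
      constructor
      · rintro ⟨x, hx, rfl⟩
        refine ⟨x, hx, ?_⟩
        congr 1
        exact ((InnerProductSpace.toDual ℝ E).symm_apply_apply x).symm
      · rintro ⟨x, hx, h⟩
        refine ⟨x, hx, ?_⟩
        have hx' : x = (InnerProductSpace.toDual ℝ E).symm (StrongDual.toWeakDual.symm g) :=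
          (toWeakSpace ℝ E).injective h
        show StrongDual.toWeakDual (InnerProductSpace.toDual ℝ E x) = g
        rw [hx', (InnerProductSpace.toDual ℝ E).apply_symm_apply,
          StrongDual.toWeakDual.apply_symm_apply]
    rw [h2]
    exact hWK.preimage stmt8_continuous_wdMap_symm

/-- A function with closed convex sublevel sets attains its minimum on a nonempty closed
bounded convex subset of a real Hilbert space. -/
lemma stmt8_exists_min_of_convex {K : Set E} (hne : K.Nonempty) (hKb : IsBounded K) (J : E → ℝ)
    (hcl : ∀ c : ℝ, IsClosed {x | x ∈ K ∧ J x ≤ c})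
    (hcv : ∀ c : ℝ, Convex ℝ {x | x ∈ K ∧ J x ≤ c}) :
    ∃ x ∈ K, ∀ y ∈ K, J x ≤ J y := by
  have hKne : Nonempty K := hne.to_subtype
  set C : ℝ → Set E := fun c => {x | x ∈ K ∧ J x ≤ c} with hC
  set Z : K → Set (WeakDual ℝ E) := fun y => stmt8WdMap E '' C (J y) with hZ
  have hCsub : ∀ c, C c ⊆ K := fun c x hx => hx.1
  have hZcomp : ∀ y : K, IsCompact (Z y) := fun y =>
    stmt8_isCompact_wdMap_image (hcv _) (hcl _) (hKb.subset (hCsub _))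
  have hZne : ∀ y : K, (Z y).Nonempty := fun y =>
    ⟨stmt8WdMap E y, Set.mem_image_of_mem _ ⟨y.2, le_refl _⟩⟩
  have hdir : Directed (· ⊇ ·) Z := by
    intro y y'
    rcases le_total (J y) (J y') with h | h
    · exact ⟨y, subset_refl _, Set.image_mono fun x hx => ⟨hx.1, hx.2.trans h⟩⟩
    · exact ⟨y', Set.image_mono fun x hx => ⟨hx.1, hx.2.trans h⟩, subset_refl _⟩
  obtain ⟨g, hg⟩ := IsCompact.nonempty_iInter_of_directed_nonempty_isCompact_isClosed
    Z hdir hZne hZcomp (fun y => (hZcomp y).isClosed)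
  simp only [Set.mem_iInter] at hg
  obtain ⟨x₀, hx₀K, hx₀⟩ : ∃ x₀, x₀ ∈ K ∧ stmt8WdMap E x₀ = g := by
    obtain ⟨x, hx, hxg⟩ := hg ⟨hne.choose, hne.choose_spec⟩
    exact ⟨x, hx.1, hxg⟩
  refine ⟨x₀, hx₀K, fun y hy => ?_⟩
  obtain ⟨x, hx, hxg⟩ := hg ⟨y, hy⟩
  have : x = x₀ := stmt8WdMap_injective (hxg.trans hx₀.symm)
  exact this ▸ hx.2

end WeakCompactness

/-- Dominated convergence for the `L²` norm. -/
lemma stmt8_dct {Ω : Type*} [MeasurableSpace Ω] {μ : Measure Ω}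
    {g : Ω → ℝ} (hg : MemLp g 2 μ) {f : ℕ → Ω → ℝ} {flim : Ω → ℝ}
    (hfm : ∀ k, AEStronglyMeasurable (f k) μ) (hflm : AEStronglyMeasurable flim μ)
    (hb : ∀ k, ∀ᵐ ω ∂μ, |f k ω| ≤ g ω) (hbl : ∀ᵐ ω ∂μ, |flim ω| ≤ g ω)
    (hae : ∀ᵐ ω ∂μ, Tendsto (fun k => f k ω) atTop (𝓝 (flim ω))) :
    Tendsto (fun k => eLpNorm (f k - flim) 2 μ) atTop (𝓝 0) := by
  have h2 : (2 : ℝ≥0∞) ≠ 0 := by norm_num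
  have h2' : (2 : ℝ≥0∞) ≠ ∞ := by norm_num
  have h2r : (2 : ℝ≥0∞).toReal = (2:ℝ) := by norm_num
  have hrw : ∀ k, eLpNorm (f k - flim) 2 μ
      = (∫⁻ ω, (‖f k ω - flim ω‖₊ : ℝ≥0∞) ^ (2:ℝ) ∂μ) ^ (1/(2:ℝ)) := by
    intro k
    rw [eLpNorm_eq_lintegral_rpow_enorm_toReal h2 h2', h2r]
    rfl
  have h2g : MemLp (fun ω => 2 * g ω) 2 μ := hg.const_mul 2
  have hbound : (∫⁻ ω, (‖2 * g ω‖₊ : ℝ≥0∞) ^ (2:ℝ) ∂μ) ≠ ∞ := by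
    have := lintegral_rpow_enorm_lt_top_of_eLpNorm_lt_top (f := fun ω => 2 * g ω)
      h2 h2' h2g.2
    rw [h2r] at this
    exact this.ne
  have key : Tendsto (fun k => ∫⁻ ω, (‖f k ω - flim ω‖₊ : ℝ≥0∞) ^ (2:ℝ) ∂μ) atTop (𝓝 0) := by
    have h0 : (0 : ℝ≥0∞) = ∫⁻ _ω, (0:ℝ≥0∞) ∂μ := by simp
    rw [h0]
    apply tendsto_lintegral_of_dominated_convergence'
      (bound := fun ω => (‖2 * g ω‖₊ : ℝ≥0∞) ^ (2:ℝ))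
    · exact fun k => ((hfm k).sub hflm).enorm.pow_const _
    · intro k
      filter_upwards [hb k, hbl] with ω h1 h1'
      apply ENNReal.rpow_le_rpow _ (by norm_num)
      rw [ENNReal.coe_le_coe, ← NNReal.coe_le_coe, coe_nnnorm, coe_nnnorm,
        Real.norm_eq_abs, Real.norm_eq_abs]
      have h3 : (0:ℝ) ≤ g ω := le_trans (abs_nonneg _) h1
      rw [abs_of_nonneg (by linarith : (0:ℝ) ≤ 2 * g ω)]
      calc |f k ω - flim ω| ≤ |f k ω| + |flim ω| := abs_sub _ _
      _ ≤ 2 * g ω := by linarith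
    · exact hbound
    · filter_upwards [hae] with ω hω
      have hsub : Tendsto (fun k => f k ω - flim ω) atTop (𝓝 (flim ω - flim ω)) :=
        hω.sub tendsto_const_nhds
      rw [sub_self] at hsub
      have h4 : Tendsto (fun k => (‖f k ω - flim ω‖₊ : ℝ≥0∞)) atTop (𝓝 0) := by
        have hc : ((0:ℝ≥0):ℝ≥0∞) = 0 := by simp
        rw [← hc]
        refine ENNReal.tendsto_coe.mpr ?_
        have := hsub.nnnorm
        simpa using this
      have := ((ENNReal.continuous_rpow_const (y := (2:ℝ))).tendsto (0:ℝ≥0∞)).comp h4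
      simpa [Function.comp_def, ENNReal.zero_rpow_of_pos (by norm_num : (0:ℝ) < 2)] using this
  simp only [hrw]
  have := ((ENNReal.continuous_rpow_const (y := (1/2:ℝ))).tendsto (0:ℝ≥0∞)).comp key
  simpa [Function.comp_def, ENNReal.zero_rpow_of_pos (by norm_num : (0:ℝ) < 1/2)] using this

/-- Coercion of a finite sum in `Lp`. -/
lemma stmt8_coeFn_sum {Ω : Type*} [MeasurableSpace Ω] {μ : Measure Ω} {ι : Type*}
    (t : Finset ι) (f : ι → Lp ℝ 2 μ) :
    ⇑(∑ i ∈ t, f i) =ᵐ[μ] fun ω => ∑ i ∈ t, f i ω := by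
  classical
  induction t using Finset.induction_on with
  | empty => simp only [Finset.sum_empty]; exact Lp.coeFn_zero (E := ℝ) (p := 2) (μ := μ)
  | insert _ _ hx ih =>
      rename_i a t
      rw [Finset.sum_insert hx]
      filter_upwards [Lp.coeFn_add (f a) (∑ i ∈ t, f i), ih] with ω h1 h2
      simp only [h1, Pi.add_apply, h2, Finset.sum_insert hx]

set_option synthInstance.maxHeartbeats 1000000 in
set_option maxHeartbeats 1000000 in
/-- existence of an optimal coupling. For `F : L² → ℝ` convex and continuous and
`G = (G¹, …, Gᴺ) ∈ L²(Ω, ℱ_T; ℝᴺ)`, there exists `P̄ ∈ 𝒫_μ(ℱ_T)` attaining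
`inf_{P ∈ 𝒫_μ(ℱ_T)} F(Σ_{n=1}^N Gⁿ Pⁿ)`. -/
theorem stmt8
    {Ω : Type*} (mF : MeasurableSpace Ω) {mΩ : MeasurableSpace Ω} (hmF : mF ≤ mΩ)
    (ℙ : Measure Ω) [IsProbabilityMeasure ℙ]
    (N : ℕ) (hN : 1 ≤ N)
    (p : ℕ → ℝ) (hp0 : ∀ n ∈ Finset.Icc 1 N, 0 ≤ p n)
    (hp1 : ∑ n ∈ Finset.Icc 1 N, p n = 1)
    (F : Lp ℝ 2 ℙ → ℝ) (hFconv : ConvexOn ℝ Set.univ F) (hFcont : Continuous F)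
    (G : ℕ → Ω → ℝ)
    (hGmeas : ∀ n ∈ Finset.Icc 1 N, Measurable[mF] (G n))
    (hG2 : ∀ n ∈ Finset.Icc 1 N, MemLp (G n) 2 ℙ) :
    ∃ P : ℕ → Ω → ℝ,
      (∀ n ∈ Finset.Icc 1 N, Measurable[mF] (P n)) ∧
      (∀ᵐ ω ∂ℙ, ∀ n ∈ Finset.Icc 1 N, 0 ≤ P n ω) ∧
      (∀ᵐ ω ∂ℙ, ∑ n ∈ Finset.Icc 1 N, P n ω = 1) ∧
      (∀ n ∈ Finset.Icc 1 N, ∫ ω, P n ω ∂ℙ = p n) ∧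
      ∃ h : MemLp (fun ω => ∑ n ∈ Finset.Icc 1 N, G n ω * P n ω) 2 ℙ,
        F (MemLp.toLp _ h) =
          sInf {v : ℝ | ∃ P' : ℕ → Ω → ℝ,
            (∀ n ∈ Finset.Icc 1 N, Measurable[mF] (P' n)) ∧
            (∀ᵐ ω ∂ℙ, ∀ n ∈ Finset.Icc 1 N, 0 ≤ P' n ω) ∧
            (∀ᵐ ω ∂ℙ, ∑ n ∈ Finset.Icc 1 N, P' n ω = 1) ∧
            (∀ n ∈ Finset.Icc 1 N, ∫ ω, P' n ω ∂ℙ = p n) ∧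
            ∃ h' : MemLp (fun ω => ∑ n ∈ Finset.Icc 1 N, G n ω * P' n ω) 2 ℙ,
              v = F (MemLp.toLp _ h')} := by
  classical
  haveI : Fact (mF ≤ mΩ) := ⟨hmF⟩
  -- index type
  set ι := {n // n ∈ Finset.Icc 1 N} with hι
  haveI : CompleteSpace (PiLp 2 (fun _ : ι => Lp ℝ 2 ℙ)) :=
    inferInstance
  -- the constant-one element of L²
  set C1 : Lp ℝ 2 ℙ := MemLp.toLp (fun _ => (1:ℝ)) (memLp_const (1:ℝ)) with hC1def
  have hC1coe : ⇑C1 =ᵐ[ℙ] fun _ => (1:ℝ) := MemLp.coeFn_toLp _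
  -- inner products against C1 compute integrals
  have hinner : ∀ X : Lp ℝ 2 ℙ, (inner ℝ C1 X : ℝ) = ∫ ω, X ω ∂ℙ := by
    intro X
    rw [MeasureTheory.L2.inner_def]
    apply integral_congr_ae
    filter_upwards [hC1coe] with ω h1
    simp [h1, RCLike.inner_apply]
  -- clipping
  set clip : ℝ → ℝ := fun t => max 0 (min t 1) with hclipdef
  have hclip_cont : Continuous clip := continuous_const.max (continuous_id.min continuous_const)
  have hclip0 : ∀ t, 0 ≤ clip t := fun t => le_max_left _ _
  have hclip1 : ∀ t, clip t ≤ 1 := fun t => max_le (by norm_num) (min_le_right _ _)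
  have hclip_eq : ∀ t, 0 ≤ t → t ≤ 1 → clip t = t := by
    intro t h0 h1
    simp only [hclipdef, min_eq_left h1, max_eq_right h0]
  -- the dominating function
  have hGsmem : MemLp (fun ω => ∑ i : ι, |G i ω|) 2 ℙ := by
    apply memLp_finset_sum
    intro i _
    exact (hG2 i i.2).norm.ae_eq (by filter_upwards with ω; rw [Real.norm_eq_abs])
  -- membership of the objective integrand
  have hXmem : ∀ Q : PiLp 2 (fun _ : ι => Lp ℝ 2 ℙ),
      MemLp (fun ω => ∑ i : ι, G i ω * clip ((Q i : Ω → ℝ) ω)) 2 ℙ := by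
    intro Q
    apply memLp_finset_sum
    intro i _
    refine MemLp.of_le (hG2 i i.2) ?_ ?_
    · exact ((hG2 i i.2).aestronglyMeasurable).mul
        (hclip_cont.comp_aestronglyMeasurable (Lp.aestronglyMeasurable (Q i)))
    · filter_upwards with ω
      rw [Real.norm_eq_abs, Real.norm_eq_abs, abs_mul]
      calc |G i ω| * |clip ((Q i : Ω → ℝ) ω)| ≤ |G i ω| * 1 := by
            apply mul_le_mul_of_nonneg_left _ (abs_nonneg _)
            rw [abs_le]
            exact ⟨by linarith [hclip0 ((Q i : Ω → ℝ) ω)], hclip1 _⟩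
      _ = |G i ω| := mul_one _
  set Xof : PiLp 2 (fun _ : ι => Lp ℝ 2 ℙ) → Lp ℝ 2 ℙ :=
    fun Q => MemLp.toLp _ (hXmem Q) with hXofdef
  set J : PiLp 2 (fun _ : ι => Lp ℝ 2 ℙ) → ℝ := fun Q => F (Xof Q) with hJdef
  -- the feasible set
  set K : Set (PiLp 2 (fun _ : ι => Lp ℝ 2 ℙ)) :=
    {Q | (∀ i, Q i ∈ lpMeas ℝ ℝ mF 2 ℙ) ∧ (∀ i, 0 ≤ Q i) ∧ (∑ i, Q i = C1) ∧
         (∀ i, (inner ℝ C1 (Q i) : ℝ) = p i)} with hKdef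
  -- feasible elements are between 0 and C1
  have hle1 : ∀ Q ∈ K, ∀ i, Q i ≤ C1 := by
    intro Q hQ i
    have h1 : Q i ≤ ∑ j, Q j :=
      Finset.single_le_sum (f := fun j => Q j) (fun j _ => hQ.2.1 j) (Finset.mem_univ i)
    rw [hQ.2.2.1] at h1
    exact h1
  have h01ae : ∀ Q ∈ K, ∀ i : ι, ∀ᵐ ω ∂ℙ, 0 ≤ (Q i : Ω → ℝ) ω ∧ (Q i : Ω → ℝ) ω ≤ 1 := by
    intro Q hQ i
    have h0 : (0 : Lp ℝ 2 ℙ) ≤ᵐ[ℙ] Q i := (Lp.coeFn_le _ _).mpr (hQ.2.1 i)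
    have h1 : (Q i : Ω → ℝ) ≤ᵐ[ℙ] ⇑C1 := (Lp.coeFn_le _ _).mpr (hle1 Q hQ i)
    filter_upwards [h0, h1, hC1coe, Lp.coeFn_zero (E := ℝ) (p := 2) (μ := ℙ)] with ω a b c d
    constructor
    · simpa [d] using a
    · rw [c] at b; exact b
  -- clip is inactive on feasible elements
  have hXcongr : ∀ Q ∈ K,
      (fun ω => ∑ i : ι, G i ω * clip ((Q i : Ω → ℝ) ω)) =ᵐ[ℙ]
        fun ω => ∑ i : ι, G i ω * (Q i : Ω → ℝ) ω := by
    intro Q hQ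
    have := ae_all_iff.mpr (h01ae Q hQ)
    filter_upwards [this] with ω hω
    apply Finset.sum_congr rfl
    intro i _
    rw [hclip_eq _ (hω i).1 (hω i).2]
  -- pointwise application of convex combinations in PiLp
  have happly : ∀ (a b : ℝ) (Q Q' : PiLp 2 (fun _ : ι => Lp ℝ 2 ℙ)) (i : ι),
      (a • Q + b • Q') i = a • Q i + b • Q' i := fun _ _ _ _ _ => rfl
  have hC1nonneg : (0 : Lp ℝ 2 ℙ) ≤ C1 := by
    rw [← Lp.coeFn_nonneg]
    filter_upwards [hC1coe] with ω h
    simp [h]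
  -- K is convex
  have hKconvex : Convex ℝ K := by
    intro Q hQ Q' hQ' a b ha hb hab
    refine ⟨fun i => ?_, fun i => ?_, ?_, fun i => ?_⟩
    · rw [happly]
      exact Submodule.add_mem _ (Submodule.smul_mem _ a (hQ.1 i))
        (Submodule.smul_mem _ b (hQ'.1 i))
    · rw [happly, ← Lp.coeFn_nonneg]
      filter_upwards [Lp.coeFn_add (a • Q i) (b • Q' i), Lp.coeFn_smul a (Q i),
        Lp.coeFn_smul b (Q' i), (Lp.coeFn_nonneg (Q i)).mpr (hQ.2.1 i),
        (Lp.coeFn_nonneg (Q' i)).mpr (hQ'.2.1 i)] with ω h1 h2 h3 h4 h5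
      simp only [Pi.zero_apply] at h4 h5 ⊢
      simp only [h1, Pi.add_apply, h2, h3, Pi.smul_apply, smul_eq_mul]
      exact add_nonneg (mul_nonneg ha h4) (mul_nonneg hb h5)
    · have hsum : ∑ i, (a • Q + b • Q') i = a • (∑ i, Q i) + b • (∑ i, Q' i) := by
        rw [Finset.smul_sum, Finset.smul_sum, ← Finset.sum_add_distrib]
        exact Finset.sum_congr rfl fun i _ => happly a b Q Q' i
      rw [hsum, hQ.2.2.1, hQ'.2.2.1, ← add_smul, hab, one_smul]
    · rw [happly, inner_add_right, real_inner_smul_right, real_inner_smul_right,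
        hQ.2.2.2 i, hQ'.2.2.2 i, ← add_mul, hab, one_mul]
  -- K is closed
  have hproj : ∀ i : ι, Continuous fun Q : PiLp 2 (fun _ : ι => Lp ℝ 2 ℙ) => Q i :=
    fun i => (continuous_apply i).comp (PiLp.continuous_ofLp 2 _)
  have hKclosed : IsClosed K := by
    have h1 : IsClosed {Q : PiLp 2 (fun _ : ι => Lp ℝ 2 ℙ) | ∀ i, Q i ∈ lpMeas ℝ ℝ mF 2 ℙ} := by
      have heq : {Q : PiLp 2 (fun _ : ι => Lp ℝ 2 ℙ) | ∀ i, Q i ∈ lpMeas ℝ ℝ mF 2 ℙ}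
          = ⋂ i, (fun Q : PiLp 2 (fun _ : ι => Lp ℝ 2 ℙ) => Q i) ⁻¹'
              (lpMeas ℝ ℝ mF 2 ℙ : Set (Lp ℝ 2 ℙ)) := by
        ext Q; simp [Set.mem_iInter]
      rw [heq]
      refine isClosed_iInter fun i => IsClosed.preimage (hproj i) ?_
      exact (completeSpace_coe_iff_isComplete.mp
        (inferInstance : CompleteSpace (lpMeas ℝ ℝ mF 2 ℙ))).isClosed
    have h2 : IsClosed {Q : PiLp 2 (fun _ : ι => Lp ℝ 2 ℙ) | ∀ i, 0 ≤ Q i} := by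
      have heq : {Q : PiLp 2 (fun _ : ι => Lp ℝ 2 ℙ) | ∀ i, 0 ≤ Q i}
          = ⋂ i, (fun Q : PiLp 2 (fun _ : ι => Lp ℝ 2 ℙ) => Q i) ⁻¹'
              {X : Lp ℝ 2 ℙ | 0 ≤ X} := by
        ext Q; simp [Set.mem_iInter]
      rw [heq]
      exact isClosed_iInter fun i => IsClosed.preimage (hproj i)
        (isClosed_le continuous_const continuous_id)
    have h3 : IsClosed {Q : PiLp 2 (fun _ : ι => Lp ℝ 2 ℙ) | ∑ i, Q i = C1} :=
      isClosed_eq (continuous_finset_sum _ fun i _ => hproj i) continuous_const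
    have h4 : IsClosed {Q : PiLp 2 (fun _ : ι => Lp ℝ 2 ℙ) |
        ∀ i, (inner ℝ C1 (Q i) : ℝ) = p i} := by
      have heq : {Q : PiLp 2 (fun _ : ι => Lp ℝ 2 ℙ) | ∀ i, (inner ℝ C1 (Q i) : ℝ) = p i}
          = ⋂ i, {Q : PiLp 2 (fun _ : ι => Lp ℝ 2 ℙ) | (inner ℝ C1 (Q i) : ℝ) = p i} := by
        ext Q; simp [Set.mem_iInter]
      rw [heq]
      refine isClosed_iInter fun i => isClosed_eq ?_ continuous_const
      exact (innerSL ℝ C1).continuous.comp (hproj i)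
    have hKeq : K = _ := hKdef
    rw [hKeq]
    exact h1.inter (h2.inter (h3.inter h4))
  -- K is bounded
  have hC1norm : ‖C1‖ = 1 := by
    rw [hC1def, Lp.norm_toLp]
    have : eLpNorm (fun _ : Ω => (1:ℝ)) 2 ℙ = 1 := by
      rw [eLpNorm_const _ (by norm_num) (IsProbabilityMeasure.ne_zero ℙ)]
      simp
    rw [this]
    simp
  have hnorm_le : ∀ Q ∈ K, ∀ i, ‖Q i‖ ≤ 1 := by
    intro Q hQ i
    have habs : |Q i| ≤ |C1| := by
      rw [abs_of_nonneg (hQ.2.1 i), abs_of_nonneg hC1nonneg]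
      exact hle1 Q hQ i
    have := norm_le_norm_of_abs_le_abs habs
    rw [hC1norm] at this
    exact this
  have hKbounded : IsBounded K := by
    rw [isBounded_iff_forall_norm_le]
    refine ⟨Real.sqrt N, fun Q hQ => ?_⟩
    rw [PiLp.norm_eq_of_L2]
    apply Real.sqrt_le_sqrt
    calc ∑ i, ‖Q i‖ ^ 2 ≤ ∑ _i : ι, (1:ℝ) := by
          apply Finset.sum_le_sum
          intro i _
          have h := hnorm_le Q hQ i
          nlinarith [norm_nonneg (Q i)]
    _ = (N : ℝ) := by
          rw [Finset.sum_const, Finset.card_univ, Fintype.card_coe, Nat.card_Icc]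
          simp
  -- K is nonempty
  have hKne : K.Nonempty := by
    refine ⟨WithLp.toLp 2 (fun i => p i • C1), fun i => ?_, fun i => ?_, ?_, fun i => ?_⟩
    · refine Submodule.smul_mem _ _ ?_
      rw [mem_lpMeas_iff_aestronglyMeasurable]
      exact ⟨fun _ => (1:ℝ), stronglyMeasurable_const, hC1coe⟩
    · rw [← Lp.coeFn_nonneg]
      filter_upwards [Lp.coeFn_smul (p i) C1, hC1coe] with ω h1 h2
      simp only [Pi.zero_apply, h1, Pi.smul_apply, h2, smul_eq_mul, mul_one]
      exact hp0 i i.2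
    · show (∑ i : ι, p i • C1) = C1
      rw [← Finset.sum_smul]
      have : ∑ i : ι, p i = 1 := by
        rw [← hp1]
        exact Finset.sum_attach _ _
      rw [this, one_smul]
    · rw [real_inner_smul_right, real_inner_self_eq_norm_sq, hC1norm]
      simp
  -- uniform pointwise bound on the objective integrand
  have hXbound : ∀ (Q : PiLp 2 (fun _ : ι => Lp ℝ 2 ℙ)) (ω : Ω),
      |∑ i : ι, G i ω * clip ((Q i : Ω → ℝ) ω)| ≤ ∑ i : ι, |G i ω| := by
    intro Q ω
    calc |∑ i : ι, G i ω * clip ((Q i : Ω → ℝ) ω)|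
        ≤ ∑ i : ι, |G i ω * clip ((Q i : Ω → ℝ) ω)| := Finset.abs_sum_le_sum_abs _ _
    _ ≤ ∑ i : ι, |G i ω| := by
        apply Finset.sum_le_sum
        intro i _
        rw [abs_mul]
        calc |G i ω| * |clip ((Q i : Ω → ℝ) ω)| ≤ |G i ω| * 1 := by
              apply mul_le_mul_of_nonneg_left _ (abs_nonneg _)
              rw [abs_le]
              exact ⟨by linarith [hclip0 ((Q i : Ω → ℝ) ω)], hclip1 _⟩
        _ = |G i ω| := mul_one _
  -- Xof is affine on K
  have hXaff : ∀ Q ∈ K, ∀ Q' ∈ K, ∀ a b : ℝ, 0 ≤ a → 0 ≤ b → a + b = 1 →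
      Xof (a • Q + b • Q') = a • Xof Q + b • Xof Q' := by
    intro Q hQ Q' hQ' a b ha hb hab
    have hmemK : a • Q + b • Q' ∈ K := hKconvex hQ hQ' ha hb hab
    apply Lp.ext (p := (2:ℝ≥0∞)) (μ := ℙ)
    have hcoe : ∀ᵐ ω ∂ℙ, ∀ i : ι,
        ((a • Q + b • Q') i : Ω → ℝ) ω = a * (Q i : Ω → ℝ) ω + b * (Q' i : Ω → ℝ) ω := by
      rw [ae_all_iff]
      intro i
      have h0 : (a • Q + b • Q') i = a • Q i + b • Q' i := happly a b Q Q' i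
      rw [h0]
      filter_upwards [Lp.coeFn_add (a • Q i) (b • Q' i), Lp.coeFn_smul a (Q i),
        Lp.coeFn_smul b (Q' i)] with ω h1 h2 h3
      rw [h1, Pi.add_apply, h2, h3, Pi.smul_apply, Pi.smul_apply, smul_eq_mul, smul_eq_mul]
    have hL : ⇑(Xof (a • Q + b • Q')) =ᵐ[ℙ]
        fun ω => ∑ i : ι, G i ω * ((a • Q + b • Q') i : Ω → ℝ) ω :=
      (MemLp.coeFn_toLp _).trans (hXcongr _ hmemK)
    have hR : ⇑(a • Xof Q + b • Xof Q') =ᵐ[ℙ]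
        fun ω => a * (∑ i : ι, G i ω * (Q i : Ω → ℝ) ω)
          + b * (∑ i : ι, G i ω * (Q' i : Ω → ℝ) ω) := by
      filter_upwards [Lp.coeFn_add (a • Xof Q) (b • Xof Q'), Lp.coeFn_smul a (Xof Q),
        Lp.coeFn_smul b (Xof Q'), (MemLp.coeFn_toLp (hXmem Q)).trans (hXcongr _ hQ),
        (MemLp.coeFn_toLp (hXmem Q')).trans (hXcongr _ hQ')] with ω h1 h2 h3 h4 h5
      simp only [h1, Pi.add_apply, h2, h3, Pi.smul_apply, smul_eq_mul]
      rw [h4, h5]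
    refine hL.trans (EventuallyEq.trans ?_ hR.symm)
    filter_upwards [hcoe] with ω hω
    calc ∑ i : ι, G i ω * ((a • Q + b • Q') i : Ω → ℝ) ω
        = ∑ i : ι, (a * (G i ω * (Q i : Ω → ℝ) ω) + b * (G i ω * (Q' i : Ω → ℝ) ω)) := by
          apply Finset.sum_congr rfl
          intro i _
          rw [hω i]; ring
    _ = a * (∑ i : ι, G i ω * (Q i : Ω → ℝ) ω)
          + b * (∑ i : ι, G i ω * (Q' i : Ω → ℝ) ω) := by
          rw [Finset.sum_add_distrib, Finset.mul_sum, Finset.mul_sum]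
  -- sublevel sets are convex
  have hsubConvex : ∀ c : ℝ, Convex ℝ {Q | Q ∈ K ∧ J Q ≤ c} := by
    intro c Q hQ Q' hQ' a b ha hb hab
    refine ⟨hKconvex hQ.1 hQ'.1 ha hb hab, ?_⟩
    have hcf := hFconv.2 (Set.mem_univ (Xof Q)) (Set.mem_univ (Xof Q')) ha hb hab
    show F (Xof (a • Q + b • Q')) ≤ c
    rw [hXaff Q hQ.1 Q' hQ'.1 a b ha hb hab]
    calc F (a • Xof Q + b • Xof Q') ≤ a * F (Xof Q) + b * F (Xof Q') := by
          simpa [smul_eq_mul] using hcf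
    _ ≤ a * c + b * c :=
          add_le_add (mul_le_mul_of_nonneg_left hQ.2 ha) (mul_le_mul_of_nonneg_left hQ'.2 hb)
    _ = c := by rw [← add_mul, hab, one_mul]
  -- sublevel sets are closed
  have hsubClosed : ∀ c : ℝ, IsClosed {Q | Q ∈ K ∧ J Q ≤ c} := by
    intro c
    apply IsSeqClosed.isClosed
    intro Qs Q hmemseq hconv
    have hQK : Q ∈ K := hKclosed.isSeqClosed (fun k => (hmemseq k).1) hconv
    refine ⟨hQK, ?_⟩
    have hcoordTendsto : ∀ i : ι,
        Tendsto (fun k => eLpNorm ((Qs k i : Ω → ℝ) - (Q i : Ω → ℝ)) 2 ℙ) atTop (𝓝 0) := by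
      intro i
      have h1 : Tendsto (fun k => Qs k i) atTop (𝓝 (Q i)) :=
        ((hproj i).tendsto Q).comp hconv
      exact (Lp.tendsto_Lp_iff_tendsto_eLpNorm' _ _).mp h1
    set D : ℕ → Ω → ℝ := fun k ω => ∑ i : ι, |(Qs k i : Ω → ℝ) ω - (Q i : Ω → ℝ) ω| with hDdef
    have hDmeas : ∀ k, AEStronglyMeasurable (D k) ℙ := by
      intro k
      apply Finset.aestronglyMeasurable_fun_sum
      intro i _
      exact ((Lp.aestronglyMeasurable (Qs k i)).sub (Lp.aestronglyMeasurable (Q i))).norm.congr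
        (by filter_upwards with ω; rw [Real.norm_eq_abs]; rfl)
    have hDle : ∀ k, eLpNorm (D k) 2 ℙ
        ≤ ∑ i : ι, eLpNorm ((Qs k i : Ω → ℝ) - (Q i : Ω → ℝ)) 2 ℙ := by
      intro k
      have heq : D k = ∑ i : ι, fun ω => |(Qs k i : Ω → ℝ) ω - (Q i : Ω → ℝ) ω| := by
        funext ω
        rw [Finset.sum_apply]
      have hterm : ∀ i : ι, eLpNorm (fun ω => |(Qs k i : Ω → ℝ) ω - (Q i : Ω → ℝ) ω|) 2 ℙ
          = eLpNorm ((Qs k i : Ω → ℝ) - (Q i : Ω → ℝ)) 2 ℙ := by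
        intro i
        rw [show (fun ω => |(Qs k i : Ω → ℝ) ω - (Q i : Ω → ℝ) ω|)
          = fun ω => ‖((Qs k i : Ω → ℝ) - (Q i : Ω → ℝ)) ω‖ by
            funext ω; rw [Real.norm_eq_abs]; rfl]
        exact eLpNorm_norm _
      rw [heq]
      refine le_trans (eLpNorm_sum_le ?_ (by norm_num)) ?_
      · intro i _
        exact ((Lp.aestronglyMeasurable (Qs k i)).sub (Lp.aestronglyMeasurable (Q i))).norm.congr
          (by filter_upwards with ω; rw [Real.norm_eq_abs]; rfl)
      · exact le_of_eq (Finset.sum_congr rfl fun i _ => hterm i)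
    have hDtendsto : Tendsto (fun k => eLpNorm (D k) 2 ℙ) atTop (𝓝 0) := by
      have hsumt : Tendsto
          (fun k => ∑ i : ι, eLpNorm ((Qs k i : Ω → ℝ) - (Q i : Ω → ℝ)) 2 ℙ) atTop (𝓝 0) := by
        have := tendsto_finset_sum (Finset.univ : Finset ι) (fun i _ => hcoordTendsto i)
        simpa using this
      exact tendsto_of_tendsto_of_tendsto_of_le_of_le tendsto_const_nhds hsumt
        (fun k => zero_le) hDle
    have hTIM : TendstoInMeasure ℙ D atTop (fun _ => (0:ℝ)) := by
      apply tendstoInMeasure_of_tendsto_eLpNorm (p := 2) (by norm_num) hDmeas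
        aestronglyMeasurable_const
      have : ∀ k, eLpNorm (D k - fun _ => (0:ℝ)) 2 ℙ = eLpNorm (D k) 2 ℙ := by
        intro k
        apply eLpNorm_congr_ae
        filter_upwards with ω
        simp
      simp only [this]
      exact hDtendsto
    obtain ⟨ns, hns, haeD⟩ := hTIM.exists_seq_tendsto_ae
    have haeX : ∀ᵐ ω ∂ℙ,
        Tendsto (fun k => ∑ i : ι, G i ω * clip ((Qs (ns k) i : Ω → ℝ) ω)) atTop
          (𝓝 (∑ i : ι, G i ω * clip ((Q i : Ω → ℝ) ω))) := by
      filter_upwards [haeD] with ω hω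
      apply tendsto_finset_sum
      intro i _
      have hci : Tendsto (fun k => (Qs (ns k) i : Ω → ℝ) ω) atTop (𝓝 ((Q i : Ω → ℝ) ω)) := by
        rw [← tendsto_sub_nhds_zero_iff]
        refine squeeze_zero_norm (fun k => ?_) hω
        rw [Real.norm_eq_abs]
        exact Finset.single_le_sum (f := fun j : ι => |(Qs (ns k) j : Ω → ℝ) ω - (Q j : Ω → ℝ) ω|)
          (fun j _ => abs_nonneg _) (Finset.mem_univ i)
      exact ((hclip_cont.tendsto _).comp hci).const_mul (G i ω)
    have hXelp : Tendsto (fun k =>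
        eLpNorm ((fun ω => ∑ i : ι, G i ω * clip ((Qs (ns k) i : Ω → ℝ) ω))
          - fun ω => ∑ i : ι, G i ω * clip ((Q i : Ω → ℝ) ω)) 2 ℙ) atTop (𝓝 0) := by
      apply stmt8_dct hGsmem (fun k => (hXmem (Qs (ns k))).aestronglyMeasurable)
        (hXmem Q).aestronglyMeasurable
      · intro k
        filter_upwards with ω
        exact hXbound (Qs (ns k)) ω
      · filter_upwards with ω
        exact hXbound Q ω
      · exact haeX
    have hXofTendsto : Tendsto (fun k => Xof (Qs (ns k))) atTop (𝓝 (Xof Q)) := by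
      rw [hXofdef]
      apply Lp.tendsto_Lp_of_tendsto_eLpNorm _ (hXmem Q)
      have hck : ∀ k, eLpNorm ((Xof (Qs (ns k)) : Ω → ℝ)
          - fun ω => ∑ i : ι, G i ω * clip ((Q i : Ω → ℝ) ω)) 2 ℙ
          = eLpNorm ((fun ω => ∑ i : ι, G i ω * clip ((Qs (ns k) i : Ω → ℝ) ω))
          - fun ω => ∑ i : ι, G i ω * clip ((Q i : Ω → ℝ) ω)) 2 ℙ := by
        intro k
        exact eLpNorm_congr_ae ((MemLp.coeFn_toLp _).sub EventuallyEq.rfl)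
      simp only [hXofdef] at hck ⊢
      simp only [hck]
      exact hXelp
    have hFt : Tendsto (fun k => J (Qs (ns k))) atTop (𝓝 (J Q)) :=
      (hFcont.tendsto _).comp hXofTendsto
    exact le_of_tendsto hFt (Eventually.of_forall fun k => (hmemseq (ns k)).2)
  -- existence of a minimizer
  obtain ⟨Qbar, hQbarK, hQbarMin⟩ :=
    stmt8_exists_min_of_convex hKne hKbounded J hsubClosed hsubConvex
  -- measurable representatives of the minimizer
  have hQbarMeas : ∀ i : ι, AEStronglyMeasurable[mF] (⇑(Qbar i)) ℙ :=
    fun i => mem_lpMeas_iff_aestronglyMeasurable.mp (hQbarK.1 i)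
  set P : ℕ → Ω → ℝ := fun n =>
    if h : n ∈ Finset.Icc 1 N then (hQbarMeas ⟨n, h⟩).mk _ else fun _ => 0 with hPdef
  have hPeq : ∀ i : ι, P ↑i =ᵐ[ℙ] ⇑(Qbar i) := by
    intro i
    have h1 : P ↑i = (hQbarMeas i).mk (⇑(Qbar i)) := by
      rw [hPdef]
      exact dif_pos i.2
    rw [h1]
    exact ((hQbarMeas i).ae_eq_mk).symm
  have hPmeas : ∀ n ∈ Finset.Icc 1 N, Measurable[mF] (P n) := by
    intro n hn
    have h1 : P n = (hQbarMeas ⟨n, hn⟩).mk (⇑(Qbar ⟨n, hn⟩)) := by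
      rw [hPdef]
      exact dif_pos hn
    rw [h1]
    exact (hQbarMeas ⟨n, hn⟩).stronglyMeasurable_mk.measurable
  have hPpos : ∀ᵐ ω ∂ℙ, ∀ n ∈ Finset.Icc 1 N, 0 ≤ P n ω := by
    have h1 : ∀ᵐ ω ∂ℙ, ∀ i : ι, 0 ≤ P ↑i ω := by
      rw [ae_all_iff]
      intro i
      filter_upwards [hPeq i, h01ae Qbar hQbarK i] with ω h h'
      rw [h]
      exact h'.1
    filter_upwards [h1] with ω h n hn
    exact h ⟨n, hn⟩
  have hPsum : ∀ᵐ ω ∂ℙ, ∑ n ∈ Finset.Icc 1 N, P n ω = 1 := by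
    have h2 : ∀ᵐ ω ∂ℙ, ∀ i : ι, P ↑i ω = (Qbar i : Ω → ℝ) ω := ae_all_iff.mpr hPeq
    filter_upwards [h2, stmt8_coeFn_sum Finset.univ (fun i : ι => Qbar i), hC1coe]
      with ω ha hb hc
    have hd : ∑ n ∈ Finset.Icc 1 N, P n ω = ∑ i : ι, P ↑i ω :=
      (Finset.sum_coe_sort (Finset.Icc 1 N) (fun n => P n ω)).symm
    rw [hd]
    have he : ∑ i : ι, P ↑i ω = ∑ i : ι, (Qbar i : Ω → ℝ) ω :=
      Finset.sum_congr rfl fun i _ => ha i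
    rw [he, ← hb, hQbarK.2.2.1, hc]
  have hPint : ∀ n ∈ Finset.Icc 1 N, ∫ ω, P n ω ∂ℙ = p n := by
    intro n hn
    have h2 : ∫ ω, P n ω ∂ℙ = ∫ ω, (Qbar ⟨n, hn⟩ : Ω → ℝ) ω ∂ℙ :=
      integral_congr_ae (hPeq ⟨n, hn⟩)
    rw [h2, ← hinner (Qbar ⟨n, hn⟩)]
    exact hQbarK.2.2.2 ⟨n, hn⟩
  have hPae : (fun ω => ∑ n ∈ Finset.Icc 1 N, G n ω * P n ω) =ᵐ[ℙ]
      (fun ω => ∑ i : ι, G ↑i ω * clip ((Qbar i : Ω → ℝ) ω)) := by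
    have h2 : ∀ᵐ ω ∂ℙ, ∀ i : ι, P ↑i ω = (Qbar i : Ω → ℝ) ω := ae_all_iff.mpr hPeq
    filter_upwards [h2, hXcongr Qbar hQbarK] with ω ha hb
    calc ∑ n ∈ Finset.Icc 1 N, G n ω * P n ω = ∑ i : ι, G ↑i ω * P ↑i ω :=
          (Finset.sum_coe_sort (Finset.Icc 1 N) (fun n => G n ω * P n ω)).symm
    _ = ∑ i : ι, G ↑i ω * (Qbar i : Ω → ℝ) ω := Finset.sum_congr rfl fun i _ => by rw [ha i]
    _ = ∑ i : ι, G ↑i ω * clip ((Qbar i : Ω → ℝ) ω) := hb.symm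
  have hmemP : MemLp (fun ω => ∑ n ∈ Finset.Icc 1 N, G n ω * P n ω) 2 ℙ :=
    (hXmem Qbar).ae_eq hPae.symm
  -- the key inequality: the minimizer value is a lower bound for all feasible values
  have hkey : ∀ (P' : ℕ → Ω → ℝ), (∀ n ∈ Finset.Icc 1 N, Measurable[mF] (P' n)) →
      (∀ᵐ ω ∂ℙ, ∀ n ∈ Finset.Icc 1 N, 0 ≤ P' n ω) →
      (∀ᵐ ω ∂ℙ, ∑ n ∈ Finset.Icc 1 N, P' n ω = 1) →
      (∀ n ∈ Finset.Icc 1 N, ∫ ω, P' n ω ∂ℙ = p n) →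
      ∀ (hmem' : MemLp (fun ω => ∑ n ∈ Finset.Icc 1 N, G n ω * P' n ω) 2 ℙ),
        J Qbar ≤ F (MemLp.toLp _ hmem') := by
    intro P' h1 h2 h3 h4 hmem'
    have h01 : ∀ᵐ ω ∂ℙ, ∀ n ∈ Finset.Icc 1 N, 0 ≤ P' n ω ∧ P' n ω ≤ 1 := by
      filter_upwards [h2, h3] with ω hpos hsum
      intro n hn
      refine ⟨hpos n hn, ?_⟩
      have hmono : P' n ω ≤ ∑ m ∈ Finset.Icc 1 N, P' m ω :=
        Finset.single_le_sum (fun m hm => hpos m hm) hn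
      rw [hsum] at hmono
      exact hmono
    have hP'mem : ∀ i : ι, MemLp (P' ↑i) 2 ℙ := by
      intro i
      refine MemLp.of_le (memLp_const (1:ℝ)) ?_ ?_
      · exact ((h1 ↑i i.2).mono hmF le_rfl).aestronglyMeasurable
      · filter_upwards [h01] with ω h
        rw [Real.norm_eq_abs, norm_one, abs_le]
        exact ⟨by linarith [(h ↑i i.2).1], (h ↑i i.2).2⟩
    set Q' : PiLp 2 (fun _ : ι => Lp ℝ 2 ℙ) := WithLp.toLp 2 (fun i => (hP'mem i).toLp (P' ↑i)) with hQ'def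
    have hQ'coe : ∀ i : ι, ⇑(Q' i) =ᵐ[ℙ] P' ↑i := fun i => MemLp.coeFn_toLp (hP'mem i)
    have hQ'K : Q' ∈ K := by
      refine ⟨fun i => ?_, fun i => ?_, ?_, fun i => ?_⟩
      · rw [mem_lpMeas_iff_aestronglyMeasurable]
        exact ⟨P' ↑i, (h1 ↑i i.2).stronglyMeasurable, hQ'coe i⟩
      · rw [← Lp.coeFn_nonneg]
        filter_upwards [hQ'coe i, h01] with ω ha hb
        simp only [Pi.zero_apply]
        rw [ha]
        exact (hb ↑i i.2).1
      · apply Lp.ext (p := (2:ℝ≥0∞)) (μ := ℙ)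
        filter_upwards [stmt8_coeFn_sum Finset.univ (fun i : ι => Q' i),
          ae_all_iff.mpr hQ'coe, h3, hC1coe] with ω ha hb hc hd
        rw [ha, hd]
        calc ∑ i : ι, (Q' i : Ω → ℝ) ω = ∑ i : ι, P' ↑i ω :=
              Finset.sum_congr rfl fun i _ => hb i
        _ = ∑ n ∈ Finset.Icc 1 N, P' n ω := Finset.sum_coe_sort (Finset.Icc 1 N) (fun n => P' n ω)
        _ = 1 := hc
      · rw [hinner, integral_congr_ae (hQ'coe i)]
        exact h4 ↑i i.2
    have hae' : (fun ω => ∑ n ∈ Finset.Icc 1 N, G n ω * P' n ω) =ᵐ[ℙ]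
        (fun ω => ∑ i : ι, G ↑i ω * clip ((Q' i : Ω → ℝ) ω)) := by
      filter_upwards [ae_all_iff.mpr hQ'coe, hXcongr Q' hQ'K] with ω ha hb
      calc ∑ n ∈ Finset.Icc 1 N, G n ω * P' n ω = ∑ i : ι, G ↑i ω * P' ↑i ω :=
            (Finset.sum_coe_sort (Finset.Icc 1 N) (fun n => G n ω * P' n ω)).symm
      _ = ∑ i : ι, G ↑i ω * (Q' i : Ω → ℝ) ω := Finset.sum_congr rfl fun i _ => by rw [ha i]
      _ = ∑ i : ι, G ↑i ω * clip ((Q' i : Ω → ℝ) ω) := hb.symm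
    have hFeq : F (MemLp.toLp _ hmem') = J Q' :=
      congrArg F (MemLp.toLp_congr hmem' (hXmem Q') hae')
    rw [hFeq]
    exact hQbarMin Q' hQ'K
  refine ⟨P, hPmeas, hPpos, hPsum, hPint, hmemP, ?_⟩
  have hval : F (MemLp.toLp _ hmemP) = J Qbar :=
    congrArg F (MemLp.toLp_congr hmemP (hXmem Qbar) hPae)
  apply le_antisymm
  · apply le_csInf
    · exact ⟨F (MemLp.toLp _ hmemP), P, hPmeas, hPpos, hPsum, hPint, hmemP, rfl⟩
    · rintro v ⟨P', h1', h2', h3', h4', hmem', rfl⟩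
      rw [hval]
      exact hkey P' h1' h2' h3' h4' hmem'
  · refine csInf_le ⟨J Qbar, ?_⟩ ⟨P, hPmeas, hPpos, hPsum, hPint, hmemP, rfl⟩
    rintro v ⟨P', h1', h2', h3', h4', hmem', rfl⟩
    exact hkey P' h1' h2' h3' h4' hmem'
end
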